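/- arXiv:2003.13771 — 11 statements merged into one kernel-verified Lean document; each statement's English description precedes it below -/
import Mathlib

section
/- For every bounded measurable f : ℝ × 𝒲 → ℝ, E[H₀(A, W) f(A, W)] = E[f(A + δ(W), W)], where H₀(a, w) = q₀(a − δ(w), w)/q₀(a, w) is the shifted-to-natural density ratio. -/
/-!
The density hypothesis identifies the law of `(A, W)` with `P_W ⊗ q₀(a, w) da`. Reweighting this
measure by `H₀` replaces its density by `q₀(a - δ w, w)`, and by translation invariance of
Lebesgue measure in `a` this is the image of the law of `(A, W)` under `(a, w) ↦ (a + δ w, w)`.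
-/

open MeasureTheory Measure Set

namespace MeasurableEquiv

variable {G 𝒲 : Type*} [AddGroup G] [MeasurableSpace G] [MeasurableAdd₂ G] [MeasurableSub₂ G]
  [MeasurableSpace 𝒲]

def shiftFst (δ : 𝒲 → G) (hδ : Measurable δ) : G × 𝒲 ≃ᵐ G × 𝒲 where
  toFun x := (x.1 + δ x.2, x.2)
  invFun x := (x.1 - δ x.2, x.2)
  left_inv x := by simp
  right_inv x := by simp
  measurable_toFun := (measurable_fst.add (hδ.comp measurable_snd)).prodMk measurable_snd
  measurable_invFun := (measurable_fst.sub (hδ.comp measurable_snd)).prodMk measurable_snd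

lemma measurePreserving_shiftFst (δ : 𝒲 → G) (hδ : Measurable δ) (μ : Measure G)
    [μ.IsAddRightInvariant] [SFinite μ] (ν : Measure 𝒲) [SFinite ν] :
    MeasurePreserving (shiftFst δ hδ) (μ.prod ν) (μ.prod ν) := by
  refine ⟨(shiftFst δ hδ).measurable, Measure.ext fun s hs => ?_⟩
  rw [map_apply (shiftFst δ hδ).measurable hs, prod_apply_symm ((shiftFst δ hδ).measurable hs),
    prod_apply_symm hs]
  exact lintegral_congr fun w => measure_preimage_add_right μ (δ w) ((·, w) ⁻¹' s)

end MeasurableEquiv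

lemma MeasureTheory.MeasurePreserving.map_withDensity {α β : Type*} [MeasurableSpace α]
    [MeasurableSpace β] {μ : Measure α} {ν : Measure β} {e : α ≃ᵐ β}
    (he : MeasurePreserving e μ ν) (q : α → ENNReal) :
    (μ.withDensity q).map e = ν.withDensity (q ∘ e.symm) := by
  ext s hs
  rw [map_apply e.measurable hs, withDensity_apply _ (e.measurable hs), withDensity_apply _ hs,
    ← he.setLIntegral_comp_preimage_emb e.measurableEmbedding]
  simp

section ConditionalDensity

variable {Ω 𝒲 : Type*} [MeasurableSpace Ω] [MeasurableSpace 𝒲] {P : Measure Ω}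
  {W : Ω → 𝒲} {A : Ω → ℝ} {q₀ : ℝ × 𝒲 → ℝ}

lemma map_prodMk_apply_eq_withDensity_apply [IsFiniteMeasure P] (hW : Measurable W)
    (hA : Measurable A) (hq₀_nonneg : ∀ x, 0 ≤ q₀ x)
    (hq₀_density : ∀ f : ℝ × 𝒲 → ℝ, Measurable f → (∃ M : ℝ, ∀ x, |f x| ≤ M) →
      ∫ ω, f (A ω, W ω) ∂P = ∫ ω, (∫ a : ℝ, f (a, W ω) * q₀ (a, W ω)) ∂P)
    {U : Set (ℝ × 𝒲)} (hU : MeasurableSet U)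
    (hq₀U : IntegrableOn q₀ U (volume.prod (P.map W))) :
    P.map (fun ω => (A ω, W ω)) U
      = (volume.prod (P.map W)).withDensity (fun x => ENNReal.ofReal (q₀ x)) U := by
  have hU_bdd : ∃ M : ℝ, ∀ x, |U.indicator (1 : ℝ × 𝒲 → ℝ) x| ≤ M :=
    ⟨1, fun x => by by_cases hx : x ∈ U <;> simp [hx]⟩
  have hq₀U_int := hq₀U.integrable_indicator hU
  have h_ind : ∀ x, U.indicator q₀ x = U.indicator 1 x * q₀ x := fun x => by
    by_cases hx : x ∈ U <;> simp [hx]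
  rw [withDensity_apply _ hU,
    ← ofReal_integral_eq_lintegral_ofReal hq₀U (ae_of_all _ hq₀_nonneg),
    ← integral_indicator hU, integral_prod_symm _ hq₀U_int,
    integral_map hW.aemeasurable hq₀U_int.integral_prod_right.aestronglyMeasurable]
  simp only [h_ind]
  rw [← hq₀_density _ (measurable_one.indicator hU) hU_bdd,
    ← integral_map (hA.prodMk hW).aemeasurable (measurable_one.indicator hU).aestronglyMeasurable,
    integral_indicator_one hU, ofReal_measureReal]

lemma map_prodMk_eq_withDensity_prod [IsFiniteMeasure P] (hW : Measurable W)
    (hA : Measurable A) (hq₀_meas : Measurable q₀) (hq₀_nonneg : ∀ x, 0 ≤ q₀ x)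
    (hq₀_density : ∀ f : ℝ × 𝒲 → ℝ, Measurable f → (∃ M : ℝ, ∀ x, |f x| ≤ M) →
      ∫ ω, f (A ω, W ω) ∂P = ∫ ω, (∫ a : ℝ, f (a, W ω) * q₀ (a, W ω)) ∂P) :
    P.map (fun ω => (A ω, W ω))
      = (volume.prod (P.map W)).withDensity (fun x => ENNReal.ofReal (q₀ x)) := by
  -- The hypothesis only speaks of Bochner integrals, so the two measures are compared on sets
  -- where `q₀` is bounded and the product measure finite.
  let s : ℕ → Set (ℝ × 𝒲) := fun n => {x | q₀ x ≤ n} ∩ Icc (-n : ℝ) n ×ˢ univ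
  have hs_meas (n : ℕ) : MeasurableSet (s n) :=
    (measurableSet_le hq₀_meas measurable_const).inter (measurableSet_Icc.prod MeasurableSet.univ)
  have hs_cover : ⋃ n, s n = univ := by
    refine eq_univ_of_forall fun x => mem_iUnion.2 ?_
    obtain ⟨n, hn⟩ := exists_nat_ge (max (q₀ x) |x.1|)
    exact ⟨n, (le_max_left _ _).trans hn, abs_le.1 ((le_max_right _ _).trans hn), trivial⟩
  have hq₀_int (n : ℕ) : IntegrableOn q₀ (s n) (volume.prod (P.map W)) := by
    refine Measure.integrableOn_of_bounded (M := n) ?_ hq₀_meas.aestronglyMeasurable ?_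
    · refine ((measure_mono inter_subset_right).trans_lt ?_).ne
      rw [prod_prod]
      exact ENNReal.mul_lt_top measure_Icc_lt_top (measure_lt_top _ _)
    · filter_upwards [ae_restrict_mem (hs_meas n)] with x hx
      rw [Real.norm_of_nonneg (hq₀_nonneg x)]
      exact hx.1
  refine ext_of_iUnion_eq_univ hs_cover fun n => Measure.ext fun U hU => ?_
  rw [restrict_apply hU, restrict_apply hU]
  exact map_prodMk_apply_eq_withDensity_apply hW hA hq₀_nonneg hq₀_density (hU.inter (hs_meas n))
    ((hq₀_int n).mono_set inter_subset_right)

end ConditionalDensity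

lemma withDensity_ratio_eq_map_shiftFst {G 𝒲 : Type*} [AddGroup G] [MeasurableSpace G]
    [MeasurableAdd₂ G] [MeasurableSub₂ G] [MeasurableSpace 𝒲] (μ : Measure G)
    [μ.IsAddRightInvariant] [SFinite μ] (ν : Measure 𝒲) [SFinite ν]
    {δ : 𝒲 → G} (hδ : Measurable δ) {q : G × 𝒲 → ℝ} (hq_meas : Measurable q)
    (hq_pos : ∀ x, 0 < q x) :
    ((μ.prod ν).withDensity fun x => ENNReal.ofReal (q x)).withDensity
        (fun x => ENNReal.ofReal (q (x.1 - δ x.2, x.2) / q x))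
      = ((μ.prod ν).withDensity fun x => ENNReal.ofReal (q x)).map
          (MeasurableEquiv.shiftFst δ hδ) := by
  have h_ratio : Measurable fun x : G × 𝒲 => ENNReal.ofReal (q (x.1 - δ x.2, x.2) / q x) :=
    ((hq_meas.comp (MeasurableEquiv.shiftFst δ hδ).symm.measurable).div hq_meas).ennreal_ofReal
  rw [← withDensity_mul _ hq_meas.ennreal_ofReal h_ratio,
    (MeasurableEquiv.measurePreserving_shiftFst δ hδ μ ν).map_withDensity]
  congr 1
  funext x
  rw [Pi.mul_apply, ← ENNReal.ofReal_mul (hq_pos x).le, mul_div_cancel₀ _ (hq_pos x).ne']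
  rfl

theorem density_ratio_reweighting_general
    {Ω 𝒲 : Type*} [MeasurableSpace Ω] [MeasurableSpace 𝒲]
    (P : Measure Ω) [IsProbabilityMeasure P]
    (W : Ω → 𝒲) (hW : Measurable W)
    (A : Ω → ℝ) (hA : Measurable A)
    (q₀ : ℝ × 𝒲 → ℝ) (hq₀_meas : Measurable q₀)
    (hq₀_density : ∀ f : ℝ × 𝒲 → ℝ, Measurable f → (∃ M : ℝ, ∀ x, |f x| ≤ M) →
      ∫ ω, f (A ω, W ω) ∂P = ∫ ω, (∫ a : ℝ, f (a, W ω) * q₀ (a, W ω)) ∂P)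
    (δ : 𝒲 → ℝ) (hδ : Measurable δ)
    (hq₀_pos : ∀ x, 0 < q₀ x)
    (H₀ : ℝ × 𝒲 → ℝ)
    (hH₀ : ∀ a w, H₀ (a, w) = q₀ (a - δ w, w) / q₀ (a, w))
    (f : ℝ × 𝒲 → ℝ) (hf_meas : Measurable f) :
    ∫ ω, H₀ (A ω, W ω) * f (A ω, W ω) ∂P
      = ∫ ω, f (A ω + δ (W ω), W ω) ∂P := by
  have hT : Measurable fun ω => (A ω, W ω) := hA.prodMk hW
  have hH₀_eq : H₀ = fun x => q₀ (x.1 - δ x.2, x.2) / q₀ x := funext fun x => hH₀ x.1 x.2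
  have hH₀_meas : Measurable H₀ :=
    hH₀_eq ▸ (hq₀_meas.comp (MeasurableEquiv.shiftFst δ hδ).symm.measurable).div hq₀_meas
  have hH₀_nonneg (x) : 0 ≤ H₀ x := hH₀_eq ▸ div_nonneg (hq₀_pos _).le (hq₀_pos x).le
  have h_law : (P.map fun ω => (A ω, W ω)).withDensity (fun x => ENNReal.ofReal (H₀ x))
      = (P.map fun ω => (A ω, W ω)).map (MeasurableEquiv.shiftFst δ hδ) := by
    rw [map_prodMk_eq_withDensity_prod hW hA hq₀_meas (fun x => (hq₀_pos x).le) hq₀_density,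
      hH₀_eq]
    exact withDensity_ratio_eq_map_shiftFst volume _ hδ hq₀_meas hq₀_pos
  calc ∫ ω, H₀ (A ω, W ω) * f (A ω, W ω) ∂P
      = ∫ x, (ENNReal.ofReal (H₀ x)).toReal • f x ∂(P.map fun ω => (A ω, W ω)) := by
        simp only [ENNReal.toReal_ofReal (hH₀_nonneg _), smul_eq_mul]
        exact (integral_map (f := fun x => H₀ x * f x) hT.aemeasurable
          (hH₀_meas.mul hf_meas).aestronglyMeasurable).symm
    _ = ∫ x, f x ∂((P.map fun ω => (A ω, W ω)).map (MeasurableEquiv.shiftFst δ hδ)) := by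
        rw [← h_law, integral_withDensity_eq_integral_toReal_smul hH₀_meas.ennreal_ofReal
          (ae_of_all _ fun _ => ENNReal.ofReal_lt_top)]
    _ = ∫ ω, f (A ω + δ (W ω), W ω) ∂P := by
        rw [integral_map_equiv]
        exact integral_map (f := fun x => f (MeasurableEquiv.shiftFst δ hδ x)) hT.aemeasurable
          (hf_meas.comp (MeasurableEquiv.shiftFst δ hδ).measurable).aestronglyMeasurable

/-- Reweighting identity: `E[H₀(A,W) f(A,W)] = E[f(A + δ(W), W)]` where
`H₀(a,w) = q₀(a - δ(w), w) / q₀(a, w)` is the shifted-to-natural density ratio. -/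
theorem density_ratio_reweighting
    {Ω 𝒲 : Type*} [MeasurableSpace Ω] [MeasurableSpace 𝒲]
    (P : Measure Ω) [IsProbabilityMeasure P]
    (W : Ω → 𝒲) (hW : Measurable W)
    (A : Ω → ℝ) (hA : Measurable A)
    (q₀ : ℝ × 𝒲 → ℝ) (hq₀_meas : Measurable q₀)
    (hq₀_nonneg : ∀ x, 0 ≤ q₀ x)
    (hq₀_density : ∀ f : ℝ × 𝒲 → ℝ, Measurable f → (∃ M : ℝ, ∀ x, |f x| ≤ M) →
      ∫ ω, f (A ω, W ω) ∂P = ∫ ω, (∫ a : ℝ, f (a, W ω) * q₀ (a, W ω)) ∂P)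
    (δ : 𝒲 → ℝ) (hδ : Measurable δ)
    (hq₀_pos : ∀ x, 0 < q₀ x)
    (H₀ : ℝ × 𝒲 → ℝ)
    (hH₀ : ∀ a w, H₀ (a, w) = q₀ (a - δ w, w) / q₀ (a, w))
    (f : ℝ × 𝒲 → ℝ) (hf_meas : Measurable f) (hf_bd : ∃ M : ℝ, ∀ x, |f x| ≤ M) :
    ∫ ω, H₀ (A ω, W ω) * f (A ω, W ω) ∂P
      = ∫ ω, f (A ω + δ (W ω), W ω) ∂P :=
  density_ratio_reweighting_general P W hW A hA q₀ hq₀_meas hq₀_density δ hδ hq₀_pos H₀ hH₀ f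
    hf_meas
end

section
/- The full-data efficient influence function has mean zero at the truth: E[H₀(A, W)(Y − Q̄₀(A, W)) + Q̄₀(A + δ(W), W) − ψ₀] = 0. -/
/-!
Conditioning on `(A, W)` and pulling out the `σ(A, W)`-measurable weight `H₀(A, W)` turns
`E[H₀(A, W)(Y − Q̄₀(A, W))]` into `E[H₀(A, W)(E[Y ∣ A, W] − Q̄₀(A, W))] = 0`; the remaining
term `Q̄₀(A + δ(W), W) − ψ₀` has mean zero by the definition of `ψ₀`.
-/

open MeasureTheory

section ConditionalResidual

variable {Ω : Type*} {m m₀ : MeasurableSpace Ω} {μ : Measure Ω} {f g h : Ω → ℝ}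

theorem condExp_mul_ae_eq_mul_of_condExp_ae_eq (hg : AEStronglyMeasurable[m] g μ)
    (hf : Integrable f μ) (hgf : Integrable (g * f) μ) (hh : μ[f | m] =ᵐ[μ] h) :
    μ[g * f | m] =ᵐ[μ] g * h :=
  (condExp_mul_of_aestronglyMeasurable_left hg hgf hf).trans (hh.mono fun _ hω => by
    simp only [Pi.mul_apply, hω])

theorem integrable_mul_sub_of_condExp_ae_eq (hg : AEStronglyMeasurable[m] g μ)
    (hf : Integrable f μ) (hgf : Integrable (g * f) μ) (hh : μ[f | m] =ᵐ[μ] h) :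
    Integrable (fun ω => g ω * (f ω - h ω)) μ := by
  have hgh : Integrable (g * h) μ :=
    integrable_condExp.congr (condExp_mul_ae_eq_mul_of_condExp_ae_eq hg hf hgf hh)
  refine (hgf.sub hgh).congr (.of_forall fun ω => ?_)
  simp only [Pi.sub_apply, Pi.mul_apply, mul_sub]

theorem integral_mul_sub_eq_zero_of_condExp_ae_eq (hm : m ≤ m₀) [SigmaFinite (μ.trim hm)]
    (hg : AEStronglyMeasurable[m] g μ) (hf : Integrable f μ) (hgf : Integrable (g * f) μ)
    (hh : μ[f | m] =ᵐ[μ] h) :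
    ∫ ω, g ω * (f ω - h ω) ∂μ = 0 := by
  have hpull := condExp_mul_ae_eq_mul_of_condExp_ae_eq hg hf hgf hh
  calc ∫ ω, g ω * (f ω - h ω) ∂μ = ∫ ω, (g * f) ω ∂μ - ∫ ω, (g * h) ω ∂μ := by
        simp only [mul_sub]; exact integral_sub hgf (integrable_condExp.congr hpull)
    _ = 0 := by rw [← integral_condExp hm, integral_congr_ae hpull, sub_self]

end ConditionalResidual

theorem full_data_eif_mean_zero_general
    {Ω 𝒲 : Type*} [MeasurableSpace Ω] [MeasurableSpace 𝒲]
    (P : Measure Ω) [IsProbabilityMeasure P]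
    (W : Ω → 𝒲) (hW : Measurable W)
    (A : Ω → ℝ) (hA : Measurable A)
    (Y : Ω → ℝ) (hY_int : Integrable Y P)
    (q₀ : ℝ × 𝒲 → ℝ) (hq₀_meas : Measurable q₀)
    (Qbar₀ : ℝ × 𝒲 → ℝ) (hQbar₀_meas : Measurable Qbar₀)
    (hQbar₀_bd : ∃ M : ℝ, ∀ x, |Qbar₀ x| ≤ M)
    (hQbar₀_condexp :
      P[Y | MeasurableSpace.comap (fun ω => (A ω, W ω)) inferInstance]
        =ᵐ[P] fun ω => Qbar₀ (A ω, W ω))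
    (δ : 𝒲 → ℝ) (hδ : Measurable δ)
    (ψ₀ : ℝ) (hψ₀ : ψ₀ = ∫ ω, Qbar₀ (A ω + δ (W ω), W ω) ∂P)
    (H₀ : ℝ × 𝒲 → ℝ)
    (hH₀ : ∀ a w, H₀ (a, w) = q₀ (a - δ w, w) / q₀ (a, w))
    (hH₀Y_int : Integrable (fun ω => H₀ (A ω, W ω) * Y ω) P) :
    ∫ ω, (H₀ (A ω, W ω) * (Y ω - Qbar₀ (A ω, W ω))
        + Qbar₀ (A ω + δ (W ω), W ω) - ψ₀) ∂P = 0 := by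
  have hH₀_meas : Measurable H₀ := by
    rw [show H₀ = fun p => q₀ (p.1 - δ p.2, p.2) / q₀ p from funext fun p => hH₀ p.1 p.2]
    fun_prop
  have hweight : AEStronglyMeasurable[MeasurableSpace.comap (fun ω => (A ω, W ω)) inferInstance]
      (fun ω => H₀ (A ω, W ω)) P :=
    (hH₀_meas.comp (Measurable.of_comap_le le_rfl)).aestronglyMeasurable
  have hm := (hA.prodMk hW).comap_le
  obtain ⟨M, hM⟩ := hQbar₀_bd
  have hshift_int : Integrable (fun ω => Qbar₀ (A ω + δ (W ω), W ω)) P :=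
    .of_bound (by fun_prop : Measurable _).aestronglyMeasurable M (.of_forall fun ω => hM _)
  have hcentered : Integrable (fun ω => Qbar₀ (A ω + δ (W ω), W ω) - ψ₀) P :=
    hshift_int.sub (integrable_const ψ₀)
  calc _ = ∫ ω, H₀ (A ω, W ω) * (Y ω - Qbar₀ (A ω, W ω)) ∂P
          + (∫ ω, Qbar₀ (A ω + δ (W ω), W ω) ∂P - ψ₀) := by
        simp_rw [add_sub_assoc]
        rw [integral_add (integrable_mul_sub_of_condExp_ae_eq hweight hY_int hH₀Y_int
          hQbar₀_condexp) hcentered,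
          integral_sub hshift_int (integrable_const ψ₀), integral_const]
        simp
    _ = 0 := by
        rw [integral_mul_sub_eq_zero_of_condExp_ae_eq hm hweight hY_int hH₀Y_int hQbar₀_condexp,
          hψ₀]
        ring

/-- The full-data efficient influence function has mean zero at the truth:
`E[H₀(A,W)(Y − Q̄₀(A,W)) + Q̄₀(A + δ(W), W) − ψ₀] = 0`. -/
theorem full_data_eif_mean_zero
    {Ω 𝒲 : Type*} [MeasurableSpace Ω] [MeasurableSpace 𝒲]
    (P : Measure Ω) [IsProbabilityMeasure P]
    (W : Ω → 𝒲) (hW : Measurable W)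
    (A : Ω → ℝ) (hA : Measurable A)
    (Y : Ω → ℝ) (hY : Measurable Y) (hY_int : Integrable Y P)
    (q₀ : ℝ × 𝒲 → ℝ) (hq₀_meas : Measurable q₀)
    (hq₀_nonneg : ∀ x, 0 ≤ q₀ x)
    (hq₀_density : ∀ f : ℝ × 𝒲 → ℝ, Measurable f → (∃ M : ℝ, ∀ x, |f x| ≤ M) →
      ∫ ω, f (A ω, W ω) ∂P = ∫ ω, (∫ a : ℝ, f (a, W ω) * q₀ (a, W ω)) ∂P)
    (Qbar₀ : ℝ × 𝒲 → ℝ) (hQbar₀_meas : Measurable Qbar₀)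
    (hQbar₀_bd : ∃ M : ℝ, ∀ x, |Qbar₀ x| ≤ M)
    (hQbar₀_condexp :
      P[Y | MeasurableSpace.comap (fun ω => (A ω, W ω)) inferInstance]
        =ᵐ[P] fun ω => Qbar₀ (A ω, W ω))
    (δ : 𝒲 → ℝ) (hδ : Measurable δ)
    (ψ₀ : ℝ) (hψ₀ : ψ₀ = ∫ ω, Qbar₀ (A ω + δ (W ω), W ω) ∂P)
    (hq₀_pos : ∀ x, 0 < q₀ x)
    (H₀ : ℝ × 𝒲 → ℝ)
    (hH₀ : ∀ a w, H₀ (a, w) = q₀ (a - δ w, w) / q₀ (a, w))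
    (hH₀Y_int : Integrable (fun ω => H₀ (A ω, W ω) * Y ω) P) :
    ∫ ω, (H₀ (A ω, W ω) * (Y ω - Qbar₀ (A ω, W ω))
        + Qbar₀ (A ω + δ (W ω), W ω) - ψ₀) ∂P = 0 :=
  full_data_eif_mean_zero_general P W hW A hA Y hY_int q₀ hq₀_meas Qbar₀ hQbar₀_meas hQbar₀_bd
    hQbar₀_condexp δ hδ ψ₀ hψ₀ H₀ hH₀ hH₀Y_int
end

section
/- Robustness of the full-data efficient influence function to misspecification of the exposure density: for every measurable H' : ℝ × 𝒲 → ℝ such that H'(A, W)·Y and H'(A, W) are integrable, E[H'(A, W)(Y − Q̄₀(A, W)) + Q̄₀(A + δ(W), W)] = ψ₀. That is, when the outcome regression Q̄₀ is correct, the mean of the full-data efficient influence function recovers ψ₀ for an arbitrary (possibly incorrect) density-ratio weight H'. -/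
/-!
Since `H'(A, W)` is `σ(A, W)`-measurable, it can be pulled out of the conditional expectation
given `(A, W)`, so `E[H'(A, W) Y] = E[H'(A, W) Q̄₀(A, W)]`: the weighted residual has mean zero
whatever the weight, and only the plug-in term `E[Q̄₀(A + δ(W), W)] = ψ₀` survives.
-/

open MeasureTheory

theorem integral_mul_sub_eq_zero_of_condExp_ae_eq_s3 {Ω : Type*} {m m₀ : MeasurableSpace Ω}
    {μ : Measure Ω} (hm : m ≤ m₀) [SigmaFinite (μ.trim hm)] {g Y Z : Ω → ℝ}
    (hg : StronglyMeasurable[m] g) (hY : Integrable Y μ)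
    (hgY : Integrable (fun ω => g ω * Y ω) μ)
    (hgZ : Integrable (fun ω => g ω * Z ω) μ) (hZ : μ[Y | m] =ᵐ[μ] Z) :
    ∫ ω, g ω * (Y ω - Z ω) ∂μ = 0 := by
  have pull_out : μ[g * Y | m] =ᵐ[μ] g * Z := by
    filter_upwards [condExp_mul_of_stronglyMeasurable_left hg hgY hY, hZ] with ω h₁ h₂
    simp only [h₁, Pi.mul_apply, h₂]
  have h_weighted : ∫ ω, g ω * Y ω ∂μ = ∫ ω, g ω * Z ω ∂μ := calc
    ∫ ω, (g * Y) ω ∂μ = ∫ ω, (μ[g * Y | m]) ω ∂μ := (integral_condExp hm).symm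
    _ = ∫ ω, (g * Z) ω ∂μ := integral_congr_ae pull_out
  simp only [mul_sub]
  rw [integral_sub hgY hgZ, h_weighted, sub_self]

theorem full_data_eif_robust_outcome_correct_general
    {Ω 𝒲 : Type*} [MeasurableSpace Ω] [MeasurableSpace 𝒲]
    (P : Measure Ω) [IsProbabilityMeasure P]
    (W : Ω → 𝒲) (hW : Measurable W)
    (A : Ω → ℝ) (hA : Measurable A)
    (Y : Ω → ℝ) (hY_int : Integrable Y P)
    (Qbar₀ : ℝ × 𝒲 → ℝ) (hQbar₀_meas : Measurable Qbar₀)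
    (hQbar₀_bd : ∃ M : ℝ, ∀ x, |Qbar₀ x| ≤ M)
    (hQbar₀_condexp :
      P[Y | MeasurableSpace.comap (fun ω => (A ω, W ω)) inferInstance]
        =ᵐ[P] fun ω => Qbar₀ (A ω, W ω))
    (δ : 𝒲 → ℝ) (hδ : Measurable δ)
    (ψ₀ : ℝ) (hψ₀ : ψ₀ = ∫ ω, Qbar₀ (A ω + δ (W ω), W ω) ∂P)
    (H' : ℝ × 𝒲 → ℝ) (hH'_meas : Measurable H')
    (hH'Y_int : Integrable (fun ω => H' (A ω, W ω) * Y ω) P)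
    (hH'_int : Integrable (fun ω => H' (A ω, W ω)) P) :
    ∫ ω, (H' (A ω, W ω) * (Y ω - Qbar₀ (A ω, W ω))
        + Qbar₀ (A ω + δ (W ω), W ω)) ∂P = ψ₀ := by
  obtain ⟨M, hM⟩ := hQbar₀_bd
  have hM_ae (f : Ω → ℝ × 𝒲) : ∀ᵐ ω ∂P, ‖Qbar₀ (f ω)‖ ≤ M := ae_of_all _ fun ω => hM (f ω)
  have hAW : Measurable fun ω => (A ω, W ω) := hA.prodMk hW
  have hH'Q_int : Integrable (fun ω => H' (A ω, W ω) * Qbar₀ (A ω, W ω)) P :=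
    hH'_int.mul_bdd (hQbar₀_meas.comp hAW).aestronglyMeasurable (hM_ae _)
  have hQ_shift_int : Integrable (fun ω => Qbar₀ (A ω + δ (W ω), W ω)) P :=
    .of_bound (hQbar₀_meas.comp ((hA.add (hδ.comp hW)).prodMk hW)).aestronglyMeasurable M
      (hM_ae _)
  have h_residual : ∫ ω, H' (A ω, W ω) * (Y ω - Qbar₀ (A ω, W ω)) ∂P = 0 :=
    integral_mul_sub_eq_zero_of_condExp_ae_eq_s3 hAW.comap_le
      (hH'_meas.comp (Measurable.of_comap_le le_rfl)).stronglyMeasurable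
      hY_int hH'Y_int hH'Q_int hQbar₀_condexp
  have h_residual_int : Integrable (fun ω => H' (A ω, W ω) * (Y ω - Qbar₀ (A ω, W ω))) P := by
    simpa only [mul_sub, Pi.sub_def] using hH'Y_int.sub hH'Q_int
  rw [integral_add h_residual_int hQ_shift_int, h_residual, zero_add, hψ₀]

/-- Robustness of the full-data EIF to misspecification of the exposure density:
when the outcome regression `Q̄₀` is correct, the mean of the full-data EIF recovers
`ψ₀` for an arbitrary weight `H'`. -/
theorem full_data_eif_robust_outcome_correct
    {Ω 𝒲 : Type*} [MeasurableSpace Ω] [MeasurableSpace 𝒲]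
    (P : Measure Ω) [IsProbabilityMeasure P]
    (W : Ω → 𝒲) (hW : Measurable W)
    (A : Ω → ℝ) (hA : Measurable A)
    (Y : Ω → ℝ) (hY : Measurable Y) (hY_int : Integrable Y P)
    (Qbar₀ : ℝ × 𝒲 → ℝ) (hQbar₀_meas : Measurable Qbar₀)
    (hQbar₀_bd : ∃ M : ℝ, ∀ x, |Qbar₀ x| ≤ M)
    (hQbar₀_condexp :
      P[Y | MeasurableSpace.comap (fun ω => (A ω, W ω)) inferInstance]
        =ᵐ[P] fun ω => Qbar₀ (A ω, W ω))
    (δ : 𝒲 → ℝ) (hδ : Measurable δ)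
    (ψ₀ : ℝ) (hψ₀ : ψ₀ = ∫ ω, Qbar₀ (A ω + δ (W ω), W ω) ∂P)
    (H' : ℝ × 𝒲 → ℝ) (hH'_meas : Measurable H')
    (hH'Y_int : Integrable (fun ω => H' (A ω, W ω) * Y ω) P)
    (hH'_int : Integrable (fun ω => H' (A ω, W ω)) P) :
    ∫ ω, (H' (A ω, W ω) * (Y ω - Qbar₀ (A ω, W ω))
        + Qbar₀ (A ω + δ (W ω), W ω)) ∂P = ψ₀ :=
  full_data_eif_robust_outcome_correct_general P W hW A hA Y hY_int Qbar₀ hQbar₀_meas hQbar₀_bd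
    hQbar₀_condexp δ hδ ψ₀ hψ₀ H' hH'_meas hH'Y_int hH'_int
end

section
/- Robustness of the full-data efficient influence function to misspecification of the outcome regression: for every bounded measurable Q̄ : ℝ × 𝒲 → ℝ, E[H₀(A, W)(Y − Q̄(A, W)) + Q̄(A + δ(W), W)] = ψ₀. That is, when the density ratio H₀ is correct, the mean of the full-data efficient influence function recovers ψ₀ for an arbitrary (possibly incorrect) outcome regression Q̄. -/
/-!
Under the density hypothesis the law of `(A, W)` is `P_W ⊗ q₀(a, w) da`. With respect to that
measure, weighting by `H₀` is the same as shifting `a` by `δ(w)`: by translation invariance of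
Lebesgue measure, `∫ q₀(a - δ, w) g(a, w) da = ∫ q₀(a, w) g(a + δ, w) da`, so
`E[H₀(A, W) g(A, W)] = E[g(A + δ(W), W)]` for every measurable `g`. Conditioning on `(A, W)` turns
`E[H₀ Y]` into `E[H₀ Q̄₀] = ψ₀`, while the two `Q̄` terms cancel by the same shift identity.
-/

open MeasureTheory Set
open scoped ENNReal

theorem integral_mul_eq_integral_mul_condExp {Ω : Type*} {m m₀ : MeasurableSpace Ω}
    {μ : Measure Ω} [IsFiniteMeasure μ] (hm : m ≤ m₀) {g Y : Ω → ℝ}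
    (hg : StronglyMeasurable[m] g) (hgY : Integrable (g * Y) μ) (hY : Integrable Y μ) :
    ∫ ω, g ω * Y ω ∂μ = ∫ ω, g ω * μ[Y | m] ω ∂μ :=
  calc ∫ ω, g ω * Y ω ∂μ = ∫ ω, μ[g * Y | m] ω ∂μ := (integral_condExp hm).symm
    _ = ∫ ω, g ω * μ[Y | m] ω ∂μ :=
      integral_congr_ae (condExp_mul_of_stronglyMeasurable_left hg hgY hY)

namespace CondDensity

variable {𝒲 : Type*}

noncomputable def shiftDensityRatio (q : ℝ × 𝒲 → ℝ) (δ : 𝒲 → ℝ) (p : ℝ × 𝒲) : ℝ :=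
  q (p.1 - δ p.2, p.2) / q p

theorem shiftDensityRatio_nonneg {q : ℝ × 𝒲 → ℝ} (hq_pos : ∀ p, 0 < q p) (δ : 𝒲 → ℝ)
    (p : ℝ × 𝒲) : 0 ≤ shiftDensityRatio q δ p :=
  div_nonneg (hq_pos _).le (hq_pos p).le

theorem lintegral_shiftDensityRatio_mul_eq {q : ℝ × 𝒲 → ℝ} (hq_pos : ∀ p, 0 < q p)
    (δ : 𝒲 → ℝ) (g : ℝ × 𝒲 → ℝ≥0∞) (w : 𝒲) :
    ∫⁻ a, ENNReal.ofReal (shiftDensityRatio q δ (a, w)) * g (a, w) * ENNReal.ofReal (q (a, w))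
      = ∫⁻ a, g (a + δ w, w) * ENNReal.ofReal (q (a, w)) := by
  have hratio : ∀ a, ENNReal.ofReal (shiftDensityRatio q δ (a, w)) * g (a, w)
      * ENNReal.ofReal (q (a, w)) = g (a - δ w + δ w, w) * ENNReal.ofReal (q (a - δ w, w)) := by
    intro a
    rw [sub_add_cancel, mul_right_comm, ← ENNReal.ofReal_mul (shiftDensityRatio_nonneg hq_pos δ _),
      shiftDensityRatio, div_mul_cancel₀ _ (hq_pos _).ne', mul_comm]
  simp_rw [hratio]
  exact lintegral_sub_right_eq_self (fun a => g (a + δ w, w) * ENNReal.ofReal (q (a, w))) (δ w)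

variable [MeasurableSpace 𝒲]

theorem measurable_shiftDensityRatio {q : ℝ × 𝒲 → ℝ} (hq : Measurable q) {δ : 𝒲 → ℝ}
    (hδ : Measurable δ) : Measurable (shiftDensityRatio q δ) := by
  unfold shiftDensityRatio
  fun_prop

noncomputable def condDensityMeasure (μ : Measure 𝒲) (q : ℝ × 𝒲 → ℝ) : Measure (ℝ × 𝒲) :=
  ((volume : Measure ℝ).prod μ).withDensity fun p => ENNReal.ofReal (q p)

section
variable (μ : Measure 𝒲) [SFinite μ] {q : ℝ × 𝒲 → ℝ}

theorem lintegral_condDensityMeasure (hq : Measurable q) {g : ℝ × 𝒲 → ℝ≥0∞}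
    (hg : Measurable g) :
    ∫⁻ p, g p ∂condDensityMeasure μ q
      = ∫⁻ w, (∫⁻ a, g (a, w) * ENNReal.ofReal (q (a, w))) ∂μ := by
  rw [condDensityMeasure, lintegral_withDensity_eq_lintegral_mul _ (by fun_prop) hg,
    lintegral_prod_symm _ (by fun_prop)]
  simp only [Pi.mul_apply, mul_comm]

theorem condDensityMeasure_apply (hq : Measurable q) {T : Set (ℝ × 𝒲)} (hT : MeasurableSet T) :
    condDensityMeasure μ q T
      = ∫⁻ w, (∫⁻ a, T.indicator 1 (a, w) * ENNReal.ofReal (q (a, w))) ∂μ := by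
  rw [← lintegral_condDensityMeasure μ hq (measurable_one.indicator hT),
    lintegral_indicator_one hT]

variable {δ : 𝒲 → ℝ}

theorem withDensity_shiftDensityRatio (hq : Measurable q) (hq_pos : ∀ p, 0 < q p)
    (hδ : Measurable δ) :
    (condDensityMeasure μ q).withDensity (fun p => ENNReal.ofReal (shiftDensityRatio q δ p))
      = (condDensityMeasure μ q).map (fun p => (p.1 + δ p.2, p.2)) := by
  have hratio := measurable_shiftDensityRatio hq hδ
  refine Measure.ext_of_lintegral _ fun g hg => ?_
  rw [lintegral_withDensity_eq_lintegral_mul _ (by fun_prop) hg, lintegral_map hg (by fun_prop),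
    lintegral_condDensityMeasure μ hq (by fun_prop),
    lintegral_condDensityMeasure μ hq (by fun_prop)]
  simp only [Pi.mul_apply, lintegral_shiftDensityRatio_mul_eq hq_pos]

theorem integral_shiftDensityRatio_mul (hq : Measurable q) (hq_pos : ∀ p, 0 < q p)
    (hδ : Measurable δ) {g : ℝ × 𝒲 → ℝ} (hg : Measurable g) :
    ∫ p, shiftDensityRatio q δ p * g p ∂condDensityMeasure μ q
      = ∫ p, g (p.1 + δ p.2, p.2) ∂condDensityMeasure μ q := by
  have hratio := measurable_shiftDensityRatio hq hδ
  rw [← integral_map (by fun_prop) hg.aestronglyMeasurable,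
    ← withDensity_shiftDensityRatio μ hq hq_pos hδ,
    integral_withDensity_eq_integral_toReal_smul (by fun_prop)
      (.of_forall fun _ => ENNReal.ofReal_lt_top)]
  simp only [ENNReal.toReal_ofReal (shiftDensityRatio_nonneg hq_pos δ _), smul_eq_mul]

theorem integrable_shiftDensityRatio [IsFiniteMeasure (condDensityMeasure μ q)]
    (hq : Measurable q) (hq_pos : ∀ p, 0 < q p) (hδ : Measurable δ) :
    Integrable (shiftDensityRatio q δ) (condDensityMeasure μ q) := by
  have hratio := measurable_shiftDensityRatio hq hδ
  refine ⟨hratio.aestronglyMeasurable, ?_⟩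
  rw [hasFiniteIntegral_iff_ofReal (.of_forall (shiftDensityRatio_nonneg hq_pos δ)),
    ← setLIntegral_univ, ← withDensity_apply _ MeasurableSet.univ,
    withDensity_shiftDensityRatio μ hq hq_pos hδ]
  exact measure_lt_top _ _

end

noncomputable def fiberMass (q : ℝ × 𝒲 → ℝ) (w : 𝒲) : ℝ≥0∞ :=
  ∫⁻ a, ENNReal.ofReal (q (a, w))

theorem measurable_fiberMass {q : ℝ × 𝒲 → ℝ} (hq : Measurable q) : Measurable (fiberMass q) :=
  (ENNReal.measurable_ofReal.comp hq).lintegral_prod_left'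

theorem integral_indicator_mul_eq_toReal {q : ℝ × 𝒲 → ℝ} (hq : Measurable q)
    (hq_nonneg : ∀ p, 0 ≤ q p) {T : Set (ℝ × 𝒲)} (hT : MeasurableSet T) (w : 𝒲) :
    ∫ a, T.indicator 1 (a, w) * q (a, w)
      = (∫⁻ a, T.indicator 1 (a, w) * ENNReal.ofReal (q (a, w))).toReal := by
  rw [integral_eq_lintegral_of_nonneg_ae (f := fun a => T.indicator 1 (a, w) * q (a, w))
    (.of_forall fun a => mul_nonneg (indicator_nonneg (fun _ _ => zero_le_one) _) (hq_nonneg _))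
    (by fun_prop)]
  congr 1
  refine lintegral_congr fun a => ?_
  by_cases ha : (a, w) ∈ T <;> simp [ha]

section
variable {ρ : Measure (ℝ × 𝒲)} [IsFiniteMeasure ρ] {q : ℝ × 𝒲 → ℝ}

theorem ae_fiberMass_lt_top (hq : Measurable q) (hq_nonneg : ∀ p, 0 ≤ q p)
    (hρ : ∀ T, MeasurableSet T →
      ρ.real T = ∫ w, (∫ a, T.indicator 1 (a, w) * q (a, w)) ∂ρ.map Prod.snd) :
    ∀ᵐ w ∂ρ.map Prod.snd, fiberMass q w < ∞ := by
  -- Where `q(·, w)` is not integrable the Bochner integral in `hρ` is `0`, so the slab over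
  -- `N` carries no `ρ`-mass.
  set N := {w | fiberMass q w = ∞}
  have hN : MeasurableSet N := measurable_fiberMass hq (measurableSet_singleton ∞)
  have hslice : ∀ w, ∫ a, (univ ×ˢ N).indicator 1 (a, w) * q (a, w) = 0 := by
    intro w
    rw [integral_indicator_mul_eq_toReal hq hq_nonneg (MeasurableSet.univ.prod hN)]
    by_cases hw : w ∈ N
    · have hw' : fiberMass q w = ∞ := hw
      simp_all [fiberMass]
    · simp [hw]
  have hρN : ρ (univ ×ˢ N) = 0 := by
    rw [← measureReal_eq_zero_iff, hρ _ (MeasurableSet.univ.prod hN)]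
    simp [hslice]
  rw [ae_iff]
  simp only [not_lt, top_le_iff]
  rwa [Measure.map_apply measurable_snd hN, ← univ_prod]

theorem restrict_eq_condDensityMeasure_restrict (hq : Measurable q) (hq_nonneg : ∀ p, 0 ≤ q p)
    (hρ : ∀ T, MeasurableSet T →
      ρ.real T = ∫ w, (∫ a, T.indicator 1 (a, w) * q (a, w)) ∂ρ.map Prod.snd) (k : ℕ) :
    ρ.restrict (univ ×ˢ {w | fiberMass q w ≤ k})
      = (condDensityMeasure (ρ.map Prod.snd) q).restrict (univ ×ˢ {w | fiberMass q w ≤ k}) := by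
  set G := {w | fiberMass q w ≤ k}
  have hG : MeasurableSet G := measurable_fiberMass hq measurableSet_Iic
  ext T hT
  rw [Measure.restrict_apply hT, Measure.restrict_apply hT]
  set T' := T ∩ univ ×ˢ G
  have hT' : MeasurableSet T' := hT.inter (MeasurableSet.univ.prod hG)
  set ℓ := fun w => ∫⁻ a, T'.indicator 1 (a, w) * ENNReal.ofReal (q (a, w))
  have hℓ_meas : Measurable ℓ :=
    (show Measurable fun p => T'.indicator 1 p * ENNReal.ofReal (q p) by
      fun_prop (disch := exact hT')).lintegral_prod_left'
  have hℓ_le : ∀ w, ℓ w ≤ k := by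
    intro w
    by_cases hw : w ∈ G
    · refine le_trans (lintegral_mono fun a => ?_) hw
      by_cases ha : (a, w) ∈ T' <;> simp [ha]
    · simp [ℓ, T', hw]
  have hℓ_int : ∫⁻ w, ℓ w ∂ρ.map Prod.snd ≠ ∞ :=
    ne_top_of_le_ne_top (lintegral_const_lt_top (ENNReal.natCast_ne_top k)).ne
      (lintegral_mono hℓ_le)
  -- On fibres of mass at most `k` all the integrals are finite, so the real identity lifts.
  calc ρ T' = ENNReal.ofReal (ρ.real T') := (ofReal_measureReal (measure_ne_top ρ T')).symm
    _ = ENNReal.ofReal (∫ w, (ℓ w).toReal ∂ρ.map Prod.snd) := by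
      simp only [hρ T' hT', integral_indicator_mul_eq_toReal hq hq_nonneg hT', ℓ]
    _ = ∫⁻ w, ℓ w ∂ρ.map Prod.snd := by
      rw [integral_toReal hℓ_meas.aemeasurable
        (.of_forall fun w => (hℓ_le w).trans_lt (ENNReal.natCast_lt_top k)),
        ENNReal.ofReal_toReal hℓ_int]
    _ = condDensityMeasure (ρ.map Prod.snd) q T' := (condDensityMeasure_apply _ hq hT').symm

theorem eq_condDensityMeasure (hq : Measurable q) (hq_nonneg : ∀ p, 0 ≤ q p)
    (hρ : ∀ T, MeasurableSet T →
      ρ.real T = ∫ w, (∫ a, T.indicator 1 (a, w) * q (a, w)) ∂ρ.map Prod.snd) :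
    ρ = condDensityMeasure (ρ.map Prod.snd) q := by
  set ν := condDensityMeasure (ρ.map Prod.snd) q
  set G : ℕ → Set (ℝ × 𝒲) := fun k => univ ×ˢ {w | fiberMass q w ≤ k}
  have hfin : ∀ᵐ w ∂ρ.map Prod.snd, ∃ k : ℕ, fiberMass q w ≤ k := by
    filter_upwards [ae_fiberMass_lt_top hq hq_nonneg hρ] with w hw
    obtain ⟨k, hk⟩ := ENNReal.exists_nat_gt hw.ne
    exact ⟨k, hk.le⟩
  have hρG : ∀ᵐ p ∂ρ, p ∈ ⋃ k, G k := by
    filter_upwards [ae_of_ae_map measurable_snd.aemeasurable hfin] with p ⟨k, hk⟩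
    exact mem_iUnion.2 ⟨k, mem_univ _, hk⟩
  have hνG : ∀ᵐ p ∂ν, p ∈ ⋃ k, G k := by
    filter_upwards [(withDensity_absolutelyContinuous _ _).ae_le
      (Measure.quasiMeasurePreserving_snd.ae hfin)] with p ⟨k, hk⟩
    exact mem_iUnion.2 ⟨k, mem_univ _, hk⟩
  calc ρ = ρ.restrict (⋃ k, G k) := (Measure.restrict_eq_self_of_ae_mem hρG).symm
    _ = ν.restrict (⋃ k, G k) := Measure.restrict_iUnion_congr.2
      (restrict_eq_condDensityMeasure_restrict hq hq_nonneg hρ)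
    _ = ν := Measure.restrict_eq_self_of_ae_mem hνG

end

theorem map_eq_condDensityMeasure {Ω : Type*} [MeasurableSpace Ω] (P : Measure Ω)
    [IsFiniteMeasure P] {A : Ω → ℝ} {W : Ω → 𝒲} (hA : Measurable A) (hW : Measurable W)
    {q : ℝ × 𝒲 → ℝ} (hq : Measurable q) (hq_nonneg : ∀ p, 0 ≤ q p)
    (hdensity : ∀ f : ℝ × 𝒲 → ℝ, Measurable f → (∃ M : ℝ, ∀ x, |f x| ≤ M) →
      ∫ ω, f (A ω, W ω) ∂P = ∫ ω, (∫ a : ℝ, f (a, W ω) * q (a, W ω)) ∂P) :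
    P.map (fun ω => (A ω, W ω)) = condDensityMeasure (P.map W) q := by
  have hΦ : Measurable fun ω => (A ω, W ω) := hA.prodMk hW
  have hmarginal : P.map W = (P.map fun ω => (A ω, W ω)).map Prod.snd := by
    rw [Measure.map_map measurable_snd hΦ]
    rfl
  rw [hmarginal]
  refine eq_condDensityMeasure hq hq_nonneg fun T hT => ?_
  have hslice : StronglyMeasurable fun w => ∫ a, T.indicator 1 (a, w) * q (a, w) :=
    ((measurable_one.indicator hT).mul hq).stronglyMeasurable.integral_prod_left'
  rw [← hmarginal, ← integral_indicator_one hT,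
    integral_map hΦ.aemeasurable (measurable_one.indicator hT).aestronglyMeasurable,
    integral_map hW.aemeasurable hslice.aestronglyMeasurable]
  refine hdensity _ (measurable_one.indicator hT) ⟨1, fun x => ?_⟩
  by_cases hx : x ∈ T <;> simp [hx]

section
variable {Ω : Type*} [MeasurableSpace Ω] {P : Measure Ω} {A : Ω → ℝ} {W : Ω → 𝒲}
  {μ : Measure 𝒲} [SFinite μ] {q : ℝ × 𝒲 → ℝ} {δ : 𝒲 → ℝ}

theorem integral_shiftDensityRatio_mul_of_map_eq (hA : Measurable A) (hW : Measurable W)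
    (hq : Measurable q) (hq_pos : ∀ p, 0 < q p) (hδ : Measurable δ)
    (hmap : P.map (fun ω => (A ω, W ω)) = condDensityMeasure μ q)
    ⦃g : ℝ × 𝒲 → ℝ⦄ (hg : Measurable g) :
    ∫ ω, shiftDensityRatio q δ (A ω, W ω) * g (A ω, W ω) ∂P
      = ∫ ω, g (A ω + δ (W ω), W ω) ∂P := by
  have hν := integral_shiftDensityRatio_mul μ hq hq_pos hδ hg
  rwa [← hmap, integral_map (f := fun p => shiftDensityRatio q δ p * g p)
      (hA.prodMk hW).aemeasurable
      ((measurable_shiftDensityRatio hq hδ).mul hg).aestronglyMeasurable,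
    integral_map (f := fun p => g (p.1 + δ p.2, p.2)) (hA.prodMk hW).aemeasurable
      (hg.comp (by fun_prop)).aestronglyMeasurable] at hν

theorem integrable_shiftDensityRatio_of_map_eq [IsFiniteMeasure P] (hA : Measurable A)
    (hW : Measurable W) (hq : Measurable q) (hq_pos : ∀ p, 0 < q p) (hδ : Measurable δ)
    (hmap : P.map (fun ω => (A ω, W ω)) = condDensityMeasure μ q) :
    Integrable (fun ω => shiftDensityRatio q δ (A ω, W ω)) P := by
  have : IsFiniteMeasure (condDensityMeasure μ q) := hmap ▸ inferInstance
  exact (hmap ▸ integrable_shiftDensityRatio μ hq hq_pos hδ).comp_measurable (hA.prodMk hW)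

end

end CondDensity

open CondDensity

theorem full_data_eif_robust_density_correct_general
    {Ω 𝒲 : Type*} [MeasurableSpace Ω] [MeasurableSpace 𝒲]
    (P : Measure Ω) [IsProbabilityMeasure P]
    (W : Ω → 𝒲) (hW : Measurable W)
    (A : Ω → ℝ) (hA : Measurable A)
    (Y : Ω → ℝ) (hY_int : Integrable Y P)
    (q₀ : ℝ × 𝒲 → ℝ) (hq₀_meas : Measurable q₀)
    (hq₀_density : ∀ f : ℝ × 𝒲 → ℝ, Measurable f → (∃ M : ℝ, ∀ x, |f x| ≤ M) →
      ∫ ω, f (A ω, W ω) ∂P = ∫ ω, (∫ a : ℝ, f (a, W ω) * q₀ (a, W ω)) ∂P)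
    (Qbar₀ : ℝ × 𝒲 → ℝ) (hQbar₀_meas : Measurable Qbar₀)
    (hQbar₀_condexp :
      P[Y | MeasurableSpace.comap (fun ω => (A ω, W ω)) inferInstance]
        =ᵐ[P] fun ω => Qbar₀ (A ω, W ω))
    (δ : 𝒲 → ℝ) (hδ : Measurable δ)
    (ψ₀ : ℝ) (hψ₀ : ψ₀ = ∫ ω, Qbar₀ (A ω + δ (W ω), W ω) ∂P)
    (hq₀_pos : ∀ x, 0 < q₀ x)
    (H₀ : ℝ × 𝒲 → ℝ)
    (hH₀ : ∀ a w, H₀ (a, w) = q₀ (a - δ w, w) / q₀ (a, w))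
    (hH₀Y_int : Integrable (fun ω => H₀ (A ω, W ω) * Y ω) P)
    (Qbar : ℝ × 𝒲 → ℝ) (hQbar_meas : Measurable Qbar)
    (hQbar_bd : ∃ M : ℝ, ∀ x, |Qbar x| ≤ M) :
    ∫ ω, (H₀ (A ω, W ω) * (Y ω - Qbar (A ω, W ω))
        + Qbar (A ω + δ (W ω), W ω)) ∂P = ψ₀ := by
  obtain rfl : H₀ = shiftDensityRatio q₀ δ := funext fun p => hH₀ p.1 p.2
  have hΦ : Measurable fun ω => (A ω, W ω) := hA.prodMk hW
  have hmap : P.map (fun ω => (A ω, W ω)) = condDensityMeasure (P.map W) q₀ :=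
    map_eq_condDensityMeasure P hA hW hq₀_meas (fun p => (hq₀_pos p).le) hq₀_density
  have hshift := integral_shiftDensityRatio_mul_of_map_eq hA hW hq₀_meas hq₀_pos hδ hmap
  have hYQ : ∫ ω, shiftDensityRatio q₀ δ (A ω, W ω) * Y ω ∂P
      = ∫ ω, shiftDensityRatio q₀ δ (A ω, W ω) * Qbar₀ (A ω, W ω) ∂P := by
    rw [integral_mul_eq_integral_mul_condExp (g := fun ω => shiftDensityRatio q₀ δ (A ω, W ω))
      hΦ.comap_le
      ((measurable_shiftDensityRatio hq₀_meas hδ).comp (comap_measurable _)).stronglyMeasurable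
      hH₀Y_int hY_int]
    exact integral_congr_ae (hQbar₀_condexp.mono fun ω hω => congrArg (_ * ·) hω)
  obtain ⟨M, hM⟩ := hQbar_bd
  have hHQ_int : Integrable (fun ω => shiftDensityRatio q₀ δ (A ω, W ω) * Qbar (A ω, W ω)) P :=
    (integrable_shiftDensityRatio_of_map_eq hA hW hq₀_meas hq₀_pos hδ hmap).mul_bdd
      (hQbar_meas.comp hΦ).aestronglyMeasurable (.of_forall fun ω => hM _)
  have hQshift_int : Integrable (fun ω => Qbar (A ω + δ (W ω), W ω)) P :=
    .of_bound (hQbar_meas.comp ((hA.add (hδ.comp hW)).prodMk hW)).aestronglyMeasurable M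
      (.of_forall fun ω => hM _)
  calc
    ∫ ω, (shiftDensityRatio q₀ δ (A ω, W ω) * (Y ω - Qbar (A ω, W ω))
        + Qbar (A ω + δ (W ω), W ω)) ∂P
        = ∫ ω, shiftDensityRatio q₀ δ (A ω, W ω) * Y ω ∂P
          - ∫ ω, shiftDensityRatio q₀ δ (A ω, W ω) * Qbar (A ω, W ω) ∂P
          + ∫ ω, Qbar (A ω + δ (W ω), W ω) ∂P := by
      simp_rw [mul_sub]
      rw [integral_add (hH₀Y_int.sub' hHQ_int) hQshift_int, integral_sub hH₀Y_int hHQ_int]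
    _ = ψ₀ := by
      rw [hYQ, hshift hQbar₀_meas, hshift hQbar_meas, hψ₀]
      ring

/-- Robustness of the full-data EIF to misspecification of the outcome regression:
when the density ratio `H₀` is correct, the mean of the full-data EIF recovers `ψ₀`
for an arbitrary bounded outcome regression `Q̄`. -/
theorem full_data_eif_robust_density_correct
    {Ω 𝒲 : Type*} [MeasurableSpace Ω] [MeasurableSpace 𝒲]
    (P : Measure Ω) [IsProbabilityMeasure P]
    (W : Ω → 𝒲) (hW : Measurable W)
    (A : Ω → ℝ) (hA : Measurable A)
    (Y : Ω → ℝ) (hY : Measurable Y) (hY_int : Integrable Y P)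
    (q₀ : ℝ × 𝒲 → ℝ) (hq₀_meas : Measurable q₀)
    (hq₀_nonneg : ∀ x, 0 ≤ q₀ x)
    (hq₀_density : ∀ f : ℝ × 𝒲 → ℝ, Measurable f → (∃ M : ℝ, ∀ x, |f x| ≤ M) →
      ∫ ω, f (A ω, W ω) ∂P = ∫ ω, (∫ a : ℝ, f (a, W ω) * q₀ (a, W ω)) ∂P)
    (Qbar₀ : ℝ × 𝒲 → ℝ) (hQbar₀_meas : Measurable Qbar₀)
    (hQbar₀_bd : ∃ M : ℝ, ∀ x, |Qbar₀ x| ≤ M)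
    (hQbar₀_condexp :
      P[Y | MeasurableSpace.comap (fun ω => (A ω, W ω)) inferInstance]
        =ᵐ[P] fun ω => Qbar₀ (A ω, W ω))
    (δ : 𝒲 → ℝ) (hδ : Measurable δ)
    (ψ₀ : ℝ) (hψ₀ : ψ₀ = ∫ ω, Qbar₀ (A ω + δ (W ω), W ω) ∂P)
    (hq₀_pos : ∀ x, 0 < q₀ x)
    (H₀ : ℝ × 𝒲 → ℝ)
    (hH₀ : ∀ a w, H₀ (a, w) = q₀ (a - δ w, w) / q₀ (a, w))
    (hH₀Y_int : Integrable (fun ω => H₀ (A ω, W ω) * Y ω) P)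
    (Qbar : ℝ × 𝒲 → ℝ) (hQbar_meas : Measurable Qbar)
    (hQbar_bd : ∃ M : ℝ, ∀ x, |Qbar x| ≤ M) :
    ∫ ω, (H₀ (A ω, W ω) * (Y ω - Qbar (A ω, W ω))
        + Qbar (A ω + δ (W ω), W ω)) ∂P = ψ₀ :=
  full_data_eif_robust_density_correct_general P W hW A hA Y hY_int q₀ hq₀_meas hq₀_density Qbar₀
    hQbar₀_meas hQbar₀_condexp δ hδ ψ₀ hψ₀ hq₀_pos H₀ hH₀ hH₀Y_int Qbar hQbar_meas hQbar_bd
end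

section
/- Exact second-order remainder of the full-data efficient influence function: for every bounded measurable Q̄ : ℝ × 𝒲 → ℝ and every measurable H' : ℝ × 𝒲 → ℝ with H'(A, W)·Y and H'(A, W) integrable, E[H'(A, W)(Y − Q̄(A, W)) + Q̄(A + δ(W), W)] − ψ₀ = E[(H'(A, W) − H₀(A, W))(Q̄₀(A, W) − Q̄(A, W))]. In particular the bias of the (uncentered) influence-function functional is a product of the errors in the density ratio and in the outcome regression. -/
/-!
The density hypothesis identifies the joint law of `(A, W)` with `q₀ · (Lebesgue ⊗ law W)`. The
shear `(a, w) ↦ (a + δ w, w)` preserves `Lebesgue ⊗ law W`, so the law of `(A + δ W, W)` has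
density `q₀ (a - δ w, w) = H₀ (a, w) q₀ (a, w)`: it is the law of `(A, W)` reweighted by `H₀`.
Hence `E[H₀(A, W) f(A, W)] = E[f(A + δ W, W)]` for every measurable `f`, while the tower property
gives `E[H'(A, W) Y] = E[H'(A, W) Q̄₀(A, W)]`. Expanding `(H' - H₀)(Q̄₀ - Q̄)` and using these two
identities (the first with `f = Q̄₀` and `f = Q̄`) gives the remainder formula.
-/

open MeasureTheory

section Shear

variable {α 𝒲 : Type*} [MeasurableSpace α] [MeasurableSpace 𝒲] [AddGroup α] [MeasurableAdd₂ α]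
  {μ : Measure α} [μ.IsAddRightInvariant] [SFinite μ] {ρ : Measure 𝒲} [SFinite ρ]
  {δ : 𝒲 → α}

theorem measurePreserving_shear (hδ : Measurable δ) :
    MeasurePreserving (fun z : α × 𝒲 => (z.1 + δ z.2, z.2)) (μ.prod ρ) (μ.prod ρ) := by
  have hskew : MeasurePreserving (fun z : 𝒲 × α => (z.1, z.2 + δ z.1)) (ρ.prod μ) (ρ.prod μ) :=
    (MeasurePreserving.id ρ).skew_product (g := fun w a => a + δ w)
      (measurable_snd.add (hδ.comp measurable_fst))
      (ae_of_all _ fun w => map_add_right_eq_self μ (δ w))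
  exact (Measure.measurePreserving_swap.comp hskew).comp Measure.measurePreserving_swap

theorem map_shear_withDensity [MeasurableNeg α] (hδ : Measurable δ)
    {g : α × 𝒲 → ENNReal} (hg : Measurable g) :
    ((μ.prod ρ).withDensity g).map (fun z => (z.1 + δ z.2, z.2))
      = (μ.prod ρ).withDensity (fun z => g (z.1 - δ z.2, z.2)) := by
  have hτ := measurePreserving_shear (μ := μ) (ρ := ρ) hδ
  have hσ : Measurable fun z : α × 𝒲 => (z.1 - δ z.2, z.2) :=
    (measurable_fst.sub (hδ.comp measurable_snd)).prodMk measurable_snd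
  ext s hs
  rw [Measure.map_apply hτ.measurable hs, withDensity_apply _ (hτ.measurable hs),
    withDensity_apply _ hs,
    ← hτ.setLIntegral_comp_preimage hs (f := fun z => g (z.1 - δ z.2, z.2)) (hg.comp hσ)]
  simp only [add_sub_cancel_right]

end Shear

def HasCondDensity {Ω α 𝒲 : Type*} [MeasurableSpace Ω] [MeasurableSpace α] [MeasurableSpace 𝒲]
    (P : Measure Ω) (X : Ω → α) (W : Ω → 𝒲) (μ : Measure α) (q : α × 𝒲 → ℝ) : Prop :=
  ∀ f : α × 𝒲 → ℝ, Measurable f → (∃ M : ℝ, ∀ x, |f x| ≤ M) →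
    ∫ ω, f (X ω, W ω) ∂P = ∫ ω, (∫ a, f (a, W ω) * q (a, W ω) ∂μ) ∂P

namespace HasCondDensity

variable {Ω α 𝒲 : Type*} [MeasurableSpace Ω] [MeasurableSpace α] [MeasurableSpace 𝒲]
  {P : Measure Ω} {X : Ω → α} {W : Ω → 𝒲} {μ : Measure α} [SFinite μ]
  {q : α × 𝒲 → ℝ}

theorem ae_integrable_section [IsFiniteMeasure P] (h : HasCondDensity P X W μ q) (hW : Measurable W)
    (hq : Measurable q) : ∀ᵐ w ∂P.map W, Integrable (fun a => q (a, w)) μ := by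
  set S := {w | Integrable (fun a => q (a, w)) μ}
  have hS : MeasurableSet S :=
    measurableSet_integrable (f := fun w a => q (a, w)) (hq.comp measurable_swap).stronglyMeasurable
  have hind : Measurable fun z : α × 𝒲 => Sᶜ.indicator (1 : 𝒲 → ℝ) z.2 :=
    (measurable_const.indicator hS.compl).comp measurable_snd
  have key := h _ hind ⟨1, fun z => by by_cases hz : z.2 ∈ Sᶜ <;> simp [hz]⟩
  -- On `Sᶜ` the section integral is the junk value `0`, so the identity for `1_{Sᶜ} ∘ W`
  -- forces `P (W ∈ Sᶜ) = 0`.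
  have hzero : ∀ ω, ∫ a, Sᶜ.indicator (1 : 𝒲 → ℝ) (W ω) * q (a, W ω) ∂μ = 0 := by
    intro ω
    rw [integral_const_mul]
    by_cases hω : W ω ∈ S
    · simp [hω]
    · simp [hω, integral_undef hω]
  simp only [hzero, integral_zero] at key
  rw [← integral_map (φ := W) hW.aemeasurable (f := Sᶜ.indicator (1 : 𝒲 → ℝ))
      (stronglyMeasurable_one.indicator hS.compl).aestronglyMeasurable,
    integral_indicator_one hS.compl, measureReal_eq_zero_iff] at key
  exact ae_iff.2 key

theorem integrable_prod [IsProbabilityMeasure P] (h : HasCondDensity P X W μ q) (hW : Measurable W)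
    (hq : Measurable q) (hq_nonneg : ∀ z, 0 ≤ q z) : Integrable q (μ.prod (P.map W)) := by
  refine (integrable_prod_iff' hq.aestronglyMeasurable).2 ⟨h.ae_integrable_section hW hq, ?_⟩
  simp only [Real.norm_of_nonneg (hq_nonneg _)]
  have hmeas : StronglyMeasurable fun w => ∫ a, q (a, w) ∂μ :=
    (hq.comp measurable_swap).stronglyMeasurable.integral_prod_right'
  rw [integrable_map_measure hmeas.aestronglyMeasurable hW.aemeasurable]
  -- Otherwise `ω ↦ ∫ a, q (a, W ω)` would integrate to the junk value `0` instead of `1`.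
  by_contra hnot
  have key := h (fun _ => 1) measurable_const ⟨1, fun _ => by simp⟩
  simp only [one_mul, integral_const, probReal_univ, smul_eq_mul, mul_one] at key
  exact one_ne_zero (key.trans (integral_undef hnot))

theorem map_eq_withDensity [IsProbabilityMeasure P] (h : HasCondDensity P X W μ q)
    (hX : Measurable X) (hW : Measurable W) (hq : Measurable q) (hq_nonneg : ∀ z, 0 ≤ q z) :
    P.map (fun ω => (X ω, W ω))
      = (μ.prod (P.map W)).withDensity (fun z => ENNReal.ofReal (q z)) := by
  have hint := h.integrable_prod hW hq hq_nonneg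
  have := isFiniteMeasure_withDensity_ofReal hint.2
  ext s hs
  rw [← measureReal_eq_measureReal_iff]
  have hind : StronglyMeasurable (s.indicator (1 : α × 𝒲 → ℝ)) :=
    stronglyMeasurable_one.indicator hs
  calc (P.map fun ω => (X ω, W ω)).real s
      = ∫ ω, s.indicator 1 (X ω, W ω) ∂P := by
        rw [← integral_indicator_one hs, integral_map (hX.prodMk hW).aemeasurable
          hind.aestronglyMeasurable]
    _ = ∫ ω, ∫ a, s.indicator 1 (a, W ω) * q (a, W ω) ∂μ ∂P :=
        h _ hind.measurable ⟨1, fun z => by by_cases hz : z ∈ s <;> simp [hz]⟩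
    _ = ∫ w, ∫ a, s.indicator 1 (a, w) * q (a, w) ∂μ ∂(P.map W) := by
        rw [integral_map hW.aemeasurable]
        exact (StronglyMeasurable.integral_prod_right' (ν := μ)
          ((hind.mul hq.stronglyMeasurable).comp_measurable measurable_swap)).aestronglyMeasurable
    _ = ∫ z, s.indicator 1 z * q z ∂(μ.prod (P.map W)) := by
        refine (integral_prod_symm (fun z => s.indicator 1 z * q z) ?_).symm
        exact hint.bdd_mul (c := 1) hind.aestronglyMeasurable
          (ae_of_all _ fun z => by by_cases hz : z ∈ s <;> simp [hz])
    _ = ∫ z, s.indicator 1 z ∂((μ.prod (P.map W)).withDensity fun z => ENNReal.ofReal (q z)) := by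
        rw [integral_withDensity_eq_integral_toReal_smul hq.ennreal_ofReal
          (ae_of_all _ fun _ => ENNReal.ofReal_lt_top)]
        simp only [ENNReal.toReal_ofReal (hq_nonneg _), smul_eq_mul, mul_comm]
    _ = _ := integral_indicator_one hs

theorem map_shift_eq_withDensity [IsProbabilityMeasure P] [AddGroup α] [MeasurableAdd₂ α]
    [MeasurableNeg α] [μ.IsAddRightInvariant] (h : HasCondDensity P X W μ q) (hX : Measurable X)
    (hW : Measurable W) (hq : Measurable q) (hq_nonneg : ∀ z, 0 ≤ q z)
    {δ : 𝒲 → α} (hδ : Measurable δ) {H : α × 𝒲 → ℝ} (hH : Measurable H)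
    (hqH : ∀ z, q z * H z = q (z.1 - δ z.2, z.2)) :
    P.map (fun ω => (X ω + δ (W ω), W ω))
      = (P.map fun ω => (X ω, W ω)).withDensity (fun z => ENNReal.ofReal (H z)) := by
  have hτ : Measurable fun z : α × 𝒲 => (z.1 + δ z.2, z.2) :=
    (measurable_fst.add (hδ.comp measurable_snd)).prodMk measurable_snd
  have hlaw := h.map_eq_withDensity hX hW hq hq_nonneg
  calc P.map (fun ω => (X ω + δ (W ω), W ω))
      = (P.map fun ω => (X ω, W ω)).map fun z => (z.1 + δ z.2, z.2) :=
        (Measure.map_map hτ (hX.prodMk hW)).symm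
    _ = (μ.prod (P.map W)).withDensity fun z => ENNReal.ofReal (q (z.1 - δ z.2, z.2)) := by
        rw [hlaw, map_shear_withDensity hδ hq.ennreal_ofReal]
    _ = (μ.prod (P.map W)).withDensity
          ((fun z => ENNReal.ofReal (q z)) * fun z => ENNReal.ofReal (H z)) := by
        congr with z
        rw [Pi.mul_apply, ← ENNReal.ofReal_mul (hq_nonneg z), hqH]
    _ = _ := by rw [withDensity_mul _ hq.ennreal_ofReal hH.ennreal_ofReal, hlaw]

end HasCondDensity

section ChangeOfMeasure

variable {Ω β : Type*} [MeasurableSpace Ω] [MeasurableSpace β] {P : Measure Ω}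
  {X Z : Ω → β} {H : β → ℝ}

theorem integral_mul_comp_of_map_eq_withDensity (hX : Measurable X) (hZ : Measurable Z)
    (hH : Measurable H) (hH_nonneg : ∀ x, 0 ≤ H x)
    (hmap : P.map Z = (P.map X).withDensity fun x => ENNReal.ofReal (H x))
    {f : β → ℝ} (hf : Measurable f) :
    ∫ ω, H (X ω) * f (X ω) ∂P = ∫ ω, f (Z ω) ∂P := by
  rw [← integral_map hZ.aemeasurable hf.aestronglyMeasurable, hmap,
    integral_withDensity_eq_integral_toReal_smul hH.ennreal_ofReal
      (ae_of_all _ fun _ => ENNReal.ofReal_lt_top)]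
  simp only [ENNReal.toReal_ofReal (hH_nonneg _), smul_eq_mul]
  exact (integral_map hX.aemeasurable (hH.mul hf).aestronglyMeasurable).symm

theorem integrable_comp_of_map_eq_withDensity [IsFiniteMeasure P] (hX : Measurable X)
    (hH : Measurable H) (hH_nonneg : ∀ x, 0 ≤ H x)
    (hmap : P.map Z = (P.map X).withDensity fun x => ENNReal.ofReal (H x)) :
    Integrable (fun ω => H (X ω)) P := by
  have hone : Integrable (fun _ => (1 : ℝ)) (P.map Z) := integrable_const 1
  rw [hmap, integrable_withDensity_iff_integrable_smul' hH.ennreal_ofReal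
    (ae_of_all _ fun _ => ENNReal.ofReal_lt_top)] at hone
  simp only [ENNReal.toReal_ofReal (hH_nonneg _), smul_eq_mul, mul_one] at hone
  exact (integrable_map_measure hH.aestronglyMeasurable hX.aemeasurable).1 hone

end ChangeOfMeasure

theorem integral_mul_eq_integral_mul_of_condExp_comap {Ω β : Type*} [MeasurableSpace Ω]
    [MeasurableSpace β] {P : Measure Ω} [IsFiniteMeasure P] {X : Ω → β} (hX : Measurable X)
    {Y : Ω → ℝ} (hY : Integrable Y P) {Q : β → ℝ}
    (hQ : P[Y | MeasurableSpace.comap X inferInstance] =ᵐ[P] fun ω => Q (X ω))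
    {g : β → ℝ} (hg : Measurable g) (hgY : Integrable (fun ω => g (X ω) * Y ω) P) :
    ∫ ω, g (X ω) * Y ω ∂P = ∫ ω, g (X ω) * Q (X ω) ∂P := by
  have hgX : StronglyMeasurable[MeasurableSpace.comap X inferInstance] fun ω => g (X ω) :=
    (hg.comp (comap_measurable X)).stronglyMeasurable
  rw [← integral_condExp hX.comap_le]
  refine integral_congr_ae ?_
  filter_upwards [condExp_mul_of_stronglyMeasurable_left hgX hgY hY, hQ] with ω hω hQω
  exact hω.trans (by rw [Pi.mul_apply, hQω])

theorem MeasureTheory.Integrable.mul_bounded_comp {Ω β : Type*} [MeasurableSpace Ω]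
    [MeasurableSpace β] {P : Measure Ω} {g : Ω → ℝ} (hg : Integrable g P) {X : Ω → β}
    (hX : Measurable X) {f : β → ℝ} (hf : Measurable f) {C : ℝ} (hC : ∀ x, |f x| ≤ C) :
    Integrable (fun ω => g ω * f (X ω)) P :=
  hg.mul_bdd (hf.comp hX).aestronglyMeasurable (ae_of_all _ fun ω => hC (X ω))

theorem integral_mul_sub_add_sub_eq_integral_sub_mul_sub {Ω : Type*} [MeasurableSpace Ω]
    {P : Measure Ω} {h h₀ y m₀ m s : Ω → ℝ}
    (hhy : Integrable (fun ω => h ω * y ω) P) (hhm₀ : Integrable (fun ω => h ω * m₀ ω) P)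
    (hhm : Integrable (fun ω => h ω * m ω) P) (hh₀m₀ : Integrable (fun ω => h₀ ω * m₀ ω) P)
    (hh₀m : Integrable (fun ω => h₀ ω * m ω) P) (hs : Integrable s P)
    (hy : ∫ ω, h ω * y ω ∂P = ∫ ω, h ω * m₀ ω ∂P)
    (hm : ∫ ω, h₀ ω * m ω ∂P = ∫ ω, s ω ∂P) :
    ∫ ω, (h ω * (y ω - m ω) + s ω) ∂P - ∫ ω, h₀ ω * m₀ ω ∂P
      = ∫ ω, (h ω - h₀ ω) * (m₀ ω - m ω) ∂P := by
  have hlhs : ∫ ω, (h ω * (y ω - m ω) + s ω) ∂P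
      = ∫ ω, h ω * y ω ∂P - ∫ ω, h ω * m ω ∂P + ∫ ω, s ω ∂P := by
    simp_rw [mul_sub]
    rw [integral_add _ hs, integral_sub hhy hhm]
    exact hhy.sub hhm
  have hrhs : ∫ ω, (h ω - h₀ ω) * (m₀ ω - m ω) ∂P
      = ∫ ω, h ω * m₀ ω ∂P - ∫ ω, h ω * m ω ∂P
        - (∫ ω, h₀ ω * m₀ ω ∂P - ∫ ω, h₀ ω * m ω ∂P) := by
    simp_rw [sub_mul, mul_sub]
    rw [integral_sub _ _, integral_sub hhm₀ hhm, integral_sub hh₀m₀ hh₀m]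
    exacts [hhm₀.sub hhm, hh₀m₀.sub hh₀m]
  rw [hlhs, hrhs, hy, hm]
  ring

theorem full_data_eif_second_order_remainder_general
    {Ω 𝒲 : Type*} [MeasurableSpace Ω] [MeasurableSpace 𝒲]
    (P : Measure Ω) [IsProbabilityMeasure P]
    (W : Ω → 𝒲) (hW : Measurable W)
    (A : Ω → ℝ) (hA : Measurable A)
    (Y : Ω → ℝ) (hY_int : Integrable Y P)
    (q₀ : ℝ × 𝒲 → ℝ) (hq₀_meas : Measurable q₀)
    (hq₀_nonneg : ∀ x, 0 ≤ q₀ x)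
    (hq₀_density : ∀ f : ℝ × 𝒲 → ℝ, Measurable f → (∃ M : ℝ, ∀ x, |f x| ≤ M) →
      ∫ ω, f (A ω, W ω) ∂P = ∫ ω, (∫ a : ℝ, f (a, W ω) * q₀ (a, W ω)) ∂P)
    (Qbar₀ : ℝ × 𝒲 → ℝ) (hQbar₀_meas : Measurable Qbar₀)
    (hQbar₀_bd : ∃ M : ℝ, ∀ x, |Qbar₀ x| ≤ M)
    (hQbar₀_condexp :
      P[Y | MeasurableSpace.comap (fun ω => (A ω, W ω)) inferInstance]
        =ᵐ[P] fun ω => Qbar₀ (A ω, W ω))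
    (δ : 𝒲 → ℝ) (hδ : Measurable δ)
    (ψ₀ : ℝ) (hψ₀ : ψ₀ = ∫ ω, Qbar₀ (A ω + δ (W ω), W ω) ∂P)
    (hq₀_pos : ∀ x, 0 < q₀ x)
    (H₀ : ℝ × 𝒲 → ℝ)
    (hH₀ : ∀ a w, H₀ (a, w) = q₀ (a - δ w, w) / q₀ (a, w))
    (Qbar : ℝ × 𝒲 → ℝ) (hQbar_meas : Measurable Qbar)
    (hQbar_bd : ∃ M : ℝ, ∀ x, |Qbar x| ≤ M)
    (H' : ℝ × 𝒲 → ℝ) (hH'_meas : Measurable H')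
    (hH'Y_int : Integrable (fun ω => H' (A ω, W ω) * Y ω) P)
    (hH'_int : Integrable (fun ω => H' (A ω, W ω)) P) :
    (∫ ω, (H' (A ω, W ω) * (Y ω - Qbar (A ω, W ω))
        + Qbar (A ω + δ (W ω), W ω)) ∂P) - ψ₀
      = ∫ ω, (H' (A ω, W ω) - H₀ (A ω, W ω))
          * (Qbar₀ (A ω, W ω) - Qbar (A ω, W ω)) ∂P := by
  obtain ⟨M₀, hM₀⟩ := hQbar₀_bd
  obtain ⟨M, hM⟩ := hQbar_bd
  have hAW : Measurable fun ω => (A ω, W ω) := hA.prodMk hW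
  have hshift : Measurable fun ω => (A ω + δ (W ω), W ω) := (hA.add (hδ.comp hW)).prodMk hW
  have hH₀_eq : H₀ = fun z => q₀ (z.1 - δ z.2, z.2) / q₀ z := funext fun z => hH₀ z.1 z.2
  have hH₀_meas : Measurable H₀ := by rw [hH₀_eq]; fun_prop
  have hH₀_nonneg : ∀ z, 0 ≤ H₀ z := fun z => by
    rw [hH₀_eq]; exact div_nonneg (hq₀_nonneg _) (hq₀_nonneg _)
  have hlaw := HasCondDensity.map_shift_eq_withDensity hq₀_density hA hW hq₀_meas hq₀_nonneg hδ
    hH₀_meas fun z => by rw [hH₀_eq, mul_div_cancel₀ _ (hq₀_pos z).ne']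
  have hH₀_int := integrable_comp_of_map_eq_withDensity hAW hH₀_meas hH₀_nonneg hlaw
  have hpull := integral_mul_eq_integral_mul_of_condExp_comap hAW hY_int hQbar₀_condexp
    hH'_meas hH'Y_int
  have hshift₀ := integral_mul_comp_of_map_eq_withDensity hAW hshift hH₀_meas hH₀_nonneg hlaw
    hQbar₀_meas
  have hshiftQ := integral_mul_comp_of_map_eq_withDensity hAW hshift hH₀_meas hH₀_nonneg hlaw
    hQbar_meas
  have iH'Q₀ := hH'_int.mul_bounded_comp hAW hQbar₀_meas hM₀
  have iH'Q := hH'_int.mul_bounded_comp hAW hQbar_meas hM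
  have iH₀Q₀ := hH₀_int.mul_bounded_comp hAW hQbar₀_meas hM₀
  have iH₀Q := hH₀_int.mul_bounded_comp hAW hQbar_meas hM
  have iQshift : Integrable (fun ω => Qbar (A ω + δ (W ω), W ω)) P :=
    .of_bound (hQbar_meas.comp hshift).aestronglyMeasurable M (ae_of_all _ fun ω => hM _)
  rw [hψ₀, ← hshift₀]
  exact integral_mul_sub_add_sub_eq_integral_sub_mul_sub hH'Y_int iH'Q₀ iH'Q iH₀Q₀ iH₀Q iQshift
    hpull hshiftQ

/-- Exact second-order remainder of the full-data efficient influence function: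
the bias of the uncentered influence-function functional is a product of the errors
in the density ratio and in the outcome regression. -/
theorem full_data_eif_second_order_remainder
    {Ω 𝒲 : Type*} [MeasurableSpace Ω] [MeasurableSpace 𝒲]
    (P : Measure Ω) [IsProbabilityMeasure P]
    (W : Ω → 𝒲) (hW : Measurable W)
    (A : Ω → ℝ) (hA : Measurable A)
    (Y : Ω → ℝ) (hY : Measurable Y) (hY_int : Integrable Y P)
    (q₀ : ℝ × 𝒲 → ℝ) (hq₀_meas : Measurable q₀)
    (hq₀_nonneg : ∀ x, 0 ≤ q₀ x)
    (hq₀_density : ∀ f : ℝ × 𝒲 → ℝ, Measurable f → (∃ M : ℝ, ∀ x, |f x| ≤ M) →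
      ∫ ω, f (A ω, W ω) ∂P = ∫ ω, (∫ a : ℝ, f (a, W ω) * q₀ (a, W ω)) ∂P)
    (Qbar₀ : ℝ × 𝒲 → ℝ) (hQbar₀_meas : Measurable Qbar₀)
    (hQbar₀_bd : ∃ M : ℝ, ∀ x, |Qbar₀ x| ≤ M)
    (hQbar₀_condexp :
      P[Y | MeasurableSpace.comap (fun ω => (A ω, W ω)) inferInstance]
        =ᵐ[P] fun ω => Qbar₀ (A ω, W ω))
    (δ : 𝒲 → ℝ) (hδ : Measurable δ)
    (ψ₀ : ℝ) (hψ₀ : ψ₀ = ∫ ω, Qbar₀ (A ω + δ (W ω), W ω) ∂P)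
    (hq₀_pos : ∀ x, 0 < q₀ x)
    (H₀ : ℝ × 𝒲 → ℝ)
    (hH₀ : ∀ a w, H₀ (a, w) = q₀ (a - δ w, w) / q₀ (a, w))
    (hH₀Y_int : Integrable (fun ω => H₀ (A ω, W ω) * Y ω) P)
    (Qbar : ℝ × 𝒲 → ℝ) (hQbar_meas : Measurable Qbar)
    (hQbar_bd : ∃ M : ℝ, ∀ x, |Qbar x| ≤ M)
    (H' : ℝ × 𝒲 → ℝ) (hH'_meas : Measurable H')
    (hH'Y_int : Integrable (fun ω => H' (A ω, W ω) * Y ω) P)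
    (hH'_int : Integrable (fun ω => H' (A ω, W ω)) P) :
    (∫ ω, (H' (A ω, W ω) * (Y ω - Qbar (A ω, W ω))
        + Qbar (A ω + δ (W ω), W ω)) ∂P) - ψ₀
      = ∫ ω, (H' (A ω, W ω) - H₀ (A ω, W ω))
          * (Qbar₀ (A ω, W ω) - Qbar (A ω, W ω)) ∂P :=
  full_data_eif_second_order_remainder_general P W hW A hA Y hY_int q₀ hq₀_meas hq₀_nonneg
    hq₀_density Qbar₀ hQbar₀_meas hQbar₀_bd hQbar₀_condexp δ hδ ψ₀ hψ₀ hq₀_pos H₀ hH₀ Qbar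
    hQbar_meas hQbar_bd H' hH'_meas hH'Y_int hH'_int
end

section
/- Reweighting identity for the modified treatment policy with boundary truncation: define d(a, w) = a + δ(w) if a + δ(w) ≤ u(w) and d(a, w) = a otherwise, and define the auxiliary covariate H(a, w) = 1{a < u(w)}·q₀(a − δ(w), w)/q₀(a, w) + 1{a + δ(w) ≥ u(w)}. Then for every bounded measurable f : ℝ × 𝒲 → ℝ, E[H(A, W) f(A, W)] = E[f(d(A, W), W)]. -/
open MeasureTheory

open scoped ENNReal

/-! On a fibre `W = w`, multiplying the density `q₀(·, w)` by `H` gives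
`1{a < u} q₀(a - δ, w) + 1{u ≤ a + δ} q₀(a, w)`. The first summand is the translate by `δ` of
`1{a + δ < u} q₀(a, w)`, so integrating `g` against the reweighted density gives
`∫ q₀ g(a + δ)` over `{a + δ < u}` plus `∫ q₀ g(a)` over `{u ≤ a + δ}`, which is `∫ q₀ g(d a)`
up to the null point `a = u - δ`. The density hypothesis identifies the law of `(A, W)` with
`q₀ · (Lebesgue ⊗ law W)`, so the fibrewise identity becomes the equality of measures
`law(A, W).withDensity H = law(A, W).map (d, id)`. -/

theorem lintegral_shift_reweight {p g : ℝ → ℝ≥0∞} (hp : Measurable p) (hg : Measurable g)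
    (u δ : ℝ) :
    ∫⁻ a, ((if a < u then p (a - δ) else 0) + (if u ≤ a + δ then p a else 0)) * g a
      = ∫⁻ a, p a * g (if a + δ ≤ u then a + δ else a) := by
  have hshifted : Measurable fun a => (if a + δ < u then p a else 0) * g (a + δ) :=
    (Measurable.ite (measurableSet_lt (measurable_add_const δ) measurable_const) hp
      measurable_const).mul (hg.comp (measurable_add_const δ))
  calc ∫⁻ a, ((if a < u then p (a - δ) else 0) + (if u ≤ a + δ then p a else 0)) * g a
      = (∫⁻ a, (if a < u then p (a - δ) else 0) * g a)
          + ∫⁻ a, (if u ≤ a + δ then p a else 0) * g a := by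
        simp only [add_mul]
        exact lintegral_add_left ((Measurable.ite measurableSet_Iio
          (hp.comp (measurable_sub_const δ)) measurable_const).mul hg) _
    _ = (∫⁻ a, (if a + δ < u then p a else 0) * g (a + δ))
          + ∫⁻ a, (if u ≤ a + δ then p a else 0) * g a := by
        rw [← lintegral_add_right_eq_self _ δ]; simp only [add_sub_cancel_right]
    _ = ∫⁻ a, p a * g (if a + δ ≤ u then a + δ else a) := by
        rw [← lintegral_add_left hshifted]
        refine lintegral_congr_ae ?_
        filter_upwards [Measure.ae_ne volume (u - δ)] with a ha
        rcases lt_trichotomy (a + δ) u with h | h | h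
        · simp [h, h.le, not_le.2 h]
        · exact absurd (by linarith) ha
        · simp [not_lt.2 h.le, not_le.2 h, h.le]

noncomputable section TruncatedShift

variable {𝒲 : Type*}

def truncatedShift (u δ : 𝒲 → ℝ) (x : ℝ × 𝒲) : ℝ :=
  if x.1 + δ x.2 ≤ u x.2 then x.1 + δ x.2 else x.1

def truncatedShiftWeight (q : ℝ × 𝒲 → ℝ) (u δ : 𝒲 → ℝ) (x : ℝ × 𝒲) : ℝ :=
  (if x.1 < u x.2 then q (x.1 - δ x.2, x.2) / q x else 0)
    + (if u x.2 ≤ x.1 + δ x.2 then 1 else 0)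

variable {q : ℝ × 𝒲 → ℝ} {u δ : 𝒲 → ℝ}

theorem truncatedShiftWeight_nonneg (hq_nonneg : ∀ x, 0 ≤ q x) (x : ℝ × 𝒲) :
    0 ≤ truncatedShiftWeight q u δ x := by
  unfold truncatedShiftWeight
  refine add_nonneg ?_ ?_ <;> split_ifs
  exacts [div_nonneg (hq_nonneg _) (hq_nonneg _), le_rfl, zero_le_one, le_rfl]

theorem ofReal_mul_ofReal_truncatedShiftWeight (hq_nonneg : ∀ x, 0 ≤ q x)
    (hq_pos : ∀ a w, a ≤ u w → 0 < q (a, w)) (a : ℝ) (w : 𝒲) :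
    ENNReal.ofReal (q (a, w)) * ENNReal.ofReal (truncatedShiftWeight q u δ (a, w))
      = (if a < u w then ENNReal.ofReal (q (a - δ w, w)) else 0)
        + (if u w ≤ a + δ w then ENNReal.ofReal (q (a, w)) else 0) := by
  rw [truncatedShiftWeight, ENNReal.ofReal_add
    (by split_ifs; exacts [div_nonneg (hq_nonneg _) (hq_nonneg _), le_rfl])
    (by split_ifs; exacts [zero_le_one, le_rfl]), mul_add]
  congr 1
  · split_ifs with h
    · rw [← ENNReal.ofReal_mul (hq_nonneg _), mul_div_cancel₀ _ (hq_pos a w h.le).ne']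
    · simp
  · split_ifs <;> simp

variable [MeasurableSpace 𝒲]

theorem measurable_truncatedShift (hu : Measurable u) (hδ : Measurable δ) :
    Measurable (truncatedShift u δ) :=
  Measurable.ite (measurableSet_le (measurable_fst.add (hδ.comp measurable_snd))
    (hu.comp measurable_snd)) (measurable_fst.add (hδ.comp measurable_snd)) measurable_fst

theorem measurable_truncatedShiftWeight (hq : Measurable q) (hu : Measurable u)
    (hδ : Measurable δ) : Measurable (truncatedShiftWeight q u δ) := by
  refine Measurable.add ?_ ?_
  · exact Measurable.ite (measurableSet_lt measurable_fst (hu.comp measurable_snd))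
      ((hq.comp ((measurable_fst.sub (hδ.comp measurable_snd)).prodMk measurable_snd)).div hq)
      measurable_const
  · exact Measurable.ite (measurableSet_le (hu.comp measurable_snd)
      (measurable_fst.add (hδ.comp measurable_snd))) measurable_const measurable_const

theorem lintegral_withDensity_prod (ν : Measure 𝒲) [SFinite ν] (hq : Measurable q)
    {g : ℝ × 𝒲 → ℝ≥0∞} (hg : Measurable g) :
    ∫⁻ x, g x ∂(volume.prod ν).withDensity (fun x => ENNReal.ofReal (q x))
      = ∫⁻ w, (∫⁻ a, ENNReal.ofReal (q (a, w)) * g (a, w)) ∂ν := by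
  rw [lintegral_withDensity_eq_lintegral_mul _ hq.ennreal_ofReal hg,
    lintegral_prod_symm' _ (hq.ennreal_ofReal.mul hg)]
  rfl

theorem lintegral_truncatedShiftWeight_mul (ν : Measure 𝒲) [SFinite ν] (hq : Measurable q)
    (hq_nonneg : ∀ x, 0 ≤ q x) (hq_pos : ∀ a w, a ≤ u w → 0 < q (a, w))
    (hu : Measurable u) (hδ : Measurable δ) {g : ℝ × 𝒲 → ℝ≥0∞} (hg : Measurable g) :
    ∫⁻ x, ENNReal.ofReal (truncatedShiftWeight q u δ x) * g x
        ∂(volume.prod ν).withDensity (fun x => ENNReal.ofReal (q x))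
      = ∫⁻ x, g (truncatedShift u δ x, x.2)
        ∂(volume.prod ν).withDensity (fun x => ENNReal.ofReal (q x)) := by
  rw [lintegral_withDensity_prod ν hq
      (by exact (measurable_truncatedShiftWeight hq hu hδ).ennreal_ofReal.mul hg),
    lintegral_withDensity_prod ν hq
      (by exact hg.comp ((measurable_truncatedShift hu hδ).prodMk measurable_snd))]
  refine lintegral_congr fun w => ?_
  simp only [← mul_assoc, ofReal_mul_ofReal_truncatedShiftWeight hq_nonneg hq_pos]
  exact lintegral_shift_reweight ((hq.comp measurable_prodMk_right).ennreal_ofReal)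
    (hg.comp measurable_prodMk_right) (u w) (δ w)

theorem withDensity_truncatedShiftWeight_eq_map (ν : Measure 𝒲) [SFinite ν] (hq : Measurable q)
    (hq_nonneg : ∀ x, 0 ≤ q x) (hq_pos : ∀ a w, a ≤ u w → 0 < q (a, w))
    (hu : Measurable u) (hδ : Measurable δ) :
    ((volume.prod ν).withDensity fun x => ENNReal.ofReal (q x)).withDensity
        (fun x => ENNReal.ofReal (truncatedShiftWeight q u δ x))
      = ((volume.prod ν).withDensity fun x => ENNReal.ofReal (q x)).map
        (fun x => (truncatedShift u δ x, x.2)) := by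
  have hshift : Measurable fun x : ℝ × 𝒲 => (truncatedShift u δ x, x.2) :=
    (measurable_truncatedShift hu hδ).prodMk measurable_snd
  ext s hs
  rw [withDensity_apply _ hs, Measure.map_apply hshift hs, ← lintegral_indicator hs,
    ← lintegral_indicator_one (hshift hs)]
  convert lintegral_truncatedShiftWeight_mul ν hq hq_nonneg hq_pos hu hδ
    (measurable_one.indicator hs) using 3 with x
  · by_cases hx : x ∈ s <;> simp [hx]
  · rfl

end TruncatedShift

theorem integral_smul_eq_integral_comp_of_withDensity_eq_map {X E : Type*} [MeasurableSpace X]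
    [NormedAddCommGroup E] [NormedSpace ℝ E] {μ : Measure X} {h : X → ℝ} {T : X → X}
    (hh : Measurable h) (hh_nonneg : ∀ x, 0 ≤ h x) (hT : Measurable T)
    (hμ : μ.withDensity (fun x => ENNReal.ofReal (h x)) = μ.map T) {f : X → E}
    (hf : StronglyMeasurable f) :
    ∫ x, h x • f x ∂μ = ∫ x, f (T x) ∂μ := by
  rw [← integral_map hT.aemeasurable hf.aestronglyMeasurable, ← hμ,
    integral_withDensity_eq_integral_toReal_smul hh.ennreal_ofReal
      (ae_of_all _ fun _ => ENNReal.ofReal_lt_top)]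
  simp only [ENNReal.toReal_ofReal (hh_nonneg _)]

section ConditionalDensity

variable {Ω 𝒲 : Type*} [MeasurableSpace Ω] [MeasurableSpace 𝒲] {P : Measure Ω}
  {W : Ω → 𝒲} {A : Ω → ℝ} {q : ℝ × 𝒲 → ℝ}

theorem ae_lintegral_ofReal_ne_top [IsFiniteMeasure P] (hW : Measurable W) (hq : Measurable q)
    (hq_nonneg : ∀ x, 0 ≤ q x)
    (hdens : ∀ f : ℝ × 𝒲 → ℝ, Measurable f → (∃ M : ℝ, ∀ x, |f x| ≤ M) →
      ∫ ω, f (A ω, W ω) ∂P = ∫ ω, (∫ a : ℝ, f (a, W ω) * q (a, W ω)) ∂P) :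
    ∀ᵐ ω ∂P, ∫⁻ a, ENNReal.ofReal (q (a, W ω)) ≠ ∞ := by
  -- On a fibre of infinite mass the inner Bochner integral in `hdens` is the junk value `0`,
  -- so testing `hdens` against the indicator of these fibres shows that they are `P`-null.
  set B := {w | ∫⁻ a, ENNReal.ofReal (q (a, w)) = ∞}
  have hB : MeasurableSet B :=
    Measurable.lintegral_prod_left hq.ennreal_ofReal (measurableSet_singleton ∞)
  have hPB := hdens (fun x => B.indicator 1 x.2)
    ((measurable_one.indicator hB).comp measurable_snd)
    ⟨1, fun x => by by_cases hx : x.2 ∈ B <;> simp [hx]⟩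
  have hfiber : ∀ ω, ∫ a, B.indicator 1 (W ω) * q (a, W ω) = 0 := by
    intro ω
    by_cases hω : W ω ∈ B
    · simp only [Set.indicator_of_mem hω, Pi.one_apply, one_mul]
      rw [integral_eq_lintegral_of_nonneg_ae
        (ae_of_all _ fun a => hq_nonneg _) (hq.comp measurable_prodMk_right).aestronglyMeasurable]
      simp only [show _ = ∞ from hω, ENNReal.toReal_top]
    · simp [hω]
  simp only [hfiber, integral_zero] at hPB
  change ∫ ω, (W ⁻¹' B).indicator 1 ω ∂P = 0 at hPB
  rw [integral_indicator_one (hW hB), measureReal_eq_zero_iff] at hPB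
  exact measure_eq_zero_iff_ae_notMem.1 hPB

theorem map_eq_withDensity_prod [IsProbabilityMeasure P] (hW : Measurable W) (hA : Measurable A)
    (hq : Measurable q) (hq_nonneg : ∀ x, 0 ≤ q x)
    (hdens : ∀ f : ℝ × 𝒲 → ℝ, Measurable f → (∃ M : ℝ, ∀ x, |f x| ≤ M) →
      ∫ ω, f (A ω, W ω) ∂P = ∫ ω, (∫ a : ℝ, f (a, W ω) * q (a, W ω)) ∂P) :
    P.map (fun ω => (A ω, W ω))
      = (volume.prod (P.map W)).withDensity fun x => ENNReal.ofReal (q x) := by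
  set ν := (volume.prod (P.map W)).withDensity fun x => ENNReal.ofReal (q x)
  have hAW : Measurable fun ω => (A ω, W ω) := hA.prodMk hW
  have hfinite := ae_lintegral_ofReal_ne_top hW hq hq_nonneg hdens
  have hreal : ∀ s, MeasurableSet s →
      P.real ((fun ω => (A ω, W ω)) ⁻¹' s) = (ν s).toReal := by
    intro s hs
    have hind : Measurable fun x : ℝ × 𝒲 => ENNReal.ofReal (q x) * s.indicator 1 x :=
      hq.ennreal_ofReal.mul (measurable_one.indicator hs)
    have hfiber : Measurable fun w => ∫⁻ a, ENNReal.ofReal (q (a, w)) * s.indicator 1 (a, w) :=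
      Measurable.lintegral_prod_left
        (f := fun a w => ENNReal.ofReal (q (a, w)) * s.indicator 1 (a, w)) hind
    calc P.real ((fun ω => (A ω, W ω)) ⁻¹' s)
        = ∫ ω, s.indicator 1 (A ω, W ω) ∂P := (integral_indicator_one (hAW hs)).symm
      _ = ∫ ω, (∫ a, s.indicator 1 (a, W ω) * q (a, W ω)) ∂P :=
          hdens _ (measurable_one.indicator hs)
            ⟨1, fun x => by by_cases hx : x ∈ s <;> simp [hx]⟩
      _ = ∫ ω, (∫⁻ a, ENNReal.ofReal (q (a, W ω)) * s.indicator 1 (a, W ω)).toReal ∂P := by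
          congr 1 with ω
          rw [integral_eq_lintegral_of_nonneg_ae
            (f := fun a => s.indicator 1 (a, W ω) * q (a, W ω))
            (ae_of_all _ fun a => mul_nonneg (Set.indicator_nonneg (fun _ _ => zero_le_one) _)
              (hq_nonneg _))
            ((measurable_one.indicator hs).comp measurable_prodMk_right |>.mul
              (hq.comp measurable_prodMk_right)).aestronglyMeasurable]
          congr 2 with a
          by_cases ha : (a, W ω) ∈ s <;> simp [ha]
      _ = (∫⁻ ω, (∫⁻ a, ENNReal.ofReal (q (a, W ω)) * s.indicator 1 (a, W ω)) ∂P).toReal := by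
          refine integral_toReal (hfiber.comp hW).aemeasurable ?_
          filter_upwards [hfinite] with ω hω
          refine lt_of_le_of_lt (lintegral_mono fun a => ?_) hω.lt_top
          by_cases ha : (a, W ω) ∈ s <;> simp [ha]
      _ = (ν s).toReal := by
          rw [← lintegral_indicator_one hs,
            lintegral_withDensity_prod _ hq (by exact measurable_one.indicator hs),
            lintegral_map hfiber hW]
  have hν_univ : ν Set.univ ≠ ∞ := fun h => by simpa [h] using hreal Set.univ .univ
  ext s hs
  rw [Measure.map_apply hAW hs, ← ENNReal.toReal_eq_toReal_iff' (measure_ne_top _ _)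
    (ne_top_of_le_ne_top hν_univ (measure_mono (Set.subset_univ s)))]
  exact hreal s hs

end ConditionalDensity

theorem mtp_reweighting_identity_general
    {Ω 𝒲 : Type*} [MeasurableSpace Ω] [MeasurableSpace 𝒲]
    (P : Measure Ω) [IsProbabilityMeasure P]
    (W : Ω → 𝒲) (hW : Measurable W)
    (A : Ω → ℝ) (hA : Measurable A)
    (q₀ : ℝ × 𝒲 → ℝ) (hq₀_meas : Measurable q₀)
    (hq₀_nonneg : ∀ x, 0 ≤ q₀ x)
    (hq₀_density : ∀ f : ℝ × 𝒲 → ℝ, Measurable f → (∃ M : ℝ, ∀ x, |f x| ≤ M) →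
      ∫ ω, f (A ω, W ω) ∂P = ∫ ω, (∫ a : ℝ, f (a, W ω) * q₀ (a, W ω)) ∂P)
    (u : 𝒲 → ℝ) (hu : Measurable u)
    (hq₀_pos : ∀ a w, a ≤ u w → 0 < q₀ (a, w))
    (δ : 𝒲 → ℝ) (hδ : Measurable δ)
    (d : ℝ × 𝒲 → ℝ)
    (hd : ∀ a w, d (a, w) = if a + δ w ≤ u w then a + δ w else a)
    (H : ℝ × 𝒲 → ℝ)
    (hH : ∀ a w, H (a, w) =
      (if a < u w then q₀ (a - δ w, w) / q₀ (a, w) else 0)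
        + (if u w ≤ a + δ w then 1 else 0))
    (f : ℝ × 𝒲 → ℝ) (hf_meas : Measurable f) :
    ∫ ω, H (A ω, W ω) * f (A ω, W ω) ∂P
      = ∫ ω, f (d (A ω, W ω), W ω) ∂P := by
  obtain rfl : d = truncatedShift u δ := funext fun x => hd x.1 x.2
  obtain rfl : H = truncatedShiftWeight q₀ u δ := funext fun x => hH x.1 x.2
  have hAW : Measurable fun ω => (A ω, W ω) := hA.prodMk hW
  have hshift : Measurable fun x => (truncatedShift u δ x, x.2) :=
    (measurable_truncatedShift hu hδ).prodMk measurable_snd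
  have hreweight :=
    withDensity_truncatedShiftWeight_eq_map (P.map W) hq₀_meas hq₀_nonneg hq₀_pos hu hδ
  rw [← map_eq_withDensity_prod hW hA hq₀_meas hq₀_nonneg hq₀_density] at hreweight
  have hH_meas := measurable_truncatedShiftWeight hq₀_meas hu hδ
  have key := integral_smul_eq_integral_comp_of_withDensity_eq_map hH_meas
    (truncatedShiftWeight_nonneg hq₀_nonneg) hshift hreweight hf_meas.stronglyMeasurable
  rwa [integral_map hAW.aemeasurable (by exact (hH_meas.smul hf_meas).aestronglyMeasurable),
    integral_map hAW.aemeasurable (by exact (hf_meas.comp hshift).aestronglyMeasurable)] at key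

/-- Reweighting identity for the modified treatment policy with boundary truncation:
with `d(a,w) = a + δ(w)` if `a + δ(w) ≤ u(w)` and `d(a,w) = a` otherwise, and the
auxiliary covariate
`H(a,w) = 1{a < u(w)} q₀(a − δ(w), w)/q₀(a, w) + 1{a + δ(w) ≥ u(w)}`, we have
`E[H(A,W) f(A,W)] = E[f(d(A,W), W)]` for every bounded measurable `f`. -/
theorem mtp_reweighting_identity
    {Ω 𝒲 : Type*} [MeasurableSpace Ω] [MeasurableSpace 𝒲]
    (P : Measure Ω) [IsProbabilityMeasure P]
    (W : Ω → 𝒲) (hW : Measurable W)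
    (A : Ω → ℝ) (hA : Measurable A)
    (q₀ : ℝ × 𝒲 → ℝ) (hq₀_meas : Measurable q₀)
    (hq₀_nonneg : ∀ x, 0 ≤ q₀ x)
    (hq₀_density : ∀ f : ℝ × 𝒲 → ℝ, Measurable f → (∃ M : ℝ, ∀ x, |f x| ≤ M) →
      ∫ ω, f (A ω, W ω) ∂P = ∫ ω, (∫ a : ℝ, f (a, W ω) * q₀ (a, W ω)) ∂P)
    (u : 𝒲 → ℝ) (hu : Measurable u)
    (hq₀_zero : ∀ a w, u w < a → q₀ (a, w) = 0)
    (hq₀_pos : ∀ a w, a ≤ u w → 0 < q₀ (a, w))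
    (δ : 𝒲 → ℝ) (hδ : Measurable δ) (hδ_pos : ∀ w, 0 < δ w)
    (d : ℝ × 𝒲 → ℝ)
    (hd : ∀ a w, d (a, w) = if a + δ w ≤ u w then a + δ w else a)
    (H : ℝ × 𝒲 → ℝ)
    (hH : ∀ a w, H (a, w) =
      (if a < u w then q₀ (a - δ w, w) / q₀ (a, w) else 0)
        + (if u w ≤ a + δ w then 1 else 0))
    (f : ℝ × 𝒲 → ℝ) (hf_meas : Measurable f) (hf_bd : ∃ M : ℝ, ∀ x, |f x| ≤ M) :
    ∫ ω, H (A ω, W ω) * f (A ω, W ω) ∂P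
      = ∫ ω, f (d (A ω, W ω), W ω) ∂P :=
  mtp_reweighting_identity_general P W hW A hA q₀ hq₀_meas hq₀_nonneg hq₀_density u hu hq₀_pos δ hδ
    d hd H hH f hf_meas
end

section
/- Inverse-probability-of-sampling identity: for every bounded measurable f : 𝒲 × ℝ × ℝ → ℝ, E[(C / g₀(Y, W)) · f(W, A, Y)] = E[f(W, A, Y)]. -/
/-!
Reweight `P` by the inverse-probability weight `C / g₀(Y, W)`. On an event `{(Y, W) ∈ B, A ∈ t}`,
the tower property, conditional independence of `C` and `A` given `(Y, W)`, and
`E[C | Y, W] = g₀(Y, W)` give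
`E[C / g₀ · 1{(Y, W) ∈ B} 1{A ∈ t}] = E[1{(Y, W) ∈ B} g₀ P(A ∈ t | Y, W) / g₀]`,
which is `P((Y, W) ∈ B, A ∈ t)`. So the reweighted law of `((Y, W), A)` is the original one, and
every function of `(W, A, Y)` has the same expectation under both.
-/

open MeasureTheory ProbabilityTheory Set

section InverseProbabilityWeighting

variable {Ω α β : Type*} {m mΩ : MeasurableSpace Ω} [MeasurableSpace α] [MeasurableSpace β]
  {μ : Measure Ω} [IsFiniteMeasure μ] {C G : Ω → ℝ} {A : Ω → β} {ε : ℝ}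

lemma indicator_preimage_one_eq_self (hC01 : ∀ ω, C ω = 0 ∨ C ω = 1) :
    (C ⁻¹' {1}).indicator 1 = C := by
  ext ω
  rcases hC01 ω with h | h <;> simp [h]

lemma div_mem_Icc_zero_inv (hC01 : ∀ ω, C ω = 0 ∨ C ω = 1) (hε : 0 < ε) (hGε : ∀ ω, ε ≤ G ω)
    (ω : Ω) : C ω / G ω ∈ Icc 0 ε⁻¹ := by
  have hG : 0 < G ω := hε.trans_le (hGε ω)
  rcases hC01 ω with h | h
  · simp [h, hε.le]
  · simpa [h, hG.le] using inv_anti₀ hε (hGε ω)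

lemma integrable_div_of_zero_or_one (hC : Measurable C) (hC01 : ∀ ω, C ω = 0 ∨ C ω = 1)
    (hG : Measurable G) (hε : 0 < ε) (hGε : ∀ ω, ε ≤ G ω) : Integrable (fun ω => C ω / G ω) μ := by
  refine .of_bound (hC.div hG).aestronglyMeasurable ε⁻¹ (ae_of_all _ fun ω => ?_)
  obtain ⟨h₀, h₁⟩ := div_mem_Icc_zero_inv hC01 hε hGε ω
  rwa [Real.norm_eq_abs, abs_of_nonneg h₀]

variable [StandardBorelSpace Ω]

lemma condExp_mul_indicator_eq_mul_of_condIndepFun {hm : m ≤ mΩ} (hC : Measurable C)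
    (hC01 : ∀ ω, C ω = 0 ∨ C ω = 1) (hA : Measurable A) (hCA : CondIndepFun m hm C A μ)
    {t : Set β} (ht : MeasurableSet t) :
    μ[C * (A ⁻¹' t).indicator 1 | m] =ᵐ[μ] μ[C | m] * μ⟦A ⁻¹' t | m⟧ := by
  rw [← indicator_preimage_one_eq_self hC01, ← inter_indicator_one]
  exact (condIndepFun_iff_condExp_inter_preimage_eq_mul hC hA).1 hCA {1} t
    (measurableSet_singleton 1) ht

lemma setIntegral_inter_preimage_div_eq_measureReal {hm : m ≤ mΩ} (hC : Measurable C)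
    (hC01 : ∀ ω, C ω = 0 ∨ C ω = 1) (hA : Measurable A) (hCA : CondIndepFun m hm C A μ)
    (hG : Measurable[m] G) (hε : 0 < ε) (hGε : ∀ ω, ε ≤ G ω) (hCG : μ[C | m] =ᵐ[μ] G)
    {S : Set Ω} (hS : MeasurableSet[m] S) {t : Set β} (ht : MeasurableSet t) :
    ∫ ω in S ∩ A ⁻¹' t, C ω / G ω ∂μ = μ.real (S ∩ A ⁻¹' t) := by
  set I : Ω → ℝ := (A ⁻¹' t).indicator 1
  have hI : Measurable I := measurable_one.indicator (hA ht)
  have hCI : Integrable (C * I) μ := by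
    refine .of_bound (hC.mul hI).aestronglyMeasurable 1 (ae_of_all _ fun ω => ?_)
    rcases hC01 ω with h | h <;> by_cases hω : ω ∈ A ⁻¹' t <;> simp [I, h, hω]
  have hGinv : Measurable[m] G⁻¹ := hG.inv
  have hGinv_le : ∀ ω, ‖G⁻¹ ω‖ ≤ ε⁻¹ := fun ω => by
    have hGω : 0 < G ω := hε.trans_le (hGε ω)
    simpa [abs_of_pos hGω] using inv_anti₀ hε (hGε ω)
  have hint : Integrable (G⁻¹ * (C * I)) μ :=
    hCI.bdd_mul (hGinv.mono hm le_rfl).aestronglyMeasurable (ae_of_all _ hGinv_le)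
  calc ∫ ω in S ∩ A ⁻¹' t, C ω / G ω ∂μ
      = ∫ ω in S, (G⁻¹ * (C * I)) ω ∂μ := by
        rw [← setIntegral_indicator (hA ht)]
        refine setIntegral_congr_fun (hm S hS) fun ω _ => ?_
        by_cases hω : ω ∈ A ⁻¹' t <;> simp [I, hω, div_eq_inv_mul]
    _ = ∫ ω in S, μ[G⁻¹ * (C * I) | m] ω ∂μ := (setIntegral_condExp hm hint hS).symm
    _ = ∫ ω in S, (μ⟦A ⁻¹' t | m⟧) ω ∂μ := by
        refine setIntegral_congr_ae (hm S hS) ?_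
        filter_upwards [condExp_mul_of_stronglyMeasurable_left hGinv.stronglyMeasurable hint hCI,
          condExp_mul_indicator_eq_mul_of_condIndepFun hC hC01 hA hCA ht, hCG] with ω h₁ h₂ h₃ _
        have hGω : G ω ≠ 0 := (hε.trans_le (hGε ω)).ne'
        simp only [Pi.mul_apply, Pi.inv_apply] at h₁ h₂
        rw [h₁, h₂, h₃, inv_mul_cancel_left₀ hGω]
    _ = ∫ ω in S, I ω ∂μ := setIntegral_condExp hm ((integrable_const 1).indicator (hA ht)) hS
    _ = μ.real (S ∩ A ⁻¹' t) := by
        rw [setIntegral_indicator (hA ht)]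
        simp

lemma withDensity_div_apply_inter_preimage {hm : m ≤ mΩ} (hC : Measurable C)
    (hC01 : ∀ ω, C ω = 0 ∨ C ω = 1) (hA : Measurable A) (hCA : CondIndepFun m hm C A μ)
    (hG : Measurable[m] G) (hε : 0 < ε) (hGε : ∀ ω, ε ≤ G ω) (hCG : μ[C | m] =ᵐ[μ] G)
    {S : Set Ω} (hS : MeasurableSet[m] S) {t : Set β} (ht : MeasurableSet t) :
    μ.withDensity (fun ω => ENNReal.ofReal (C ω / G ω)) (S ∩ A ⁻¹' t) = μ (S ∩ A ⁻¹' t) := by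
  rw [withDensity_apply _ ((hm S hS).inter (hA ht)), ← ofReal_integral_eq_lintegral_ofReal
    (integrable_div_of_zero_or_one hC hC01 (hG.mono hm le_rfl) hε hGε).integrableOn
    (ae_of_all _ fun ω => (div_mem_Icc_zero_inv hC01 hε hGε ω).1),
    setIntegral_inter_preimage_div_eq_measureReal hC hC01 hA hCA hG hε hGε hCG hS ht,
    ofReal_measureReal]

theorem map_withDensity_div_eq_map {U : Ω → α} (hU : Measurable U) (hC : Measurable C)
    (hC01 : ∀ ω, C ω = 0 ∨ C ω = 1) (hA : Measurable A)
    (hCA : CondIndepFun (MeasurableSpace.comap U inferInstance) hU.comap_le C A μ)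
    (hG : Measurable[MeasurableSpace.comap U inferInstance] G) (hε : 0 < ε)
    (hGε : ∀ ω, ε ≤ G ω) (hCG : μ[C | MeasurableSpace.comap U inferInstance] =ᵐ[μ] G) :
    (μ.withDensity fun ω => ENNReal.ofReal (C ω / G ω)).map (fun ω => (U ω, A ω))
      = μ.map (fun ω => (U ω, A ω)) := by
  have hT : Measurable fun ω => (U ω, A ω) := hU.prodMk hA
  have : IsFiniteMeasure (μ.withDensity fun ω => ENNReal.ofReal (C ω / G ω)) :=
    isFiniteMeasure_withDensity_ofReal
      (integrable_div_of_zero_or_one hC hC01 (hG.mono hU.comap_le le_rfl) hε hGε).2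
  refine Measure.ext_prod fun {s t} hs ht => ?_
  rw [Measure.map_apply hT (hs.prod ht), Measure.map_apply hT (hs.prod ht), mk_preimage_prod]
  exact withDensity_div_apply_inter_preimage hC hC01 hA hCA hG hε hGε hCG ⟨s, hs, rfl⟩ ht

end InverseProbabilityWeighting

lemma integral_mul_comp_eq_of_map_withDensity_eq {Ω γ : Type*} [MeasurableSpace Ω]
    [MeasurableSpace γ] {μ : Measure Ω} {D : Ω → ℝ} (hD : Measurable D) (hD0 : ∀ ω, 0 ≤ D ω)
    {T : Ω → γ} (hT : Measurable T)
    (h : (μ.withDensity fun ω => ENNReal.ofReal (D ω)).map T = μ.map T)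
    {F : γ → ℝ} (hF : Measurable F) :
    ∫ ω, D ω * F (T ω) ∂μ = ∫ ω, F (T ω) ∂μ := by
  rw [← integral_map hT.aemeasurable hF.aestronglyMeasurable, ← h,
    integral_map hT.aemeasurable hF.aestronglyMeasurable,
    integral_withDensity_eq_integral_toReal_smul hD.ennreal_ofReal
      (ae_of_all _ fun _ => ENNReal.ofReal_lt_top)]
  simp [ENNReal.toReal_ofReal (hD0 _)]

theorem ipsw_identity_general
    {Ω 𝒲 : Type*} [MeasurableSpace Ω] [StandardBorelSpace Ω]
    [MeasurableSpace 𝒲]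
    (P : Measure Ω) [IsProbabilityMeasure P]
    (W : Ω → 𝒲) (hW : Measurable W)
    (A : Ω → ℝ) (hA : Measurable A)
    (Y : Ω → ℝ) (hY : Measurable Y)
    (C : Ω → ℝ) (hC : Measurable C) (hC01 : ∀ ω, C ω = 0 ∨ C ω = 1)
    (g₀ : ℝ × 𝒲 → ℝ) (hg₀_meas : Measurable g₀)
    (ε : ℝ) (hε : 0 < ε) (hg₀_bd : ∀ x, ε ≤ g₀ x ∧ g₀ x ≤ 1)
    (hg₀_condexp :
      P[C | MeasurableSpace.comap (fun ω => (Y ω, W ω)) inferInstance]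
        =ᵐ[P] fun ω => g₀ (Y ω, W ω))
    (hCAR : CondIndepFun
      (MeasurableSpace.comap (fun ω => (Y ω, W ω)) inferInstance)
      ((hY.prodMk hW).comap_le) C A P)
    (f : 𝒲 × ℝ × ℝ → ℝ) (hf_meas : Measurable f) :
    ∫ ω, (C ω / g₀ (Y ω, W ω)) * f (W ω, A ω, Y ω) ∂P
      = ∫ ω, f (W ω, A ω, Y ω) ∂P := by
  have hU : Measurable fun ω => (Y ω, W ω) := hY.prodMk hW
  have hG : Measurable[MeasurableSpace.comap (fun ω => (Y ω, W ω)) inferInstance]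
      fun ω => g₀ (Y ω, W ω) := hg₀_meas.comp (comap_measurable _)
  have hgε : ∀ ω, ε ≤ g₀ (Y ω, W ω) := fun ω => (hg₀_bd _).1
  exact integral_mul_comp_eq_of_map_withDensity_eq (hC.div (hg₀_meas.comp hU))
    (fun ω => (div_mem_Icc_zero_inv hC01 hε hgε ω).1) (hU.prodMk hA)
    (map_withDensity_div_eq_map hU hC hC01 hA hCAR hG hε hgε hg₀_condexp)
    (hf_meas.comp (by fun_prop) : Measurable fun p : (ℝ × 𝒲) × ℝ => f (p.1.2, p.2, p.1.1))

/-- Inverse-probability-of-sampling identity under two-phase sampling with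
coarsening at random: `E[(C / g₀(Y,W)) f(W,A,Y)] = E[f(W,A,Y)]`. -/
theorem ipsw_identity
    {Ω 𝒲 : Type*} [MeasurableSpace Ω] [StandardBorelSpace Ω] [Nonempty Ω]
    [MeasurableSpace 𝒲]
    (P : Measure Ω) [IsProbabilityMeasure P]
    (W : Ω → 𝒲) (hW : Measurable W)
    (A : Ω → ℝ) (hA : Measurable A)
    (Y : Ω → ℝ) (hY : Measurable Y) (hY_int : Integrable Y P)
    (C : Ω → ℝ) (hC : Measurable C) (hC01 : ∀ ω, C ω = 0 ∨ C ω = 1)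
    (g₀ : ℝ × 𝒲 → ℝ) (hg₀_meas : Measurable g₀)
    (ε : ℝ) (hε : 0 < ε) (hg₀_bd : ∀ x, ε ≤ g₀ x ∧ g₀ x ≤ 1)
    (hg₀_condexp :
      P[C | MeasurableSpace.comap (fun ω => (Y ω, W ω)) inferInstance]
        =ᵐ[P] fun ω => g₀ (Y ω, W ω))
    (hCAR : CondIndepFun
      (MeasurableSpace.comap (fun ω => (Y ω, W ω)) inferInstance)
      ((hY.prodMk hW).comap_le) C A P)
    (f : 𝒲 × ℝ × ℝ → ℝ) (hf_meas : Measurable f) (hf_bd : ∃ M : ℝ, ∀ x, |f x| ≤ M) :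
    ∫ ω, (C ω / g₀ (Y ω, W ω)) * f (W ω, A ω, Y ω) ∂P
      = ∫ ω, f (W ω, A ω, Y ω) ∂P :=
  ipsw_identity_general P W hW A hA Y hY C hC hC01 g₀ hg₀_meas ε hε hg₀_bd hg₀_condexp hCAR f
    hf_meas
end

section
/- The observed-data efficient influence function for two-phase sampling has mean zero at the truth: with D^F(w, a, y) := H₀(a, w)(y − Q̄₀(a, w)) + Q̄₀(a + δ(w), w) − ψ₀ and G₀ : ℝ × 𝒲 → ℝ a bounded measurable function satisfying G₀(Y, W) = E[D^F(W, A, Y) ∣ σ(Y, W)] a.s., one has E[(C / g₀(Y, W)) D^F(W, A, Y) − (C / g₀(Y, W) − 1) G₀(Y, W)] = 0. -/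
/-!
Write the integrand as `(C / g₀) (D − G) + G` with `D = D^F(W, A, Y)` and `G = G₀(Y, W)`.
The tower property gives `E[G] = E[D]`, and `E[D] = 0`: the residual `Y − Q̄₀(A, W)` is
orthogonal to the `σ(A, W)`-measurable weight `H₀(A, W)`, and the shift term has mean `ψ₀`.
For the weighted term, conditional independence of `C` and `A` given `(Y, W)` makes the
laws of `(Y, W, A)` under `C · P` and under `E[C ∣ Y, W] · P` agree on rectangles, hence
everywhere; so `E[C φ(Y, W, A)] = E[g₀(Y, W) φ(Y, W, A)]` for every measurable `φ`, and
`E[(C / g₀)(D − G)] = E[D − G] = 0`.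
-/

open MeasureTheory ProbabilityTheory

theorem integral_mul_sub_condExp_eq_zero {Ω : Type*} {m m₀ : MeasurableSpace Ω}
    {μ : Measure Ω} [IsFiniteMeasure μ] (hm : m ≤ m₀) {h f : Ω → ℝ}
    (hh : StronglyMeasurable[m] h) (hh_bd : ∃ M, ∀ ω, |h ω| ≤ M) (hf : Integrable f μ) :
    ∫ ω, h ω * (f ω - μ[f | m] ω) ∂μ = 0 := by
  obtain ⟨M, hM⟩ := hh_bd
  have h_bd : ∀ᵐ ω ∂μ, ‖h ω‖ ≤ M := .of_forall hM
  have hh_meas : AEStronglyMeasurable h μ := (hh.mono hm).aestronglyMeasurable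
  have pull_out : ∫ ω, h ω * f ω ∂μ = ∫ ω, h ω * μ[f | m] ω ∂μ := by
    rw [← integral_condExp hm]
    exact integral_congr_ae (condExp_stronglyMeasurable_mul_of_bound hm hh hf M h_bd)
  simp_rw [mul_sub]
  rw [integral_sub (hf.bdd_mul hh_meas h_bd) (integrable_condExp.bdd_mul hh_meas h_bd),
    pull_out, sub_self]

section MissingAtRandom

variable {Ω β γ : Type*} {mΩ : MeasurableSpace Ω} [MeasurableSpace β] [MeasurableSpace γ]
  {P : Measure Ω}

theorem integral_map_withDensity_ofReal {V : Ω → γ} (hV : Measurable V) {f : Ω → ℝ}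
    (hf : Measurable f) (hf_nonneg : 0 ≤ᵐ[P] f) {φ : γ → ℝ} (hφ : Measurable φ) :
    ∫ x, φ x ∂(P.withDensity fun ω => ENNReal.ofReal (f ω)).map V
      = ∫ ω, f ω * φ (V ω) ∂P := by
  rw [integral_map hV.aemeasurable hφ.aestronglyMeasurable,
    integral_withDensity_eq_integral_toReal_smul hf.ennreal_ofReal
      (.of_forall fun _ => ENNReal.ofReal_lt_top)]
  refine integral_congr_ae (hf_nonneg.mono fun ω hω => ?_)
  simp [ENNReal.toReal_ofReal hω]

theorem map_withDensity_ofReal_apply {V : Ω → γ} (hV : Measurable V) {f : Ω → ℝ}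
    (hf : Integrable f P) (hf_nonneg : 0 ≤ᵐ[P] f) {S : Set γ} (hS : MeasurableSet S) :
    (P.withDensity fun ω => ENNReal.ofReal (f ω)).map V S
      = ENNReal.ofReal (∫ ω in V ⁻¹' S, f ω ∂P) := by
  rw [Measure.map_apply hV hS, withDensity_apply _ (hV hS),
    ofReal_integral_eq_lintegral_ofReal hf.restrict (ae_restrict_of_ae hf_nonneg)]

variable [StandardBorelSpace Ω] [IsFiniteMeasure P]
  {Z : Ω → γ} {X : Ω → β} {C : Ω → ℝ}

local notation "σ(" Z ")" => MeasurableSpace.comap Z inferInstance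

theorem setIntegral_prod_preimage_eq_setIntegral_condExp (hZ : Measurable Z) (hX : Measurable X)
    (hC : Measurable C) (hC01 : ∀ ω, C ω = 0 ∨ C ω = 1)
    (hCX : CondIndepFun σ(Z) hZ.comap_le C X P)
    {s : Set γ} {t : Set β} (hs : MeasurableSet s) (ht : MeasurableSet t) :
    ∫ ω in (fun ω => (Z ω, X ω)) ⁻¹' (s ×ˢ t), C ω ∂P
      = ∫ ω in (fun ω => (Z ω, X ω)) ⁻¹' (s ×ˢ t), P[C | σ(Z)] ω ∂P := by
  have hS : MeasurableSet[σ(Z)] (Z ⁻¹' s) := ⟨s, hs, rfl⟩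
  have hT : MeasurableSet (X ⁻¹' t) := hX ht
  have hC_ind : C = (C ⁻¹' {1}).indicator fun _ => 1 := by
    ext ω; rcases hC01 ω with h | h <;> simp [h]
  have hC_int : Integrable C P := by
    rw [hC_ind]; exact (integrable_const 1).indicator (hC (measurableSet_singleton 1))
  have h_factor : P[(X ⁻¹' t).indicator C | σ(Z)] =ᵐ[P] P[C | σ(Z)] * P⟦X ⁻¹' t | σ(Z)⟧ := by
    have h_ind : (X ⁻¹' t).indicator C = (C ⁻¹' {1} ∩ X ⁻¹' t).indicator fun _ => 1 := by
      rw [Set.inter_comm, ← Set.indicator_indicator, ← hC_ind]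
    have := (condIndepFun_iff_condExp_inter_preimage_eq_mul hC hX).mp hCX {1} t
      (measurableSet_singleton 1) ht
    rwa [← hC_ind, ← h_ind] at this
  have h_pullOut : P[(X ⁻¹' t).indicator (P[C | σ(Z)]) | σ(Z)]
      =ᵐ[P] P[C | σ(Z)] * P⟦X ⁻¹' t | σ(Z)⟧ := by
    have h_ind : (X ⁻¹' t).indicator (P[C | σ(Z)])
        = P[C | σ(Z)] * (X ⁻¹' t).indicator fun _ => 1 := by
      ext ω; by_cases hω : ω ∈ X ⁻¹' t <;> simp [hω]
    rw [h_ind]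
    exact condExp_mul_of_stronglyMeasurable_left stronglyMeasurable_condExp
      (h_ind ▸ integrable_condExp.indicator hT) ((integrable_const 1).indicator hT)
  simp only [Set.mk_preimage_prod]
  rw [← setIntegral_indicator hT, ← setIntegral_indicator hT,
    ← setIntegral_condExp hZ.comap_le (hC_int.indicator hT) hS,
    ← setIntegral_condExp (f := (X ⁻¹' t).indicator _) hZ.comap_le
      (integrable_condExp.indicator hT) hS]
  refine setIntegral_congr_ae (hZ.comap_le _ hS) ?_
  filter_upwards [h_factor, h_pullOut] with ω h₁ h₂ _ using h₁.trans h₂.symm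

theorem integral_mul_eq_integral_condExp_mul (hZ : Measurable Z) (hX : Measurable X)
    (hC : Measurable C) (hC01 : ∀ ω, C ω = 0 ∨ C ω = 1)
    (hCX : CondIndepFun σ(Z) hZ.comap_le C X P)
    {φ : γ × β → ℝ} (hφ : Measurable φ) :
    ∫ ω, C ω * φ (Z ω, X ω) ∂P
      = ∫ ω, P[C | σ(Z)] ω * φ (Z ω, X ω) ∂P := by
  have hV : Measurable fun ω => (Z ω, X ω) := hZ.prodMk hX
  have hC_nonneg : 0 ≤ᵐ[P] C := .of_forall fun ω => by rcases hC01 ω with h | h <;> simp [h]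
  have hC_int : Integrable C P := .of_bound hC.aestronglyMeasurable 1
    (.of_forall fun ω => by rcases hC01 ω with h | h <;> simp [h])
  have hCm_meas : Measurable (P[C | σ(Z)]) :=
    (stronglyMeasurable_condExp.mono hZ.comap_le).measurable
  have hCm_nonneg : 0 ≤ᵐ[P] P[C | σ(Z)] := condExp_nonneg hC_nonneg
  have : IsFiniteMeasure (P.withDensity fun ω => ENNReal.ofReal (C ω)) :=
    isFiniteMeasure_withDensity_ofReal hC_int.2
  have h_eq : (P.withDensity fun ω => ENNReal.ofReal (C ω)).map (fun ω => (Z ω, X ω))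
      = (P.withDensity fun ω => ENNReal.ofReal (P[C | σ(Z)] ω)).map (fun ω => (Z ω, X ω)) :=
    Measure.ext_prod fun hs ht => by
      rw [map_withDensity_ofReal_apply hV hC_int hC_nonneg (hs.prod ht),
        map_withDensity_ofReal_apply hV integrable_condExp hCm_nonneg (hs.prod ht),
        setIntegral_prod_preimage_eq_setIntegral_condExp hZ hX hC hC01 hCX hs ht]
  rw [← integral_map_withDensity_ofReal hV hC hC_nonneg hφ, h_eq,
    integral_map_withDensity_ofReal hV hCm_meas hCm_nonneg hφ]

theorem integral_augmentedIPW_eq_integral (hZ : Measurable Z) (hX : Measurable X)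
    (hC : Measurable C) (hC01 : ∀ ω, C ω = 0 ∨ C ω = 1)
    (hCX : CondIndepFun σ(Z) hZ.comap_le C X P)
    {g : γ → ℝ} (hg : Measurable g) {ε : ℝ} (hε : 0 < ε) (hg_ge : ∀ z, ε ≤ g z)
    (hCg : P[C | σ(Z)] =ᵐ[P] fun ω => g (Z ω))
    {D : γ × β → ℝ} (hD : Measurable D) (hD_int : Integrable (fun ω => D (Z ω, X ω)) P)
    {G : γ → ℝ} (hG : Measurable G)
    (hDG : P[fun ω => D (Z ω, X ω) | σ(Z)] =ᵐ[P] fun ω => G (Z ω)) :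
    ∫ ω, (C ω / g (Z ω) * D (Z ω, X ω) - (C ω / g (Z ω) - 1) * G (Z ω)) ∂P
      = ∫ ω, D (Z ω, X ω) ∂P := by
  have hg_pos : ∀ z, 0 < g z := fun z => hε.trans_le (hg_ge z)
  have hG_int : Integrable (fun ω => G (Z ω)) P := integrable_condExp.congr hDG
  have hG_mean : ∫ ω, G (Z ω) ∂P = ∫ ω, D (Z ω, X ω) ∂P := by
    rw [← integral_congr_ae hDG, integral_condExp hZ.comap_le]
  have hweight_bd : ∀ᵐ ω ∂P, ‖C ω / g (Z ω)‖ ≤ ε⁻¹ := .of_forall fun ω => by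
    rw [Real.norm_eq_abs, abs_div, abs_of_pos (hg_pos _), div_le_iff₀ (hg_pos _)]
    rcases hC01 ω with h | h <;> simp only [h, abs_zero, abs_one]
    · exact mul_nonneg (inv_nonneg.2 hε.le) (hg_pos _).le
    · rw [inv_mul_eq_div, one_le_div hε]; exact hg_ge _
  have hweighted_int : Integrable (fun ω => C ω / g (Z ω) * (D (Z ω, X ω) - G (Z ω))) P :=
    (hD_int.sub hG_int).bdd_mul (hC.div (hg.comp hZ)).aestronglyMeasurable hweight_bd
  have hweighted_mean : ∫ ω, C ω / g (Z ω) * (D (Z ω, X ω) - G (Z ω)) ∂P = 0 := by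
    have hΨ : Measurable fun p : γ × β => (D p - G p.1) / g p.1 := by fun_prop
    calc ∫ ω, C ω / g (Z ω) * (D (Z ω, X ω) - G (Z ω)) ∂P
        = ∫ ω, C ω * ((D (Z ω, X ω) - G (Z ω)) / g (Z ω)) ∂P := by
          congr 1; ext ω; ring
      _ = ∫ ω, g (Z ω) * ((D (Z ω, X ω) - G (Z ω)) / g (Z ω)) ∂P := by
          rw [integral_mul_eq_integral_condExp_mul hZ hX hC hC01 hCX hΨ]
          exact integral_congr_ae (hCg.mono fun ω h => by simp only [h])
      _ = ∫ ω, (D (Z ω, X ω) - G (Z ω)) ∂P := by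
          congr 1; ext ω; exact mul_div_cancel₀ _ (hg_pos _).ne'
      _ = 0 := by rw [integral_sub hD_int hG_int, hG_mean, sub_self]
  calc ∫ ω, (C ω / g (Z ω) * D (Z ω, X ω) - (C ω / g (Z ω) - 1) * G (Z ω)) ∂P
      = ∫ ω, (C ω / g (Z ω) * (D (Z ω, X ω) - G (Z ω)) + G (Z ω)) ∂P := by
        congr 1; ext ω; ring
    _ = ∫ ω, D (Z ω, X ω) ∂P := by
        rw [integral_add hweighted_int hG_int, hweighted_mean, zero_add, hG_mean]

end MissingAtRandom

def fullDataEIF {𝒲 : Type*} (H Q : ℝ × 𝒲 → ℝ) (δ : 𝒲 → ℝ) (ψ : ℝ)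
    (w : 𝒲) (a y : ℝ) : ℝ :=
  H (a, w) * (y - Q (a, w)) + Q (a + δ w, w) - ψ

section FullData

variable {Ω 𝒲 : Type*} [MeasurableSpace Ω] [MeasurableSpace 𝒲] {P : Measure Ω}
  {W : Ω → 𝒲} {A Y : Ω → ℝ} {H Q : ℝ × 𝒲 → ℝ} {δ : 𝒲 → ℝ}

theorem integrable_fullDataEIF_residual [IsFiniteMeasure P] (hW : Measurable W) (hA : Measurable A)
    (hY : Integrable Y P) (hH : Measurable H) (hH_bd : ∃ M, ∀ ω, |H (A ω, W ω)| ≤ M)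
    (hQ : Measurable Q) (hQ_bd : ∃ M, ∀ x, |Q x| ≤ M) :
    Integrable (fun ω => H (A ω, W ω) * (Y ω - Q (A ω, W ω))) P := by
  obtain ⟨MH, hMH⟩ := hH_bd
  obtain ⟨MQ, hMQ⟩ := hQ_bd
  have hAW : Measurable fun ω => (A ω, W ω) := hA.prodMk hW
  have hQ_int : Integrable (fun ω => Q (A ω, W ω)) P :=
    .of_bound (hQ.comp hAW).aestronglyMeasurable MQ (.of_forall fun _ => hMQ _)
  exact (hY.sub hQ_int).bdd_mul (hH.comp hAW).aestronglyMeasurable (.of_forall hMH)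

theorem integrable_fullDataEIF_shift [IsFiniteMeasure P] (hW : Measurable W) (hA : Measurable A)
    (hQ : Measurable Q) (hQ_bd : ∃ M, ∀ x, |Q x| ≤ M) (hδ : Measurable δ) :
    Integrable (fun ω => Q (A ω + δ (W ω), W ω)) P := by
  obtain ⟨M, hM⟩ := hQ_bd
  exact .of_bound (hQ.comp ((hA.add (hδ.comp hW)).prodMk hW)).aestronglyMeasurable M
    (.of_forall fun _ => hM _)

theorem integrable_fullDataEIF [IsFiniteMeasure P] (hW : Measurable W) (hA : Measurable A)
    (hY : Integrable Y P) (hH : Measurable H) (hH_bd : ∃ M, ∀ ω, |H (A ω, W ω)| ≤ M)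
    (hQ : Measurable Q) (hQ_bd : ∃ M, ∀ x, |Q x| ≤ M) (hδ : Measurable δ) (ψ : ℝ) :
    Integrable (fun ω => fullDataEIF H Q δ ψ (W ω) (A ω) (Y ω)) P :=
  ((integrable_fullDataEIF_residual hW hA hY hH hH_bd hQ hQ_bd).add
    (integrable_fullDataEIF_shift hW hA hQ hQ_bd hδ)).sub (integrable_const ψ)

theorem integral_fullDataEIF_eq_zero [IsProbabilityMeasure P] (hW : Measurable W)
    (hA : Measurable A) (hY : Integrable Y P) (hH : Measurable H)
    (hH_bd : ∃ M, ∀ ω, |H (A ω, W ω)| ≤ M) (hQ : Measurable Q)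
    (hQ_bd : ∃ M, ∀ x, |Q x| ≤ M) (hδ : Measurable δ)
    (hQY : P[Y | MeasurableSpace.comap (fun ω => (A ω, W ω)) inferInstance]
      =ᵐ[P] fun ω => Q (A ω, W ω)) :
    ∫ ω, fullDataEIF H Q δ (∫ ω', Q (A ω' + δ (W ω'), W ω') ∂P) (W ω) (A ω) (Y ω) ∂P
      = 0 := by
  have hresidual_int := integrable_fullDataEIF_residual hW hA hY hH hH_bd hQ hQ_bd
  have hshift_int := integrable_fullDataEIF_shift (P := P) hW hA hQ hQ_bd hδ
  have hresidual_mean : ∫ ω, H (A ω, W ω) * (Y ω - Q (A ω, W ω)) ∂P = 0 := by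
    rw [← integral_mul_sub_condExp_eq_zero (hA.prodMk hW).comap_le
      (hH.comp (measurable_iff_comap_le.mpr le_rfl)).stronglyMeasurable hH_bd hY]
    exact integral_congr_ae (hQY.mono fun ω h => by simp only [h, Function.comp_apply])
  simp only [fullDataEIF]
  rw [integral_sub (by exact hresidual_int.add hshift_int) (integrable_const _),
    integral_add hresidual_int hshift_int, hresidual_mean, integral_const]
  simp

end FullData

theorem observed_data_eif_mean_zero_general
    {Ω 𝒲 : Type*} [MeasurableSpace Ω] [StandardBorelSpace Ω]
    [MeasurableSpace 𝒲]
    (P : Measure Ω) [IsProbabilityMeasure P]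
    (W : Ω → 𝒲) (hW : Measurable W)
    (A : Ω → ℝ) (hA : Measurable A)
    (Y : Ω → ℝ) (hY : Measurable Y) (hY_bd : ∃ M : ℝ, ∀ ω, |Y ω| ≤ M)
    (q₀ : ℝ × 𝒲 → ℝ) (hq₀_meas : Measurable q₀)
    (Qbar₀ : ℝ × 𝒲 → ℝ) (hQbar₀_meas : Measurable Qbar₀)
    (hQbar₀_bd : ∃ M : ℝ, ∀ x, |Qbar₀ x| ≤ M)
    (hQbar₀_condexp :
      P[Y | MeasurableSpace.comap (fun ω => (A ω, W ω)) inferInstance]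
        =ᵐ[P] fun ω => Qbar₀ (A ω, W ω))
    (δ : 𝒲 → ℝ) (hδ : Measurable δ)
    (ψ₀ : ℝ) (hψ₀ : ψ₀ = ∫ ω, Qbar₀ (A ω + δ (W ω), W ω) ∂P)
    (H₀ : ℝ × 𝒲 → ℝ)
    (hH₀ : ∀ a w, H₀ (a, w) = q₀ (a - δ w, w) / q₀ (a, w))
    (hH₀_bd : ∃ M : ℝ, ∀ ω, |H₀ (A ω, W ω)| ≤ M)
    (C : Ω → ℝ) (hC : Measurable C) (hC01 : ∀ ω, C ω = 0 ∨ C ω = 1)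
    (g₀ : ℝ × 𝒲 → ℝ) (hg₀_meas : Measurable g₀)
    (ε : ℝ) (hε : 0 < ε) (hg₀_bd : ∀ x, ε ≤ g₀ x ∧ g₀ x ≤ 1)
    (hg₀_condexp :
      P[C | MeasurableSpace.comap (fun ω => (Y ω, W ω)) inferInstance]
        =ᵐ[P] fun ω => g₀ (Y ω, W ω))
    (hCAR : CondIndepFun
      (MeasurableSpace.comap (fun ω => (Y ω, W ω)) inferInstance)
      ((hY.prodMk hW).comap_le) C A P)
    (G₀ : ℝ × 𝒲 → ℝ) (hG₀_meas : Measurable G₀)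
    (hG₀_condexp :
      P[fun ω => H₀ (A ω, W ω) * (Y ω - Qbar₀ (A ω, W ω))
          + Qbar₀ (A ω + δ (W ω), W ω) - ψ₀
        | MeasurableSpace.comap (fun ω => (Y ω, W ω)) inferInstance]
        =ᵐ[P] fun ω => G₀ (Y ω, W ω)) :
    ∫ ω, ((C ω / g₀ (Y ω, W ω))
          * (H₀ (A ω, W ω) * (Y ω - Qbar₀ (A ω, W ω))
            + Qbar₀ (A ω + δ (W ω), W ω) - ψ₀)
        - (C ω / g₀ (Y ω, W ω) - 1) * G₀ (Y ω, W ω)) ∂P = 0 := by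
  have hH₀_meas : Measurable H₀ := by
    rw [show H₀ = fun x => q₀ (x.1 - δ x.2, x.2) / q₀ x from funext fun x => hH₀ x.1 x.2]
    fun_prop
  obtain ⟨MY, hMY⟩ := hY_bd
  have hY_int : Integrable Y P := .of_bound hY.aestronglyMeasurable MY (.of_forall hMY)
  have hD_meas : Measurable fun p : (ℝ × 𝒲) × ℝ =>
      fullDataEIF H₀ Qbar₀ δ ψ₀ p.1.2 p.2 p.1.1 := by
    unfold fullDataEIF; fun_prop
  rw [← integral_fullDataEIF_eq_zero hW hA hY_int hH₀_meas hH₀_bd hQbar₀_meas hQbar₀_bd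
    hδ hQbar₀_condexp, ← hψ₀]
  exact integral_augmentedIPW_eq_integral (hY.prodMk hW) hA hC hC01 hCAR hg₀_meas hε
    (fun x => (hg₀_bd x).1) hg₀_condexp hD_meas
    (integrable_fullDataEIF hW hA hY_int hH₀_meas hH₀_bd hQbar₀_meas hQbar₀_bd hδ ψ₀)
    hG₀_meas hG₀_condexp

/-- The observed-data efficient influence function for two-phase sampling has
mean zero at the truth:
`E[(C/g₀(Y,W)) D^F(W,A,Y) − (C/g₀(Y,W) − 1) G₀(Y,W)] = 0`, where
`D^F(w,a,y) = H₀(a,w)(y − Q̄₀(a,w)) + Q̄₀(a + δ(w), w) − ψ₀` and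
`G₀(Y,W) = E[D^F(W,A,Y) ∣ σ(Y,W)]` a.s. -/
theorem observed_data_eif_mean_zero
    {Ω 𝒲 : Type*} [MeasurableSpace Ω] [StandardBorelSpace Ω] [Nonempty Ω]
    [MeasurableSpace 𝒲]
    (P : Measure Ω) [IsProbabilityMeasure P]
    (W : Ω → 𝒲) (hW : Measurable W)
    (A : Ω → ℝ) (hA : Measurable A)
    (Y : Ω → ℝ) (hY : Measurable Y) (hY_bd : ∃ M : ℝ, ∀ ω, |Y ω| ≤ M)
    (q₀ : ℝ × 𝒲 → ℝ) (hq₀_meas : Measurable q₀)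
    (hq₀_nonneg : ∀ x, 0 ≤ q₀ x)
    (hq₀_density : ∀ f : ℝ × 𝒲 → ℝ, Measurable f → (∃ M : ℝ, ∀ x, |f x| ≤ M) →
      ∫ ω, f (A ω, W ω) ∂P = ∫ ω, (∫ a : ℝ, f (a, W ω) * q₀ (a, W ω)) ∂P)
    (Qbar₀ : ℝ × 𝒲 → ℝ) (hQbar₀_meas : Measurable Qbar₀)
    (hQbar₀_bd : ∃ M : ℝ, ∀ x, |Qbar₀ x| ≤ M)
    (hQbar₀_condexp :
      P[Y | MeasurableSpace.comap (fun ω => (A ω, W ω)) inferInstance]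
        =ᵐ[P] fun ω => Qbar₀ (A ω, W ω))
    (δ : 𝒲 → ℝ) (hδ : Measurable δ)
    (ψ₀ : ℝ) (hψ₀ : ψ₀ = ∫ ω, Qbar₀ (A ω + δ (W ω), W ω) ∂P)
    (hq₀_pos : ∀ x, 0 < q₀ x)
    (H₀ : ℝ × 𝒲 → ℝ)
    (hH₀ : ∀ a w, H₀ (a, w) = q₀ (a - δ w, w) / q₀ (a, w))
    (hH₀_bd : ∃ M : ℝ, ∀ ω, |H₀ (A ω, W ω)| ≤ M)
    (C : Ω → ℝ) (hC : Measurable C) (hC01 : ∀ ω, C ω = 0 ∨ C ω = 1)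
    (g₀ : ℝ × 𝒲 → ℝ) (hg₀_meas : Measurable g₀)
    (ε : ℝ) (hε : 0 < ε) (hg₀_bd : ∀ x, ε ≤ g₀ x ∧ g₀ x ≤ 1)
    (hg₀_condexp :
      P[C | MeasurableSpace.comap (fun ω => (Y ω, W ω)) inferInstance]
        =ᵐ[P] fun ω => g₀ (Y ω, W ω))
    (hCAR : CondIndepFun
      (MeasurableSpace.comap (fun ω => (Y ω, W ω)) inferInstance)
      ((hY.prodMk hW).comap_le) C A P)
    (G₀ : ℝ × 𝒲 → ℝ) (hG₀_meas : Measurable G₀) (hG₀_bd : ∃ M : ℝ, ∀ x, |G₀ x| ≤ M)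
    (hG₀_condexp :
      P[fun ω => H₀ (A ω, W ω) * (Y ω - Qbar₀ (A ω, W ω))
          + Qbar₀ (A ω + δ (W ω), W ω) - ψ₀
        | MeasurableSpace.comap (fun ω => (Y ω, W ω)) inferInstance]
        =ᵐ[P] fun ω => G₀ (Y ω, W ω)) :
    ∫ ω, ((C ω / g₀ (Y ω, W ω))
          * (H₀ (A ω, W ω) * (Y ω - Qbar₀ (A ω, W ω))
            + Qbar₀ (A ω + δ (W ω), W ω) - ψ₀)
        - (C ω / g₀ (Y ω, W ω) - 1) * G₀ (Y ω, W ω)) ∂P = 0 :=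
  observed_data_eif_mean_zero_general P W hW A hA Y hY hY_bd q₀ hq₀_meas Qbar₀ hQbar₀_meas hQbar₀_bd
    hQbar₀_condexp δ hδ ψ₀ hψ₀ H₀ hH₀ hH₀_bd C hC hC01 g₀ hg₀_meas ε hε hg₀_bd hg₀_condexp hCAR G₀
    hG₀_meas hG₀_condexp
end

section
/- Exact remainder for the two-phase sampling correction: let D^F : 𝒲 × ℝ × ℝ → ℝ be bounded measurable and let G̃ : ℝ × 𝒲 → ℝ be a bounded measurable function with G̃(Y, W) = E[D^F(W, A, Y) ∣ σ(Y, W)] a.s. Then for every measurable g : ℝ × 𝒲 → ℝ with ε' ≤ g ≤ 1 for some ε' > 0 and every bounded measurable G : ℝ × 𝒲 → ℝ, E[(C / g(Y, W)) D^F(W, A, Y) − (C / g(Y, W) − 1) G(Y, W)] = E[D^F(W, A, Y)] + E[((g₀(Y, W) − g(Y, W)) / g(Y, W)) · (G̃(Y, W) − G(Y, W))]. In particular the bias due to the sampling correction is a product of the errors in the sampling mechanism and in the conditional influence-function regression. -/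
open MeasureTheory ProbabilityTheory

/-!
Write `Z = (Y, W)`. Since `C` and `A` are conditionally independent given `Z`, conditioning `C`
on `(Z, A)` gives the same result as conditioning on `Z` alone, namely `g₀(Z)`; hence in
`E[C / g(Z) · (D^F - G(Z))]` the indicator `C` may be replaced by `g₀(Z)`, and conditioning on `Z`
then replaces `D^F` by `G̃(Z)`. What is left is the pointwise identity
`(g₀/g)(G̃ - G) + G = G̃ + ((g₀ - g)/g)(G̃ - G)` together with `E[D^F] = E[G̃(Z)]`.
-/

theorem integral_mul_eq_integral_mul_of_condExp_ae_eq {Ω : Type*} {m mΩ : MeasurableSpace Ω}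
    {μ : Measure Ω} [IsFiniteMeasure μ] (hm : m ≤ mΩ) {f f' h : Ω → ℝ} {c : ℝ}
    (hh : StronglyMeasurable[m] h) (hc : ∀ ω, |h ω| ≤ c) (hf : Integrable f μ)
    (hf' : μ[f | m] =ᵐ[μ] f') :
    ∫ ω, h ω * f ω ∂μ = ∫ ω, h ω * f' ω ∂μ :=
  calc ∫ ω, h ω * f ω ∂μ = ∫ ω, μ[h * f | m] ω ∂μ := (integral_condExp hm).symm
    _ = ∫ ω, h ω * f' ω ∂μ := integral_congr_ae <|
      (condExp_stronglyMeasurable_mul_of_bound hm hh hf c (ae_of_all _ hc)).trans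
        (Filter.EventuallyEq.rfl.mul hf')

theorem abs_div_le_div_of_abs_le_of_le {a b c ε : ℝ} (ha : |a| ≤ c) (hε : 0 < ε) (hb : ε ≤ b) :
    |a / b| ≤ c / ε := by
  rw [abs_div, abs_of_pos (hε.trans_le hb)]
  exact div_le_div₀ ((abs_nonneg a).trans ha) ha hε hb

section CondIndep

variable {Ω β γ : Type*} [MeasurableSpace Ω] [StandardBorelSpace Ω]
  [MeasurableSpace β] [StandardBorelSpace β] [Nonempty β] [MeasurableSpace γ]
  {μ : Measure Ω} [IsFiniteMeasure μ] {Z : Ω → γ} {A : Ω → β} {X : Ω → ℝ}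

theorem condExp_comap_prodMk_ae_eq_of_condIndepFun
    (hZ : Measurable Z) (hA : Measurable A) (hX : Measurable X) (hXi : Integrable X μ)
    (hXA : X ⟂ᵢ[Z, hZ; μ] A) :
    μ[X | MeasurableSpace.comap (fun ω => (Z ω, A ω)) inferInstance]
      =ᵐ[μ] μ[X | MeasurableSpace.comap Z inferInstance] := by
  have hcond := ae_of_ae_map (hZ.prodMk hA).aemeasurable
    ((condIndepFun_iff_condDistrib_prod_ae_eq_prodMkRight hX hA hZ).1 hXA.symm)
  filter_upwards [condExp_ae_eq_integral_condDistrib' (hZ.prodMk hA) hXi,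
    condExp_ae_eq_integral_condDistrib' hZ hXi, hcond] with ω hZAω hZω hcondω
  rw [hZAω, hZω, hcondω, Kernel.prodMkRight_apply]

theorem integral_mul_eq_integral_mul_condExp_of_condIndepFun
    (hZ : Measurable Z) (hA : Measurable A) (hX : Measurable X) (hXi : Integrable X μ)
    (hXA : X ⟂ᵢ[Z, hZ; μ] A) {F : γ × β → ℝ} {c : ℝ} (hF : Measurable F)
    (hFc : ∀ x, |F x| ≤ c) :
    ∫ ω, F (Z ω, A ω) * X ω ∂μ
      = ∫ ω, F (Z ω, A ω) * μ[X | MeasurableSpace.comap Z inferInstance] ω ∂μ :=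
  integral_mul_eq_integral_mul_of_condExp_ae_eq (hZ.prodMk hA).comap_le
    (hF.comp (comap_measurable _)).stronglyMeasurable (fun _ => hFc _) hXi
    (condExp_comap_prodMk_ae_eq_of_condIndepFun hZ hA hX hXi hXA)

theorem integral_div_mul_eq_of_condIndepFun
    (hZ : Measurable Z) (hA : Measurable A) (hX : Measurable X) (hXi : Integrable X μ)
    (hXA : X ⟂ᵢ[Z, hZ; μ] A) {p₀ p q : γ → ℝ} {D : γ × β → ℝ} {a b ε : ℝ} (hε : 0 < ε)
    (hp₀ : Measurable p₀) (hp₀_bd : ∀ z, |p₀ z| ≤ a)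
    (hXp₀ : μ[X | MeasurableSpace.comap Z inferInstance] =ᵐ[μ] fun ω => p₀ (Z ω))
    (hp : Measurable p) (hp_bd : ∀ z, ε ≤ p z) (hD : Measurable D) (hD_bd : ∀ x, |D x| ≤ b)
    (hDq : μ[fun ω => D (Z ω, A ω) | MeasurableSpace.comap Z inferInstance]
      =ᵐ[μ] fun ω => q (Z ω)) :
    ∫ ω, X ω / p (Z ω) * D (Z ω, A ω) ∂μ = ∫ ω, p₀ (Z ω) / p (Z ω) * q (Z ω) ∂μ :=
  calc ∫ ω, X ω / p (Z ω) * D (Z ω, A ω) ∂μ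
      = ∫ ω, (fun x => D x / p x.1) (Z ω, A ω) * X ω ∂μ :=
        integral_congr_ae <| ae_of_all _ fun ω => by ring
    _ = ∫ ω, (fun x => D x / p x.1) (Z ω, A ω) * p₀ (Z ω) ∂μ := by
        rw [integral_mul_eq_integral_mul_condExp_of_condIndepFun hZ hA hX hXi hXA
          (F := fun x => D x / p x.1) (by fun_prop)
          fun x => abs_div_le_div_of_abs_le_of_le (hD_bd x) hε (hp_bd x.1)]
        refine integral_congr_ae ?_
        filter_upwards [hXp₀] with ω h
        rw [h]
    _ = ∫ ω, (p₀ / p) (Z ω) * D (Z ω, A ω) ∂μ :=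
        integral_congr_ae <| ae_of_all _ fun ω => by simp only [Pi.div_apply]; ring
    _ = ∫ ω, p₀ (Z ω) / p (Z ω) * q (Z ω) ∂μ :=
        integral_mul_eq_integral_mul_of_condExp_ae_eq hZ.comap_le
          ((hp₀.div hp).comp (comap_measurable Z)).stronglyMeasurable
          (fun ω => abs_div_le_div_of_abs_le_of_le (hp₀_bd _) hε (hp_bd _))
          (.of_bound (Measurable.aestronglyMeasurable (by fun_prop)) b
            (ae_of_all _ fun ω => hD_bd _)) hDq

end CondIndep

theorem integral_div_mul_sub_eq_add_integral_remainder {Ω : Type*} [MeasurableSpace Ω]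
    {μ : Measure Ω} {c d p₀ p s t : Ω → ℝ} (hp : ∀ ω, p ω ≠ 0)
    (hcds : Integrable (fun ω => c ω / p ω * (d ω - s ω)) μ) (hs : Integrable s μ)
    (ht : Integrable t μ) (hpts : Integrable (fun ω => p₀ ω / p ω * (t ω - s ω)) μ)
    (hweighted : ∫ ω, c ω / p ω * (d ω - s ω) ∂μ = ∫ ω, p₀ ω / p ω * (t ω - s ω) ∂μ)
    (hdt : ∫ ω, d ω ∂μ = ∫ ω, t ω ∂μ) :
    ∫ ω, (c ω / p ω * d ω - (c ω / p ω - 1) * s ω) ∂μ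
      = ∫ ω, d ω ∂μ + ∫ ω, (p₀ ω - p ω) / p ω * (t ω - s ω) ∂μ := by
  have hts : Integrable (fun ω => t ω - s ω) μ := ht.sub hs
  have hremainder : ∫ ω, (p₀ ω - p ω) / p ω * (t ω - s ω) ∂μ
      = ∫ ω, p₀ ω / p ω * (t ω - s ω) ∂μ - (∫ ω, t ω ∂μ - ∫ ω, s ω ∂μ) := by
    rw [← integral_sub ht hs, ← integral_sub hpts hts]
    exact integral_congr_ae <| ae_of_all _ fun ω => by field_simp [hp ω]
  calc ∫ ω, (c ω / p ω * d ω - (c ω / p ω - 1) * s ω) ∂μ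
      = ∫ ω, (c ω / p ω * (d ω - s ω) + s ω) ∂μ :=
        integral_congr_ae <| ae_of_all _ fun ω => by ring
    _ = ∫ ω, d ω ∂μ + ∫ ω, (p₀ ω - p ω) / p ω * (t ω - s ω) ∂μ := by
        rw [integral_add hcds hs, hweighted, hdt, hremainder]; ring

theorem two_phase_sampling_exact_remainder_general
    {Ω 𝒲 : Type*} [MeasurableSpace Ω] [StandardBorelSpace Ω]
    [MeasurableSpace 𝒲]
    (P : Measure Ω) [IsProbabilityMeasure P]
    (W : Ω → 𝒲) (hW : Measurable W)
    (A : Ω → ℝ) (hA : Measurable A)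
    (Y : Ω → ℝ) (hY : Measurable Y)
    (C : Ω → ℝ) (hC : Measurable C) (hC01 : ∀ ω, C ω = 0 ∨ C ω = 1)
    (g₀ : ℝ × 𝒲 → ℝ) (hg₀_meas : Measurable g₀)
    (ε : ℝ) (hg₀_bd : ∀ x, ε ≤ g₀ x ∧ g₀ x ≤ 1)
    (hg₀_condexp :
      P[C | MeasurableSpace.comap (fun ω => (Y ω, W ω)) inferInstance]
        =ᵐ[P] fun ω => g₀ (Y ω, W ω))
    (hCAR : CondIndepFun
      (MeasurableSpace.comap (fun ω => (Y ω, W ω)) inferInstance)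
      ((hY.prodMk hW).comap_le) C A P)
    (DF : 𝒲 × ℝ × ℝ → ℝ) (hDF_meas : Measurable DF)
    (hDF_bd : ∃ M : ℝ, ∀ x, |DF x| ≤ M)
    (Gt : ℝ × 𝒲 → ℝ)
    (hGt_condexp :
      P[fun ω => DF (W ω, A ω, Y ω)
        | MeasurableSpace.comap (fun ω => (Y ω, W ω)) inferInstance]
        =ᵐ[P] fun ω => Gt (Y ω, W ω))
    (g : ℝ × 𝒲 → ℝ) (hg_meas : Measurable g)
    (ε' : ℝ) (hε' : 0 < ε') (hg_bd : ∀ x, ε' ≤ g x ∧ g x ≤ 1)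
    (G : ℝ × 𝒲 → ℝ) (hG_meas : Measurable G) (hG_bd : ∃ M : ℝ, ∀ x, |G x| ≤ M) :
    ∫ ω, ((C ω / g (Y ω, W ω)) * DF (W ω, A ω, Y ω)
        - (C ω / g (Y ω, W ω) - 1) * G (Y ω, W ω)) ∂P
      = (∫ ω, DF (W ω, A ω, Y ω) ∂P)
        + ∫ ω, ((g₀ (Y ω, W ω) - g (Y ω, W ω)) / g (Y ω, W ω))
            * (Gt (Y ω, W ω) - G (Y ω, W ω)) ∂P := by
  obtain ⟨M, hM⟩ := hDF_bd
  obtain ⟨K, hK⟩ := hG_bd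
  have hZ : Measurable fun ω => (Y ω, W ω) := hY.prodMk hW
  have hg₀_abs : ∀ x, |g₀ x| ≤ max |ε| |1| := fun x => abs_le_max_abs_abs (hg₀_bd x).1 (hg₀_bd x).2
  have hDG_bd : ∀ x : (ℝ × 𝒲) × ℝ, |DF (x.1.2, x.2, x.1.1) - G x.1| ≤ M + K := fun x =>
    (abs_sub _ _).trans (add_le_add (hM _) (hK _))
  have hC_int : Integrable C P := .of_bound hC.aestronglyMeasurable 1 <| ae_of_all _ fun ω => by
    rcases hC01 ω with h | h <;> simp [h]
  have hDF_int : Integrable (fun ω => DF (W ω, A ω, Y ω)) P :=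
    .of_bound (Measurable.aestronglyMeasurable (by fun_prop)) M (ae_of_all _ fun ω => hM _)
  have hG_int : Integrable (fun ω => G (Y ω, W ω)) P :=
    .of_bound (Measurable.aestronglyMeasurable (by fun_prop)) K (ae_of_all _ fun ω => hK _)
  have hGt_int : Integrable (fun ω => Gt (Y ω, W ω)) P := integrable_condExp.congr hGt_condexp
  have hDG_condexp : P[fun ω => DF (W ω, A ω, Y ω) - G (Y ω, W ω)
      | MeasurableSpace.comap (fun ω => (Y ω, W ω)) inferInstance]
      =ᵐ[P] fun ω => Gt (Y ω, W ω) - G (Y ω, W ω) :=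
    (condExp_sub hDF_int hG_int _).trans <| hGt_condexp.sub <|
      (condExp_of_stronglyMeasurable hZ.comap_le
        (hG_meas.comp (comap_measurable _)).stronglyMeasurable hG_int).eventuallyEq
  refine integral_div_mul_sub_eq_add_integral_remainder (fun ω => (hε'.trans_le (hg_bd _).1).ne')
    ?_ hG_int hGt_int ?_ ?_ ((integral_condExp hZ.comap_le).symm.trans
      (integral_congr_ae hGt_condexp))
  · refine (hC_int.mul_bdd (g := fun ω => (DF (W ω, A ω, Y ω) - G (Y ω, W ω)) / g (Y ω, W ω))
      (Measurable.aestronglyMeasurable (by fun_prop)) <| ae_of_all _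
      fun ω => abs_div_le_div_of_abs_le_of_le (hDG_bd ((Y ω, W ω), A ω)) hε' (hg_bd _).1).congr
      (ae_of_all _ fun ω => by ring)
  · exact (hGt_int.sub hG_int).bdd_mul (Measurable.aestronglyMeasurable (by fun_prop))
      (ae_of_all _ fun ω => abs_div_le_div_of_abs_le_of_le (hg₀_abs _) hε' (hg_bd _).1)
  · exact integral_div_mul_eq_of_condIndepFun hZ hA hC hC_int hCAR hε' hg₀_meas hg₀_abs
      hg₀_condexp hg_meas (fun x => (hg_bd x).1) (q := fun x => Gt x - G x) (by fun_prop)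
      hDG_bd hDG_condexp

/-- Exact remainder for the two-phase sampling correction: the bias due to the
sampling correction is a product of the errors in the sampling mechanism and in
the conditional influence-function regression. -/
theorem two_phase_sampling_exact_remainder
    {Ω 𝒲 : Type*} [MeasurableSpace Ω] [StandardBorelSpace Ω] [Nonempty Ω]
    [MeasurableSpace 𝒲]
    (P : Measure Ω) [IsProbabilityMeasure P]
    (W : Ω → 𝒲) (hW : Measurable W)
    (A : Ω → ℝ) (hA : Measurable A)
    (Y : Ω → ℝ) (hY : Measurable Y)
    (C : Ω → ℝ) (hC : Measurable C) (hC01 : ∀ ω, C ω = 0 ∨ C ω = 1)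
    (g₀ : ℝ × 𝒲 → ℝ) (hg₀_meas : Measurable g₀)
    (ε : ℝ) (hε : 0 < ε) (hg₀_bd : ∀ x, ε ≤ g₀ x ∧ g₀ x ≤ 1)
    (hg₀_condexp :
      P[C | MeasurableSpace.comap (fun ω => (Y ω, W ω)) inferInstance]
        =ᵐ[P] fun ω => g₀ (Y ω, W ω))
    (hCAR : CondIndepFun
      (MeasurableSpace.comap (fun ω => (Y ω, W ω)) inferInstance)
      ((hY.prodMk hW).comap_le) C A P)
    (DF : 𝒲 × ℝ × ℝ → ℝ) (hDF_meas : Measurable DF)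
    (hDF_bd : ∃ M : ℝ, ∀ x, |DF x| ≤ M)
    (Gt : ℝ × 𝒲 → ℝ) (hGt_meas : Measurable Gt) (hGt_bd : ∃ M : ℝ, ∀ x, |Gt x| ≤ M)
    (hGt_condexp :
      P[fun ω => DF (W ω, A ω, Y ω)
        | MeasurableSpace.comap (fun ω => (Y ω, W ω)) inferInstance]
        =ᵐ[P] fun ω => Gt (Y ω, W ω))
    (g : ℝ × 𝒲 → ℝ) (hg_meas : Measurable g)
    (ε' : ℝ) (hε' : 0 < ε') (hg_bd : ∀ x, ε' ≤ g x ∧ g x ≤ 1)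
    (G : ℝ × 𝒲 → ℝ) (hG_meas : Measurable G) (hG_bd : ∃ M : ℝ, ∀ x, |G x| ≤ M) :
    ∫ ω, ((C ω / g (Y ω, W ω)) * DF (W ω, A ω, Y ω)
        - (C ω / g (Y ω, W ω) - 1) * G (Y ω, W ω)) ∂P
      = (∫ ω, DF (W ω, A ω, Y ω) ∂P)
        + ∫ ω, ((g₀ (Y ω, W ω) - g (Y ω, W ω)) / g (Y ω, W ω))
            * (Gt (Y ω, W ω) - G (Y ω, W ω)) ∂P :=
  two_phase_sampling_exact_remainder_general P W hW A hA Y hY C hC hC01 g₀ hg₀_meas ε hg₀_bd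
    hg₀_condexp hCAR DF hDF_meas hDF_bd Gt hGt_condexp g hg_meas ε' hε' hg_bd G hG_meas hG_bd
end

section
/- Multiple robustness, case (ii) with correct outcome regression: if the sampling mechanism g₀ and the outcome regression Q̄₀ are correct, then for every measurable H' : ℝ × 𝒲 → ℝ with H'(A, W) bounded (an arbitrary, possibly incorrect density-ratio weight) and every bounded measurable G : ℝ × 𝒲 → ℝ (an arbitrary, possibly incorrect conditional influence-function regression), E[(C / g₀(Y, W)) · (H'(A, W)(Y − Q̄₀(A, W)) + Q̄₀(A + δ(W), W) − ψ₀) − (C / g₀(Y, W) − 1) G(Y, W)] = 0. -/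
/-!
Write the integrand as `C · F(A, Y, W) + G(Y, W)` with `F = (D - G) / g₀`, where `D` is the
full-data influence function. Because `C` is conditionally independent of `A` given `(Y, W)` and
`g₀(Y, W) = E[C | Y, W]`, the weighted laws of `(A, Y, W)` with densities `C` and `g₀(Y, W)` agree
on rectangles, hence everywhere; so `E[C · F] = E[g₀ · F] = E[D - G]` and the `G` terms cancel.
Finally `E[D] = 0`: `H'(A, W)` is `σ(A, W)`-measurable and `Q̄₀(A, W) = E[Y | A, W]`, so the
residual term vanishes, and the shifted term integrates to `ψ₀`.
-/

open MeasureTheory ProbabilityTheory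

section
variable {Ω α β : Type*} {m mΩ : MeasurableSpace Ω} [MeasurableSpace α] [MeasurableSpace β]
  {P : Measure Ω}

lemma eq_indicator_preimage_one_of_zero_or_one {C : Ω → ℝ} (hC01 : ∀ ω, C ω = 0 ∨ C ω = 1) :
    C = (C ⁻¹' {1}).indicator fun _ => 1 := by
  funext ω
  rcases hC01 ω with h | h <;> simp [h]

lemma setIntegral_inter_eq_setIntegral_condExp_of_condIndepFun [StandardBorelSpace Ω]
    [IsFiniteMeasure P] {hm : m ≤ mΩ} {C : Ω → ℝ} {A : Ω → α}
    (hC : Measurable C) (hC01 : ∀ ω, C ω = 0 ∨ C ω = 1) (hA : Measurable A)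
    (hCA : CondIndepFun m hm C A P) {t : Set α} (ht : MeasurableSet t) {S : Set Ω}
    (hS : MeasurableSet[m] S) :
    ∫ ω in A ⁻¹' t ∩ S, C ω ∂P = ∫ ω in A ⁻¹' t ∩ S, P[C|m] ω ∂P := by
  have hC_eq := eq_indicator_preimage_one_of_zero_or_one hC01
  have hE : MeasurableSet (C ⁻¹' {1}) := hC (measurableSet_singleton 1)
  have hT : MeasurableSet (A ⁻¹' t) := hA ht
  have hprod := (condIndepFun_iff_condExp_inter_preimage_eq_mul hC hA).mp hCA {1} t
    (measurableSet_singleton 1) ht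
  rw [← hC_eq] at hprod
  have hmul : P[C|m] * (A ⁻¹' t).indicator (fun _ => 1) = (A ⁻¹' t).indicator P[C|m] := by
    funext ω; by_cases h : ω ∈ A ⁻¹' t <;> simp [h]
  have hpull : P[(A ⁻¹' t).indicator P[C|m] | m] =ᵐ[P] P[C|m] * P⟦A ⁻¹' t | m⟧ := by
    rw [← hmul]
    exact condExp_mul_of_stronglyMeasurable_left stronglyMeasurable_condExp
      (hmul ▸ integrable_condExp.indicator hT) ((integrable_const 1).indicator hT)
  calc ∫ ω in A ⁻¹' t ∩ S, C ω ∂P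
      = ∫ ω in S, (C ⁻¹' {1} ∩ A ⁻¹' t).indicator (fun _ => 1) ω ∂P := by
        rw [Set.inter_comm, ← setIntegral_indicator hT]
        conv_lhs => rw [hC_eq]
        rw [Set.indicator_indicator, Set.inter_comm]
    _ = ∫ ω in S, (P[C|m] * P⟦A ⁻¹' t | m⟧) ω ∂P := by
        rw [← setIntegral_condExp hm ((integrable_const 1).indicator (hE.inter hT)) hS]
        exact setIntegral_congr_ae (hm _ hS) (hprod.mono fun ω h _ => h)
    _ = ∫ ω in A ⁻¹' t ∩ S, P[C|m] ω ∂P := by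
        rw [← setIntegral_congr_ae (hm _ hS) (hpull.mono fun ω h _ => h),
          setIntegral_condExp hm (integrable_condExp.indicator hT) hS, Set.inter_comm,
          setIntegral_indicator hT]

lemma integral_map_withDensity_ofReal_s12 {γ : Type*} [MeasurableSpace γ] {D : Ω → ℝ}
    (hD : AEMeasurable D P) (hD0 : 0 ≤ᵐ[P] D) {Z : Ω → γ} (hZ : Measurable Z) {F : γ → ℝ}
    (hF : Measurable F) :
    ∫ x, F x ∂(P.withDensity fun ω => ENNReal.ofReal (D ω)).map Z = ∫ ω, D ω * F (Z ω) ∂P := by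
  rw [integral_map hZ.aemeasurable hF.aestronglyMeasurable,
    integral_withDensity_eq_integral_toReal_smul₀ hD.ennreal_ofReal
      (Filter.Eventually.of_forall fun _ => ENNReal.ofReal_lt_top)]
  refine integral_congr_ae (hD0.mono fun ω hω => ?_)
  simp [ENNReal.toReal_ofReal hω]

lemma map_withDensity_ofReal_prodMk_eq {A : Ω → α} {V : Ω → β} (hA : Measurable A)
    (hV : Measurable V) {D₁ D₂ : Ω → ℝ} (hD₁ : Integrable D₁ P) (hD₂ : Integrable D₂ P)
    (hD₁0 : 0 ≤ᵐ[P] D₁) (hD₂0 : 0 ≤ᵐ[P] D₂)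
    (h : ∀ ⦃s : Set α⦄ ⦃t : Set β⦄, MeasurableSet s → MeasurableSet t →
      ∫ ω in A ⁻¹' s ∩ V ⁻¹' t, D₁ ω ∂P = ∫ ω in A ⁻¹' s ∩ V ⁻¹' t, D₂ ω ∂P) :
    (P.withDensity fun ω => ENNReal.ofReal (D₁ ω)).map (fun ω => (A ω, V ω))
      = (P.withDensity fun ω => ENNReal.ofReal (D₂ ω)).map (fun ω => (A ω, V ω)) := by
  have := isFiniteMeasure_withDensity_ofReal hD₁.hasFiniteIntegral
  refine Measure.ext_prod fun {s t} hs ht => ?_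
  have hst : MeasurableSet (A ⁻¹' s ∩ V ⁻¹' t) := (hA hs).inter (hV ht)
  rw [Measure.map_apply (hA.prodMk hV) (hs.prod ht), Measure.map_apply (hA.prodMk hV)
    (hs.prod ht), Set.mk_preimage_prod, withDensity_apply _ hst, withDensity_apply _ hst,
    ← ofReal_integral_eq_lintegral_ofReal hD₁.integrableOn (ae_restrict_of_ae hD₁0),
    ← ofReal_integral_eq_lintegral_ofReal hD₂.integrableOn (ae_restrict_of_ae hD₂0), h hs ht]

theorem integral_mul_comp_eq_of_condIndepFun [StandardBorelSpace Ω] [IsFiniteMeasure P]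
    {V : Ω → β} (hV : Measurable V) {A : Ω → α} (hA : Measurable A) {C : Ω → ℝ}
    (hC : Measurable C) (hC01 : ∀ ω, C ω = 0 ∨ C ω = 1)
    (hCA : CondIndepFun (MeasurableSpace.comap V inferInstance) hV.comap_le C A P)
    {g : Ω → ℝ} (hCg : P[C | MeasurableSpace.comap V inferInstance] =ᵐ[P] g)
    {F : α × β → ℝ} (hF : Measurable F) :
    ∫ ω, C ω * F (A ω, V ω) ∂P = ∫ ω, g ω * F (A ω, V ω) ∂P := by
  have hC0 : 0 ≤ C := fun ω => by rcases hC01 ω with h | h <;> simp [h]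
  have hCi : Integrable C P :=
    .of_bound hC.aestronglyMeasurable 1
      (.of_forall fun ω => by rcases hC01 ω with h | h <;> simp [h])
  have hgi : Integrable g P := integrable_condExp.congr hCg
  have hg0 : 0 ≤ᵐ[P] g := by
    filter_upwards [condExp_nonneg (m := MeasurableSpace.comap V inferInstance)
      (.of_forall hC0), hCg] with ω h₁ h₂
    simpa [← h₂] using h₁
  have hrect : ∀ ⦃s : Set α⦄ ⦃t : Set β⦄, MeasurableSet s → MeasurableSet t →
      ∫ ω in A ⁻¹' s ∩ V ⁻¹' t, C ω ∂P = ∫ ω in A ⁻¹' s ∩ V ⁻¹' t, g ω ∂P := fun s t hs ht => by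
    rw [setIntegral_inter_eq_setIntegral_condExp_of_condIndepFun hC hC01 hA hCA hs ⟨t, ht, rfl⟩]
    exact setIntegral_congr_ae ((hA hs).inter (hV ht)) (hCg.mono fun ω h _ => h)
  rw [← integral_map_withDensity_ofReal_s12 hCi.aemeasurable (.of_forall hC0) (hA.prodMk hV) hF,
    ← integral_map_withDensity_ofReal_s12 hgi.aemeasurable hg0 (hA.prodMk hV) hF,
    map_withDensity_ofReal_prodMk_eq hA hV hCi hgi (.of_forall hC0) hg0 hrect]

lemma integral_mul_sub_condExp_eq_zero_s12 [IsFiniteMeasure P] (hm : m ≤ mΩ) {k X : Ω → ℝ}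
    (hk : StronglyMeasurable[m] k) {M : ℝ} (hkM : ∀ᵐ ω ∂P, ‖k ω‖ ≤ M) (hX : Integrable X P) :
    ∫ ω, k ω * (X ω - P[X|m] ω) ∂P = 0 := by
  have hXX : Integrable (X - P[X|m]) P := hX.sub integrable_condExp
  have hcenter : P[X - P[X|m] | m] =ᵐ[P] 0 := by
    filter_upwards [condExp_sub hX integrable_condExp m] with ω h
    rw [h, Pi.sub_apply, condExp_of_stronglyMeasurable hm stronglyMeasurable_condExp
      integrable_condExp, sub_self, Pi.zero_apply]
  calc ∫ ω, k ω * (X ω - P[X|m] ω) ∂P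
      = ∫ ω, P[k * (X - P[X|m]) | m] ω ∂P := (integral_condExp hm).symm
    _ = 0 := by
        refine integral_eq_zero_of_ae ?_
        filter_upwards [condExp_mul_of_stronglyMeasurable_left hk
          (hXX.bdd_mul (hk.mono hm).aestronglyMeasurable hkM) hXX, hcenter] with ω h₁ h₂
        rw [h₁, Pi.mul_apply, h₂, Pi.zero_apply, mul_zero]

theorem integral_ipcw_augmented_eq [StandardBorelSpace Ω] [IsFiniteMeasure P]
    {V : Ω → β} (hV : Measurable V) {A : Ω → α} (hA : Measurable A) {C : Ω → ℝ}
    (hC : Measurable C) (hC01 : ∀ ω, C ω = 0 ∨ C ω = 1)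
    (hCA : CondIndepFun (MeasurableSpace.comap V inferInstance) hV.comap_le C A P)
    {g : β → ℝ} (hg : Measurable g) {ε : ℝ} (hε : 0 < ε) (hgε : ∀ x, ε ≤ g x)
    (hCg : P[C | MeasurableSpace.comap V inferInstance] =ᵐ[P] fun ω => g (V ω))
    {D : α × β → ℝ} (hD : Measurable D) (hDi : Integrable (fun ω => D (A ω, V ω)) P)
    {G : β → ℝ} (hG : Measurable G) (hG_bd : ∃ M, ∀ x, |G x| ≤ M) :
    ∫ ω, (C ω / g (V ω) * D (A ω, V ω) - (C ω / g (V ω) - 1) * G (V ω)) ∂P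
      = ∫ ω, D (A ω, V ω) ∂P := by
  obtain ⟨M, hM⟩ := hG_bd
  have hg0 : ∀ x, g x ≠ 0 := fun x => (hε.trans_le (hgε x)).ne'
  have hGi : Integrable (fun ω => G (V ω)) P :=
    .of_bound (hG.comp hV).aestronglyMeasurable M (.of_forall fun ω => hM (V ω))
  have hweight : ∀ ω, ‖C ω / g (V ω)‖ ≤ 1 / ε := fun ω => by
    rw [Real.norm_eq_abs, abs_div, abs_of_pos (hε.trans_le (hgε _))]
    refine div_le_div₀ zero_le_one ?_ hε (hgε _)
    rcases hC01 ω with h | h <;> simp [h]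
  let F : α × β → ℝ := fun p => (D p - G p.2) / g p.2
  have hF : Measurable F := (hD.sub (hG.comp measurable_snd)).div (hg.comp measurable_snd)
  have hCF : Integrable (fun ω => C ω * F (A ω, V ω)) P := by
    refine ((hDi.sub hGi).bdd_mul (hC.div (hg.comp hV)).aestronglyMeasurable
      (.of_forall hweight)).congr (.of_forall fun ω => ?_)
    simp only [F, Pi.sub_apply, Pi.div_apply, Function.comp_apply]
    ring
  have hgF : ∀ ω, g (V ω) * F (A ω, V ω) = D (A ω, V ω) - G (V ω) := fun ω =>
    mul_div_cancel₀ _ (hg0 (V ω))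
  calc ∫ ω, (C ω / g (V ω) * D (A ω, V ω) - (C ω / g (V ω) - 1) * G (V ω)) ∂P
      = ∫ ω, (C ω * F (A ω, V ω) + G (V ω)) ∂P := by
        congr 1 with ω
        simp only [F]
        field_simp [hg0 (V ω)]
        ring
    _ = ∫ ω, g (V ω) * F (A ω, V ω) ∂P + ∫ ω, G (V ω) ∂P := by
        rw [integral_add hCF hGi, integral_mul_comp_eq_of_condIndepFun hV hA hC hC01 hCA hCg hF]
    _ = ∫ ω, D (A ω, V ω) ∂P := by
        simp_rw [hgF]
        rw [integral_sub hDi hGi, sub_add_cancel]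

end

theorem multiple_robustness_case_ii_outcome_general
    {Ω 𝒲 : Type*} [MeasurableSpace Ω] [StandardBorelSpace Ω]
    [MeasurableSpace 𝒲]
    (P : Measure Ω) [IsProbabilityMeasure P]
    (W : Ω → 𝒲) (hW : Measurable W)
    (A : Ω → ℝ) (hA : Measurable A)
    (Y : Ω → ℝ) (hY : Measurable Y) (hY_bd : ∃ M : ℝ, ∀ ω, |Y ω| ≤ M)
    (Qbar₀ : ℝ × 𝒲 → ℝ) (hQbar₀_meas : Measurable Qbar₀)
    (hQbar₀_bd : ∃ M : ℝ, ∀ x, |Qbar₀ x| ≤ M)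
    (hQbar₀_condexp :
      P[Y | MeasurableSpace.comap (fun ω => (A ω, W ω)) inferInstance]
        =ᵐ[P] fun ω => Qbar₀ (A ω, W ω))
    (δ : 𝒲 → ℝ) (hδ : Measurable δ)
    (ψ₀ : ℝ) (hψ₀ : ψ₀ = ∫ ω, Qbar₀ (A ω + δ (W ω), W ω) ∂P)
    (C : Ω → ℝ) (hC : Measurable C) (hC01 : ∀ ω, C ω = 0 ∨ C ω = 1)
    (g₀ : ℝ × 𝒲 → ℝ) (hg₀_meas : Measurable g₀)
    (ε : ℝ) (hε : 0 < ε) (hg₀_bd : ∀ x, ε ≤ g₀ x ∧ g₀ x ≤ 1)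
    (hg₀_condexp :
      P[C | MeasurableSpace.comap (fun ω => (Y ω, W ω)) inferInstance]
        =ᵐ[P] fun ω => g₀ (Y ω, W ω))
    (hCAR : CondIndepFun
      (MeasurableSpace.comap (fun ω => (Y ω, W ω)) inferInstance)
      ((hY.prodMk hW).comap_le) C A P)
    (H' : ℝ × 𝒲 → ℝ) (hH'_meas : Measurable H')
    (hH'_bd : ∃ M : ℝ, ∀ ω, |H' (A ω, W ω)| ≤ M)
    (G : ℝ × 𝒲 → ℝ) (hG_meas : Measurable G) (hG_bd : ∃ M : ℝ, ∀ x, |G x| ≤ M) :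
    ∫ ω, ((C ω / g₀ (Y ω, W ω))
          * (H' (A ω, W ω) * (Y ω - Qbar₀ (A ω, W ω))
            + Qbar₀ (A ω + δ (W ω), W ω) - ψ₀)
        - (C ω / g₀ (Y ω, W ω) - 1) * G (Y ω, W ω)) ∂P = 0 := by
  obtain ⟨MY, hMY⟩ := hY_bd
  obtain ⟨MQ, hMQ⟩ := hQbar₀_bd
  obtain ⟨MH, hMH⟩ := hH'_bd
  have hAW : Measurable fun ω => (A ω, W ω) := hA.prodMk hW
  have hYi : Integrable Y P := .of_bound hY.aestronglyMeasurable MY (.of_forall hMY)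
  have hQi : Integrable (fun ω => Qbar₀ (A ω, W ω)) P :=
    .of_bound (hQbar₀_meas.comp hAW).aestronglyMeasurable MQ (.of_forall fun ω => hMQ _)
  have hres : Integrable (fun ω => H' (A ω, W ω) * (Y ω - Qbar₀ (A ω, W ω))) P :=
    (hYi.sub hQi).bdd_mul (hH'_meas.comp hAW).aestronglyMeasurable (.of_forall hMH)
  have hshift : Integrable (fun ω => Qbar₀ (A ω + δ (W ω), W ω)) P :=
    .of_bound (hQbar₀_meas.comp ((hA.add (hδ.comp hW)).prodMk hW)).aestronglyMeasurable MQ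
      (.of_forall fun ω => hMQ _)
  have hres0 : ∫ ω, H' (A ω, W ω) * (Y ω - Qbar₀ (A ω, W ω)) ∂P = 0 := by
    rw [← integral_mul_sub_condExp_eq_zero_s12 hAW.comap_le
      (hH'_meas.comp (comap_measurable _)).stronglyMeasurable (.of_forall hMH) hYi]
    refine integral_congr_ae (hQbar₀_condexp.mono fun ω h => ?_)
    exact congrArg (fun q => H' (A ω, W ω) * (Y ω - q)) h.symm
  have hsum : Integrable
      (fun ω => H' (A ω, W ω) * (Y ω - Qbar₀ (A ω, W ω)) + Qbar₀ (A ω + δ (W ω), W ω)) P :=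
    hres.add hshift
  refine (integral_ipcw_augmented_eq (hY.prodMk hW) hA hC hC01 hCAR hg₀_meas hε
    (fun x => (hg₀_bd x).1) hg₀_condexp
    (D := fun p => H' (p.1, p.2.2) * (p.2.1 - Qbar₀ (p.1, p.2.2))
      + Qbar₀ (p.1 + δ p.2.2, p.2.2) - ψ₀) (by fun_prop)
    (hsum.sub (integrable_const ψ₀)) hG_meas hG_bd).trans ?_
  dsimp only
  rw [integral_sub hsum (integrable_const _), integral_add hres hshift, hres0, ← hψ₀]
  simp

/-- Multiple robustness, case (ii) with correct outcome regression: if the sampling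
mechanism `g₀` and the outcome regression `Q̄₀` are correct, the observed-data EIF
has mean zero for arbitrary density-ratio weight `H'` and arbitrary conditional
influence-function regression `G`. -/
theorem multiple_robustness_case_ii_outcome
    {Ω 𝒲 : Type*} [MeasurableSpace Ω] [StandardBorelSpace Ω] [Nonempty Ω]
    [MeasurableSpace 𝒲]
    (P : Measure Ω) [IsProbabilityMeasure P]
    (W : Ω → 𝒲) (hW : Measurable W)
    (A : Ω → ℝ) (hA : Measurable A)
    (Y : Ω → ℝ) (hY : Measurable Y) (hY_bd : ∃ M : ℝ, ∀ ω, |Y ω| ≤ M)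
    (Qbar₀ : ℝ × 𝒲 → ℝ) (hQbar₀_meas : Measurable Qbar₀)
    (hQbar₀_bd : ∃ M : ℝ, ∀ x, |Qbar₀ x| ≤ M)
    (hQbar₀_condexp :
      P[Y | MeasurableSpace.comap (fun ω => (A ω, W ω)) inferInstance]
        =ᵐ[P] fun ω => Qbar₀ (A ω, W ω))
    (δ : 𝒲 → ℝ) (hδ : Measurable δ)
    (ψ₀ : ℝ) (hψ₀ : ψ₀ = ∫ ω, Qbar₀ (A ω + δ (W ω), W ω) ∂P)
    (C : Ω → ℝ) (hC : Measurable C) (hC01 : ∀ ω, C ω = 0 ∨ C ω = 1)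
    (g₀ : ℝ × 𝒲 → ℝ) (hg₀_meas : Measurable g₀)
    (ε : ℝ) (hε : 0 < ε) (hg₀_bd : ∀ x, ε ≤ g₀ x ∧ g₀ x ≤ 1)
    (hg₀_condexp :
      P[C | MeasurableSpace.comap (fun ω => (Y ω, W ω)) inferInstance]
        =ᵐ[P] fun ω => g₀ (Y ω, W ω))
    (hCAR : CondIndepFun
      (MeasurableSpace.comap (fun ω => (Y ω, W ω)) inferInstance)
      ((hY.prodMk hW).comap_le) C A P)
    (H' : ℝ × 𝒲 → ℝ) (hH'_meas : Measurable H')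
    (hH'_bd : ∃ M : ℝ, ∀ ω, |H' (A ω, W ω)| ≤ M)
    (G : ℝ × 𝒲 → ℝ) (hG_meas : Measurable G) (hG_bd : ∃ M : ℝ, ∀ x, |G x| ≤ M) :
    ∫ ω, ((C ω / g₀ (Y ω, W ω))
          * (H' (A ω, W ω) * (Y ω - Qbar₀ (A ω, W ω))
            + Qbar₀ (A ω + δ (W ω), W ω) - ψ₀)
        - (C ω / g₀ (Y ω, W ω) - 1) * G (Y ω, W ω)) ∂P = 0 :=
  multiple_robustness_case_ii_outcome_general P W hW A hA Y hY hY_bd Qbar₀ hQbar₀_meas hQbar₀_bd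
    hQbar₀_condexp δ hδ ψ₀ hψ₀ C hC hC01 g₀ hg₀_meas ε hε hg₀_bd hg₀_condexp hCAR H' hH'_meas hH'_bd
    G hG_meas hG_bd
end

section
/- Multiple robustness, case (i) with correct outcome regression: let H' : ℝ × 𝒲 → ℝ be measurable with H'(A, W) bounded (an arbitrary density-ratio weight), define D(w, a, y) := H'(a, w)(y − Q̄₀(a, w)) + Q̄₀(a + δ(w), w) − ψ₀, and let G : ℝ × 𝒲 → ℝ be a bounded measurable function satisfying G(Y, W) = E[D(W, A, Y) ∣ σ(Y, W)] a.s. (the correctly specified conditional influence-function regression). Then for every measurable g : ℝ × 𝒲 → ℝ with ε' ≤ g ≤ 1 for some ε' > 0 (an arbitrary, possibly incorrect sampling mechanism), E[(C / g(Y, W)) D(W, A, Y) − (C / g(Y, W) − 1) G(Y, W)] = 0. -/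
/-!
Write the integrand as `C · g(Y,W)⁻¹ · (D − G(Y,W)) + G(Y,W)`. Since `G(Y,W) = E[D ∣ Y,W]`, the
second term has mean `E[D]`, and `E[D] = 0`: `Q̄₀` is the true outcome regression, so the residual
`Y − Q̄₀(A,W)` is orthogonal to the bounded `(A,W)`-measurable weight `H'(A,W)`, and the remaining
terms cancel by the definition of `ψ₀`. For the first term, conditional independence of `C` and `A`
given `(Y,W)` gives `E[C ∣ Y,W,A] = E[C ∣ Y,W]`, so `C` may be replaced by the `(Y,W)`-measurable
weight `E[C ∣ Y,W]`, to which the residual `D − E[D ∣ Y,W]` is orthogonal.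
-/

open MeasureTheory ProbabilityTheory MeasurableSpace
open scoped ENNReal

namespace MeasurableSpace

variable {Ω : Type*}

theorem isPiSystem_image2_inter (m₁ m₂ : MeasurableSpace Ω) :
    IsPiSystem (Set.image2 (· ∩ ·) {s | MeasurableSet[m₁] s} {t | MeasurableSet[m₂] t}) := by
  rintro _ ⟨s₁, hs₁, t₁, ht₁, rfl⟩ _ ⟨s₂, hs₂, t₂, ht₂, rfl⟩ -
  exact ⟨s₁ ∩ s₂, hs₁.inter hs₂, t₁ ∩ t₂, ht₁.inter ht₂, Set.inter_inter_inter_comm s₁ s₂ t₁ t₂⟩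

theorem sup_eq_generateFrom_image2_inter (m₁ m₂ : MeasurableSpace Ω) :
    m₁ ⊔ m₂ =
      generateFrom (Set.image2 (· ∩ ·) {s | MeasurableSet[m₁] s} {t | MeasurableSet[m₂] t}) := by
  refine le_antisymm (sup_le (fun s hs => ?_) (fun t ht => ?_)) (generateFrom_le ?_)
  · exact measurableSet_generateFrom ⟨s, hs, Set.univ, .univ, Set.inter_univ s⟩
  · exact measurableSet_generateFrom ⟨Set.univ, .univ, t, ht, Set.univ_inter t⟩
  · rintro _ ⟨s, hs, t, ht, rfl⟩
    exact (le_sup_left (b := m₂) s hs).inter (le_sup_right (a := m₁) t ht)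

end MeasurableSpace

namespace MeasureTheory

variable {Ω : Type*} {m mΩ : MeasurableSpace Ω} {μ : Measure Ω} {f g h : Ω → ℝ}

theorem memLp_top_of_exists_abs_le (hf : Measurable f) (hbdd : ∃ M, ∀ ω, |f ω| ≤ M) :
    MemLp f ∞ μ :=
  let ⟨M, hM⟩ := hbdd
  memLp_top_of_bound hf.aestronglyMeasurable M (ae_of_all _ hM)

theorem memLp_top_inv_of_le {ε : ℝ} (hf : Measurable f) (hε : 0 < ε) (hf_ge : ∀ ω, ε ≤ f ω) :
    MemLp (fun ω => (f ω)⁻¹) ∞ μ := by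
  refine memLp_top_of_exists_abs_le hf.inv ⟨ε⁻¹, fun ω => ?_⟩
  rw [abs_inv, abs_of_pos (hε.trans_le (hf_ge ω))]
  exact inv_anti₀ hε (hf_ge ω)

theorem memLp_top_of_forall_eq_zero_or_eq_one (hf : Measurable f)
    (hf01 : ∀ ω, f ω = 0 ∨ f ω = 1) : MemLp f ∞ μ :=
  memLp_top_of_exists_abs_le hf ⟨1, fun ω => by rcases hf01 ω with h | h <;> simp [h]⟩

theorem setIntegral_eq_of_isPiSystem (hm : m ≤ mΩ) {p : Set (Set Ω)} (h_eq : m = generateFrom p)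
    (hp : IsPiSystem p) (hf : Integrable f μ) (hg : Integrable g μ)
    (h_univ : ∫ x, f x ∂μ = ∫ x, g x ∂μ) (basic : ∀ t ∈ p, ∫ x in t, f x ∂μ = ∫ x in t, g x ∂μ)
    {t : Set Ω} (ht : MeasurableSet[m] t) : ∫ x in t, f x ∂μ = ∫ x in t, g x ∂μ := by
  induction t, ht using induction_on_inter h_eq hp with
  | empty => simp
  | basic t ht => exact basic t ht
  | compl t ht ih =>
    have hf' := integral_add_compl (hm t ht) hf
    have hg' := integral_add_compl (hm t ht) hg
    linarith
  | iUnion t hdisj ht ih =>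
    rw [integral_iUnion (fun i => hm _ (ht i)) hdisj hf.integrableOn,
      integral_iUnion (fun i => hm _ (ht i)) hdisj hg.integrableOn]
    exact tsum_congr ih

theorem integral_mul_sub_condExp_eq_zero (hm : m ≤ mΩ) [IsFiniteMeasure μ]
    (hh : StronglyMeasurable[m] h) (hh_bdd : MemLp h ∞ μ) (hf : Integrable f μ) :
    ∫ ω, h ω * (f ω - (μ[f|m]) ω) ∂μ = 0 := by
  have hres : Integrable (f - μ[f|m]) μ := hf.sub integrable_condExp
  have hres_condExp : μ[f - μ[f|m]|m] =ᵐ[μ] 0 := by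
    filter_upwards [condExp_sub hf (integrable_condExp (m := m) (f := f)) m,
      condExp_condExp_of_le (f := f) le_rfl hm] with ω h1 h2
    simp [h1, h2]
  rw [← integral_condExp hm]
  calc ∫ ω, (μ[h * (f - μ[f|m])|m]) ω ∂μ = ∫ _, (0 : ℝ) ∂μ := by
        refine integral_congr_ae ?_
        filter_upwards [condExp_mul_of_stronglyMeasurable_left hh
          (hres.mul_of_top_right hh_bdd) hres, hres_condExp] with ω h1 h2
        simp [h1, h2]
    _ = 0 := integral_zero _ _

end MeasureTheory

namespace ProbabilityTheory

variable {Ω : Type*} {m' m₁ m₂ mΩ : MeasurableSpace Ω} [StandardBorelSpace Ω] {μ : Measure Ω}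
  [IsFiniteMeasure μ]

theorem condExp_indicator_sup_ae_eq_of_condIndep (hm' : m' ≤ mΩ) (hm₁ : m₁ ≤ mΩ) (hm₂ : m₂ ≤ mΩ)
    (hind : CondIndep m' m₁ m₂ hm' μ) {s : Set Ω} (hs : MeasurableSet[m₁] s) :
    μ⟦s | m' ⊔ m₂⟧ =ᵐ[μ] μ⟦s | m'⟧ := by
  have hm : m' ⊔ m₂ ≤ mΩ := sup_le hm' hm₂
  have hs' : MeasurableSet s := hm₁ s hs
  have h1s : Integrable (s.indicator fun _ => (1 : ℝ)) μ := (integrable_const 1).indicator hs'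
  have hsm : StronglyMeasurable[m' ⊔ m₂] (μ⟦s | m'⟧) :=
    stronglyMeasurable_condExp.mono le_sup_left
  refine (ae_eq_condExp_of_forall_setIntegral_eq hm h1s
    (fun _ _ _ => integrable_condExp.integrableOn) (fun t ht _ => ?_)
    hsm.aestronglyMeasurable).symm
  refine setIntegral_eq_of_isPiSystem hm (sup_eq_generateFrom_image2_inter m' m₂)
    (isPiSystem_image2_inter m' m₂) integrable_condExp h1s (integral_condExp hm') ?_ ht
  rintro _ ⟨u, hu, v, hv, rfl⟩
  have hv' : MeasurableSet v := hm₂ v hv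
  have hprod := (condIndep_iff m' m₁ m₂ hm' hm₁ hm₂ μ).1 hind s v hs hv
  calc ∫ x in u ∩ v, (μ⟦s | m'⟧) x ∂μ
      = ∫ x in u, (μ⟦s | m'⟧ * v.indicator fun _ => (1 : ℝ)) x ∂μ := by
        rw [Set.inter_comm, ← Measure.restrict_restrict hv', ← integral_indicator hv']
        congr 1 with x
        by_cases hx : x ∈ v <;> simp [hx]
    _ = ∫ x in u, (μ⟦s | m'⟧ * μ⟦v | m'⟧) x ∂μ := by
        have h1v : Integrable (v.indicator fun _ => (1 : ℝ)) μ := (integrable_const 1).indicator hv'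
        have hint : Integrable (μ⟦s | m'⟧ * v.indicator fun _ => (1 : ℝ)) μ :=
          integrable_condExp.mul_of_top_left ((memLp_top_const 1).indicator hv')
        rw [← setIntegral_condExp hm' hint hu]
        refine setIntegral_congr_ae (hm' u hu) ?_
        filter_upwards [condExp_mul_of_stronglyMeasurable_left stronglyMeasurable_condExp hint h1v]
          with x hx _
        exact hx
    _ = ∫ x in u, (μ⟦s ∩ v | m'⟧) x ∂μ :=
        setIntegral_congr_ae (hm' u hu) (hprod.mono fun x hx _ => hx.symm)
    _ = ∫ x in u ∩ v, s.indicator (fun _ => (1 : ℝ)) x ∂μ := by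
        rw [setIntegral_condExp hm' ((integrable_const 1).indicator (hs'.inter hv')) hu,
          Set.inter_comm u, ← Measure.restrict_restrict hv', ← integral_indicator hv',
          Set.indicator_indicator, Set.inter_comm]

variable {α β : Type*} [MeasurableSpace α] [MeasurableSpace β] {A : Ω → α} {Z : Ω → β}
  {C : Ω → ℝ} {φ : α × β → ℝ}

theorem integral_mul_mul_sub_condExp_eq_zero_of_condIndepFun (hA : Measurable A)
    (hZ : Measurable Z) (hC : Measurable C) (hC01 : ∀ ω, C ω = 0 ∨ C ω = 1)
    (hCA : CondIndepFun (MeasurableSpace.comap Z inferInstance) hZ.comap_le C A μ)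
    {w : β → ℝ} (hw : Measurable w) (hw_bdd : MemLp (fun ω => w (Z ω)) ∞ μ)
    (hφ : Measurable φ) (hφ_int : Integrable (fun ω => φ (A ω, Z ω)) μ) :
    ∫ ω, C ω * (w (Z ω) * (φ (A ω, Z ω)
      - (μ[fun ω => φ (A ω, Z ω)|MeasurableSpace.comap Z inferInstance]) ω)) ∂μ = 0 := by
  set mZ : MeasurableSpace Ω := MeasurableSpace.comap Z inferInstance
  set mZA : MeasurableSpace Ω := mZ ⊔ MeasurableSpace.comap A inferInstance
  set D : Ω → ℝ := fun ω => φ (A ω, Z ω)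
  set K : Ω → ℝ := fun ω => w (Z ω) * (D ω - (μ[D|mZ]) ω)
  have hmZ : mZ ≤ mΩ := hZ.comap_le
  have hA_sup : Measurable[mZA] A := (comap_measurable A).mono le_sup_right le_rfl
  have hZ_sup : Measurable[mZA] Z := (comap_measurable Z).mono le_sup_left le_rfl
  have hK_meas : StronglyMeasurable[mZA] K :=
    (hw.comp hZ_sup).stronglyMeasurable.mul ((hφ.comp (hA_sup.prodMk hZ_sup)).stronglyMeasurable.sub
      (stronglyMeasurable_condExp.mono le_sup_left))
  have hK_int : Integrable K μ := (hφ_int.sub integrable_condExp).mul_of_top_right hw_bdd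
  have hC_bdd : MemLp C ∞ μ := memLp_top_of_forall_eq_zero_or_eq_one hC hC01
  have hC_condExp : μ[C|mZA] =ᵐ[μ] μ[C|mZ] := by
    have hC_ind : C = (C ⁻¹' {1}).indicator fun _ => 1 := by
      ext ω
      rcases hC01 ω with h | h <;> simp [h]
    rw [hC_ind]
    exact condExp_indicator_sup_ae_eq_of_condIndep hmZ hC.comap_le hA.comap_le
      ((condIndepFun_iff_condIndep _ _ _ _ _).1 hCA) ⟨{1}, measurableSet_singleton 1, rfl⟩
  calc ∫ ω, C ω * K ω ∂μ = ∫ ω, (μ[C|mZA] * K) ω ∂μ := by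
        rw [← integral_condExp (sup_le hmZ hA.comap_le)]
        exact integral_congr_ae (condExp_mul_of_stronglyMeasurable_right hK_meas
          (hK_int.mul_of_top_right hC_bdd) (hC_bdd.integrable le_top))
    _ = ∫ ω, (μ[C|mZ]) ω * w (Z ω) * (D ω - (μ[D|mZ]) ω) ∂μ := by
        refine integral_congr_ae ?_
        filter_upwards [hC_condExp] with ω hω
        simp only [Pi.mul_apply, hω, K]
        ring
    _ = 0 :=
        integral_mul_sub_condExp_eq_zero hmZ
          (stronglyMeasurable_condExp.mul (hw.comp (comap_measurable Z)).stronglyMeasurable)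
          (hw_bdd.mul (hC_bdd.condExp le_top)) hφ_int

theorem integral_aipw_eq_integral_of_condIndepFun (hA : Measurable A) (hZ : Measurable Z)
    (hC : Measurable C) (hC01 : ∀ ω, C ω = 0 ∨ C ω = 1)
    (hCA : CondIndepFun (MeasurableSpace.comap Z inferInstance) hZ.comap_le C A μ)
    {g : β → ℝ} (hg : Measurable g) (hg_bdd : MemLp (fun ω => (g (Z ω))⁻¹) ∞ μ)
    (hφ : Measurable φ) (hφ_int : Integrable (fun ω => φ (A ω, Z ω)) μ) {G : β → ℝ}
    (hG : μ[fun ω => φ (A ω, Z ω)|MeasurableSpace.comap Z inferInstance] =ᵐ[μ] fun ω => G (Z ω)) :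
    ∫ ω, (C ω / g (Z ω) * φ (A ω, Z ω) - (C ω / g (Z ω) - 1) * G (Z ω)) ∂μ
      = ∫ ω, φ (A ω, Z ω) ∂μ := by
  set mZ : MeasurableSpace Ω := MeasurableSpace.comap Z inferInstance
  set D : Ω → ℝ := fun ω => φ (A ω, Z ω)
  have hweighted_int : Integrable (fun ω => C ω * ((g (Z ω))⁻¹ * (D ω - (μ[D|mZ]) ω))) μ :=
    ((hφ_int.sub integrable_condExp).mul_of_top_right hg_bdd).mul_of_top_right
      (memLp_top_of_forall_eq_zero_or_eq_one hC hC01)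
  calc _ = ∫ ω, C ω * ((g (Z ω))⁻¹ * (D ω - (μ[D|mZ]) ω)) + (μ[D|mZ]) ω ∂μ := by
        refine integral_congr_ae ?_
        filter_upwards [hG] with ω hω
        rw [hω, div_eq_mul_inv]
        ring
    _ = ∫ ω, D ω ∂μ := by
        rw [integral_add hweighted_int integrable_condExp, integral_condExp hZ.comap_le,
          integral_mul_mul_sub_condExp_eq_zero_of_condIndepFun hA hZ hC hC01 hCA
            (w := fun z => (g z)⁻¹) hg.inv hg_bdd hφ hφ_int, zero_add]

end ProbabilityTheory

theorem multiple_robustness_case_i_outcome_general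
    {Ω 𝒲 : Type*} [MeasurableSpace Ω] [StandardBorelSpace Ω]
    [MeasurableSpace 𝒲]
    (P : Measure Ω) [IsProbabilityMeasure P]
    (W : Ω → 𝒲) (hW : Measurable W)
    (A : Ω → ℝ) (hA : Measurable A)
    (Y : Ω → ℝ) (hY : Measurable Y) (hY_bd : ∃ M : ℝ, ∀ ω, |Y ω| ≤ M)
    (Qbar₀ : ℝ × 𝒲 → ℝ) (hQbar₀_meas : Measurable Qbar₀)
    (hQbar₀_bd : ∃ M : ℝ, ∀ x, |Qbar₀ x| ≤ M)
    (hQbar₀_condexp :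
      P[Y | MeasurableSpace.comap (fun ω => (A ω, W ω)) inferInstance]
        =ᵐ[P] fun ω => Qbar₀ (A ω, W ω))
    (δ : 𝒲 → ℝ) (hδ : Measurable δ)
    (ψ₀ : ℝ) (hψ₀ : ψ₀ = ∫ ω, Qbar₀ (A ω + δ (W ω), W ω) ∂P)
    (C : Ω → ℝ) (hC : Measurable C) (hC01 : ∀ ω, C ω = 0 ∨ C ω = 1)
    (hCAR : CondIndepFun
      (MeasurableSpace.comap (fun ω => (Y ω, W ω)) inferInstance)
      ((hY.prodMk hW).comap_le) C A P)
    (H' : ℝ × 𝒲 → ℝ) (hH'_meas : Measurable H')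
    (hH'_bd : ∃ M : ℝ, ∀ ω, |H' (A ω, W ω)| ≤ M)
    (G : ℝ × 𝒲 → ℝ)
    (hG_condexp :
      P[fun ω => H' (A ω, W ω) * (Y ω - Qbar₀ (A ω, W ω))
          + Qbar₀ (A ω + δ (W ω), W ω) - ψ₀
        | MeasurableSpace.comap (fun ω => (Y ω, W ω)) inferInstance]
        =ᵐ[P] fun ω => G (Y ω, W ω))
    (g : ℝ × 𝒲 → ℝ) (hg_meas : Measurable g)
    (ε' : ℝ) (hε' : 0 < ε') (hg_bd : ∀ x, ε' ≤ g x ∧ g x ≤ 1) :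
    ∫ ω, ((C ω / g (Y ω, W ω))
          * (H' (A ω, W ω) * (Y ω - Qbar₀ (A ω, W ω))
            + Qbar₀ (A ω + δ (W ω), W ω) - ψ₀)
        - (C ω / g (Y ω, W ω) - 1) * G (Y ω, W ω)) ∂P = 0 := by
  have hZ : Measurable fun ω => (Y ω, W ω) := hY.prodMk hW
  have hQ_int {X : Ω → ℝ × 𝒲} (hX : Measurable X) : Integrable (fun ω => Qbar₀ (X ω)) P :=
    (memLp_top_of_exists_abs_le (hQbar₀_meas.comp hX) (hQbar₀_bd.imp fun _ hM _ => hM _)).integrable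
      le_top
  have hQδ_int : Integrable (fun ω => Qbar₀ (A ω + δ (W ω), W ω)) P := hQ_int (by fun_prop)
  have hH_bdd : MemLp (fun ω => H' (A ω, W ω)) ∞ P :=
    memLp_top_of_exists_abs_le (hH'_meas.comp (hA.prodMk hW)) hH'_bd
  have hY_int : Integrable Y P := (memLp_top_of_exists_abs_le hY hY_bd).integrable le_top
  have hresid_int : Integrable (fun ω => H' (A ω, W ω) * (Y ω - Qbar₀ (A ω, W ω))) P :=
    (hY_int.sub (hQ_int (hA.prodMk hW))).mul_of_top_right hH_bdd
  have hresid : ∫ ω, H' (A ω, W ω) * (Y ω - Qbar₀ (A ω, W ω)) ∂P = 0 := by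
    rw [← integral_mul_sub_condExp_eq_zero (hA.prodMk hW).comap_le
      (hH'_meas.comp (comap_measurable _)).stronglyMeasurable hH_bdd hY_int]
    refine integral_congr_ae ?_
    filter_upwards [hQbar₀_condexp] with ω hω
    rw [hω]
    rfl
  calc _ = ∫ ω, H' (A ω, W ω) * (Y ω - Qbar₀ (A ω, W ω)) + Qbar₀ (A ω + δ (W ω), W ω) - ψ₀ ∂P :=
        integral_aipw_eq_integral_of_condIndepFun hA hZ hC hC01 hCAR hg_meas
          (memLp_top_inv_of_le (hg_meas.comp hZ) hε' fun _ => (hg_bd _).1)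
          (φ := fun x => H' (x.1, x.2.2) * (x.2.1 - Qbar₀ (x.1, x.2.2))
            + Qbar₀ (x.1 + δ x.2.2, x.2.2) - ψ₀)
          (by fun_prop) ((hresid_int.fun_add hQδ_int).sub (integrable_const ψ₀)) hG_condexp
    _ = 0 := by
        rw [integral_sub (hresid_int.fun_add hQδ_int) (integrable_const ψ₀),
          integral_add hresid_int hQδ_int, hresid, ← hψ₀]
        simp

/-- Multiple robustness, case (i) with correct outcome regression: if the
conditional influence-function regression `G` is correctly specified, the
observed-data EIF has mean zero for an arbitrary sampling mechanism `g` and an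
arbitrary density-ratio weight `H'` (with correct outcome regression `Q̄₀`). -/
theorem multiple_robustness_case_i_outcome
    {Ω 𝒲 : Type*} [MeasurableSpace Ω] [StandardBorelSpace Ω] [Nonempty Ω]
    [MeasurableSpace 𝒲]
    (P : Measure Ω) [IsProbabilityMeasure P]
    (W : Ω → 𝒲) (hW : Measurable W)
    (A : Ω → ℝ) (hA : Measurable A)
    (Y : Ω → ℝ) (hY : Measurable Y) (hY_bd : ∃ M : ℝ, ∀ ω, |Y ω| ≤ M)
    (Qbar₀ : ℝ × 𝒲 → ℝ) (hQbar₀_meas : Measurable Qbar₀)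
    (hQbar₀_bd : ∃ M : ℝ, ∀ x, |Qbar₀ x| ≤ M)
    (hQbar₀_condexp :
      P[Y | MeasurableSpace.comap (fun ω => (A ω, W ω)) inferInstance]
        =ᵐ[P] fun ω => Qbar₀ (A ω, W ω))
    (δ : 𝒲 → ℝ) (hδ : Measurable δ)
    (ψ₀ : ℝ) (hψ₀ : ψ₀ = ∫ ω, Qbar₀ (A ω + δ (W ω), W ω) ∂P)
    (C : Ω → ℝ) (hC : Measurable C) (hC01 : ∀ ω, C ω = 0 ∨ C ω = 1)
    (g₀ : ℝ × 𝒲 → ℝ) (hg₀_meas : Measurable g₀)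
    (ε : ℝ) (hε : 0 < ε) (hg₀_bd : ∀ x, ε ≤ g₀ x ∧ g₀ x ≤ 1)
    (hg₀_condexp :
      P[C | MeasurableSpace.comap (fun ω => (Y ω, W ω)) inferInstance]
        =ᵐ[P] fun ω => g₀ (Y ω, W ω))
    (hCAR : CondIndepFun
      (MeasurableSpace.comap (fun ω => (Y ω, W ω)) inferInstance)
      ((hY.prodMk hW).comap_le) C A P)
    (H' : ℝ × 𝒲 → ℝ) (hH'_meas : Measurable H')
    (hH'_bd : ∃ M : ℝ, ∀ ω, |H' (A ω, W ω)| ≤ M)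
    (G : ℝ × 𝒲 → ℝ) (hG_meas : Measurable G) (hG_bd : ∃ M : ℝ, ∀ x, |G x| ≤ M)
    (hG_condexp :
      P[fun ω => H' (A ω, W ω) * (Y ω - Qbar₀ (A ω, W ω))
          + Qbar₀ (A ω + δ (W ω), W ω) - ψ₀
        | MeasurableSpace.comap (fun ω => (Y ω, W ω)) inferInstance]
        =ᵐ[P] fun ω => G (Y ω, W ω))
    (g : ℝ × 𝒲 → ℝ) (hg_meas : Measurable g)
    (ε' : ℝ) (hε' : 0 < ε') (hg_bd : ∀ x, ε' ≤ g x ∧ g x ≤ 1) :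
    ∫ ω, ((C ω / g (Y ω, W ω))
          * (H' (A ω, W ω) * (Y ω - Qbar₀ (A ω, W ω))
            + Qbar₀ (A ω + δ (W ω), W ω) - ψ₀)
        - (C ω / g (Y ω, W ω) - 1) * G (Y ω, W ω)) ∂P = 0 :=
  multiple_robustness_case_i_outcome_general P W hW A hA Y hY hY_bd Qbar₀ hQbar₀_meas hQbar₀_bd
    hQbar₀_condexp δ hδ ψ₀ hψ₀ C hC hC01 hCAR H' hH'_meas hH'_bd G hG_condexp g hg_meas ε' hε' hg_bd
end
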